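/- arXiv:math/0502221 — 6 statements merged into one kernel-verified Lean document; each statement's English description precedes it below -/
import Mathlib

section
/- Let n ≥ 3 and let M ∈ SL_n(ℤ) be a bit-row matrix. Then M can be written as a product of at most 49n elements of {A_n, A_n⁻¹, B_n, B_n⁻¹}; moreover, if the row of M that differs from the identity is the first row, then M can be written as a product of at most 48n such elements. -/
/-- The matrix `A_n`: 1's on the diagonal, an additional 1 in the (1,2) entry
(zero-indexed: (0,1)), and 0's elsewhere. -/
def Amat (n : ℕ) : Matrix (Fin n) (Fin n) ℤ :=
  Matrix.of fun i j => if i = j then 1 else if (i : ℕ) = 0 ∧ (j : ℕ) = 1 then 1 else 0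

/-- The matrix `B_n`: 1 in each entry (i, i+1), (−1)^(n−1) in the (n,1) entry
(zero-indexed: (n-1,0)), and 0's elsewhere. -/
def Bmat (n : ℕ) : Matrix (Fin n) (Fin n) ℤ :=
  Matrix.of fun i j => if (j : ℕ) = (i : ℕ) + 1 then 1
    else if (i : ℕ) = n - 1 ∧ (j : ℕ) = 0 then (-1 : ℤ) ^ (n - 1) else 0

/-- A row matrix: all diagonal entries are 1 and it differs from the identity only in
one row. -/
def IsRowMatrix {n : ℕ} (M : Matrix (Fin n) (Fin n) ℤ) : Prop :=
  (∀ i, M i i = 1) ∧ ∃ r : Fin n, ∀ i j, i ≠ r → i ≠ j → M i j = 0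

/-- A bit-row matrix: a row matrix all of whose entries lie in {0, 1, −1}. -/
def IsBitRowMatrix {n : ℕ} (M : Matrix (Fin n) (Fin n) ℤ) : Prop :=
  IsRowMatrix M ∧ ∀ i j, M i j = 0 ∨ M i j = 1 ∨ M i j = -1

namespace BitRowAux

open Matrix

/-- The transpose of `Bmat`, which is its inverse. -/
def Btm (n : ℕ) : Matrix (Fin n) (Fin n) ℤ := (Bmat n)ᵀ

/-- Elementary matrix with `a` at position `(j, j+1)`. -/
def Emat (n j : ℕ) (a : ℤ) : Matrix (Fin n) (Fin n) ℤ :=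
  if h : j + 1 < n then
    1 + Matrix.single (⟨j, Nat.lt_of_succ_lt h⟩ : Fin n) (⟨j + 1, h⟩ : Fin n) a
  else 1

/-- Row-0 matrix with row vector `w`. -/
def Rv (n : ℕ) (w : ℕ → ℤ) : Matrix (Fin n) (Fin n) ℤ :=
  if h : 0 < n then
    1 + ∑ m : Fin n, Matrix.single (⟨0, h⟩ : Fin n) m (w (m : ℕ))
  else 1

variable {n : ℕ}

lemma fv (a : ℕ) (h : a < n) : (((⟨a, h⟩ : Fin n)) : ℕ) = a := rfl

lemma fne {a : ℕ} {h : a < n} {k : Fin n} (hk : k ≠ ⟨a, h⟩) : (k : ℕ) ≠ a :=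
  fun hc => hk (Fin.ext (by simpa [fv] using hc))

lemma Bmat_apply (i j : Fin n) :
    Bmat n i j = if (j : ℕ) = (i : ℕ) + 1 then 1
      else if (i : ℕ) = n - 1 ∧ (j : ℕ) = 0 then (-1 : ℤ) ^ (n - 1) else 0 := rfl

lemma sign_sq : ((-1 : ℤ) ^ (n - 1)) * ((-1 : ℤ) ^ (n - 1)) = 1 := by
  rw [← pow_add, ← two_mul, pow_mul]
  norm_num

lemma sign_cases : ((-1 : ℤ) ^ (n - 1)) = 1 ∨ ((-1 : ℤ) ^ (n - 1)) = -1 := by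
  rcases Nat.even_or_odd (n - 1) with h | h
  · exact Or.inl (Even.neg_one_pow h)
  · exact Or.inr (Odd.neg_one_pow h)

lemma mul_Bmat_apply (Y : Matrix (Fin n) (Fin n) ℤ) (i j : Fin n) :
    (Y * Bmat n) i j =
      if h : 1 ≤ (j : ℕ) then Y i ⟨(j : ℕ) - 1, by have := j.isLt; omega⟩
      else ((-1 : ℤ) ^ (n - 1)) * Y i ⟨n - 1, by have := j.isLt; omega⟩ := by
  have hn : 0 < n := j.pos
  rw [Matrix.mul_apply]
  by_cases h : 1 ≤ (j : ℕ)
  · rw [dif_pos h]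
    rw [Finset.sum_eq_single (⟨(j : ℕ) - 1, by have := j.isLt; omega⟩ : Fin n)]
    · rw [Bmat_apply]
      have h1 : (j : ℕ) = (((⟨(j : ℕ) - 1, by have := j.isLt; omega⟩ : Fin n)) : ℕ) + 1 := by
        show (j : ℕ) = ((j : ℕ) - 1) + 1
        omega
      rw [if_pos h1, mul_one]
    · intro k _ hk
      have hk' : (k : ℕ) ≠ (j : ℕ) - 1 := fne hk
      rw [Bmat_apply]
      have h1 : ¬ ((j : ℕ) = (k : ℕ) + 1) := by omega
      have h2 : ¬ ((k : ℕ) = n - 1 ∧ (j : ℕ) = 0) := by rintro ⟨_, hc⟩; omega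
      rw [if_neg h1, if_neg h2, mul_zero]
    · intro hc; exact absurd (Finset.mem_univ _) hc
  · rw [dif_neg h]
    have hj0 : (j : ℕ) = 0 := by omega
    rw [Finset.sum_eq_single (⟨n - 1, by omega⟩ : Fin n)]
    · rw [Bmat_apply]
      have h1 : ¬ ((j : ℕ) = (((⟨n - 1, by omega⟩ : Fin n)) : ℕ) + 1) := by
        show ¬ ((j : ℕ) = (n - 1) + 1)
        have := j.isLt; omega
      have h2 : ((((⟨n - 1, by omega⟩ : Fin n)) : ℕ) = n - 1 ∧ (j : ℕ) = 0) := ⟨rfl, hj0⟩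
      rw [if_neg h1, if_pos h2, mul_comm]
    · intro k _ hk
      have hk' : (k : ℕ) ≠ n - 1 := fne hk
      rw [Bmat_apply]
      have h1 : ¬ ((j : ℕ) = (k : ℕ) + 1) := by omega
      have h2 : ¬ ((k : ℕ) = n - 1 ∧ (j : ℕ) = 0) := by rintro ⟨hc, _⟩; omega
      rw [if_neg h1, if_neg h2, mul_zero]
    · intro hc; exact absurd (Finset.mem_univ _) hc


lemma Bmat_mul_apply (Y : Matrix (Fin n) (Fin n) ℤ) (i l : Fin n) :
    (Bmat n * Y) i l =
      if h : (i : ℕ) + 1 < n then Y ⟨(i : ℕ) + 1, h⟩ l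
      else ((-1 : ℤ) ^ (n - 1)) * Y ⟨0, i.pos⟩ l := by
  rw [Matrix.mul_apply]
  by_cases h : (i : ℕ) + 1 < n
  · rw [dif_pos h]
    rw [Finset.sum_eq_single (⟨(i : ℕ) + 1, h⟩ : Fin n)]
    · rw [Bmat_apply]
      have h1 : ((((⟨(i : ℕ) + 1, h⟩ : Fin n)) : ℕ) = (i : ℕ) + 1) := rfl
      rw [if_pos h1, one_mul]
    · intro k _ hk
      have hk' : (k : ℕ) ≠ (i : ℕ) + 1 := fne hk
      rw [Bmat_apply]
      have h2 : ¬ ((i : ℕ) = n - 1 ∧ (k : ℕ) = 0) := by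
        rintro ⟨hc, _⟩; omega
      rw [if_neg hk', if_neg h2, zero_mul]
    · intro hc; exact absurd (Finset.mem_univ _) hc
  · rw [dif_neg h]
    have hi : (i : ℕ) = n - 1 := by have := i.isLt; omega
    rw [Finset.sum_eq_single (⟨0, i.pos⟩ : Fin n)]
    · rw [Bmat_apply]
      have h1 : ¬ ((((⟨0, i.pos⟩ : Fin n)) : ℕ) = (i : ℕ) + 1) := by
        show ¬ (0 = (i : ℕ) + 1); omega
      have h2 : ((i : ℕ) = n - 1 ∧ (((⟨0, i.pos⟩ : Fin n)) : ℕ) = 0) := ⟨hi, rfl⟩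
      rw [if_neg h1, if_pos h2]
    · intro k _ hk
      have hk' : (k : ℕ) ≠ 0 := fne hk
      rw [Bmat_apply]
      have h1 : ¬ ((k : ℕ) = (i : ℕ) + 1) := by omega
      have h2 : ¬ ((i : ℕ) = n - 1 ∧ (k : ℕ) = 0) := by rintro ⟨_, hc⟩; omega
      rw [if_neg h1, if_neg h2, zero_mul]
    · intro hc; exact absurd (Finset.mem_univ _) hc

lemma Btm_apply (i j : Fin n) : Btm n i j = Bmat n j i := rfl

lemma mul_Btm_apply (Y : Matrix (Fin n) (Fin n) ℤ) (i j : Fin n) :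
    (Y * Btm n) i j =
      if h : (j : ℕ) + 1 < n then Y i ⟨(j : ℕ) + 1, h⟩
      else ((-1 : ℤ) ^ (n - 1)) * Y i ⟨0, j.pos⟩ := by
  rw [Matrix.mul_apply]
  by_cases h : (j : ℕ) + 1 < n
  · rw [dif_pos h]
    rw [Finset.sum_eq_single (⟨(j : ℕ) + 1, h⟩ : Fin n)]
    · rw [Btm_apply, Bmat_apply]
      have h1 : ((((⟨(j : ℕ) + 1, h⟩ : Fin n)) : ℕ) = (j : ℕ) + 1) := rfl
      rw [if_pos h1, mul_one]
    · intro k _ hk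
      have hk' : (k : ℕ) ≠ (j : ℕ) + 1 := fne hk
      rw [Btm_apply, Bmat_apply]
      have h2 : ¬ ((j : ℕ) = n - 1 ∧ (k : ℕ) = 0) := by
        rintro ⟨hc, _⟩; omega
      rw [if_neg hk', if_neg h2, mul_zero]
    · intro hc; exact absurd (Finset.mem_univ _) hc
  · rw [dif_neg h]
    have hj : (j : ℕ) = n - 1 := by have := j.isLt; omega
    rw [Finset.sum_eq_single (⟨0, j.pos⟩ : Fin n)]
    · rw [Btm_apply, Bmat_apply]
      have h1 : ¬ ((((⟨0, j.pos⟩ : Fin n)) : ℕ) = (j : ℕ) + 1) := by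
        show ¬ (0 = (j : ℕ) + 1); omega
      have h2 : ((j : ℕ) = n - 1 ∧ (((⟨0, j.pos⟩ : Fin n)) : ℕ) = 0) := ⟨hj, rfl⟩
      rw [if_neg h1, if_pos h2, mul_comm]
    · intro k _ hk
      have hk' : (k : ℕ) ≠ 0 := fne hk
      rw [Btm_apply, Bmat_apply]
      have h1 : ¬ ((k : ℕ) = (j : ℕ) + 1) := by omega
      have h2 : ¬ ((j : ℕ) = n - 1 ∧ (k : ℕ) = 0) := by rintro ⟨_, hc⟩; omega
      rw [if_neg h1, if_neg h2, mul_zero]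
    · intro hc; exact absurd (Finset.mem_univ _) hc

lemma Bmat_mul_Btm : Bmat n * Btm n = 1 := by
  ext i j
  rw [mul_Btm_apply]
  by_cases h : (j : ℕ) + 1 < n
  · rw [dif_pos h, Bmat_apply]
    by_cases hij : i = j
    · have h1 : ((((⟨(j : ℕ) + 1, h⟩ : Fin n)) : ℕ) = (i : ℕ) + 1) := by
        show (j : ℕ) + 1 = (i : ℕ) + 1; rw [hij]
      rw [if_pos h1]
      simp [hij, Matrix.one_apply]
    · have h1 : ¬ ((((⟨(j : ℕ) + 1, h⟩ : Fin n)) : ℕ) = (i : ℕ) + 1) := by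
        show ¬ ((j : ℕ) + 1 = (i : ℕ) + 1)
        intro hc; exact hij (Fin.ext (by omega)).symm
      have h2 : ¬ ((i : ℕ) = n - 1 ∧ (((⟨(j : ℕ) + 1, h⟩ : Fin n)) : ℕ) = 0) := by
        rintro ⟨_, hc⟩
        exact absurd hc (by show ¬ ((j : ℕ) + 1 = 0); omega)
      rw [if_neg h1, if_neg h2, Matrix.one_apply_ne hij]
  · rw [dif_neg h, Bmat_apply]
    have hj : (j : ℕ) = n - 1 := by have := j.isLt; omega
    have h1 : ¬ ((((⟨0, j.pos⟩ : Fin n)) : ℕ) = (i : ℕ) + 1) := by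
      show ¬ (0 = (i : ℕ) + 1); omega
    by_cases hij : i = j
    · have h2 : ((i : ℕ) = n - 1 ∧ (((⟨0, j.pos⟩ : Fin n)) : ℕ) = 0) := ⟨hij ▸ hj, rfl⟩
      rw [if_neg h1, if_pos h2, sign_sq]
      simp [hij, Matrix.one_apply]
    · have h2 : ¬ ((i : ℕ) = n - 1 ∧ (((⟨0, j.pos⟩ : Fin n)) : ℕ) = 0) := by
        rintro ⟨hc, _⟩
        exact hij (Fin.ext (show (i : ℕ) = (j : ℕ) by omega))
      rw [if_neg h1, if_neg h2, mul_zero, Matrix.one_apply_ne hij]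

lemma Btm_mul_Bmat : Btm n * Bmat n = 1 := by
  ext i j
  rw [mul_Bmat_apply]
  by_cases h : 1 ≤ (j : ℕ)
  · rw [dif_pos h, Btm_apply, Bmat_apply]
    by_cases hij : i = j
    · have h1 : ((i : ℕ) = (((⟨(j : ℕ) - 1, by have := j.isLt; omega⟩ : Fin n)) : ℕ) + 1) := by
        show (i : ℕ) = ((j : ℕ) - 1) + 1
        rw [hij]; omega
      rw [if_pos h1]
      simp [hij, Matrix.one_apply]
    · have h1 : ¬ ((i : ℕ) = (((⟨(j : ℕ) - 1, by have := j.isLt; omega⟩ : Fin n)) : ℕ) + 1) := by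
        show ¬ ((i : ℕ) = ((j : ℕ) - 1) + 1)
        intro hc; exact hij (Fin.ext (by omega))
      have h2 : ¬ ((((⟨(j : ℕ) - 1, by have := j.isLt; omega⟩ : Fin n)) : ℕ) = n - 1 ∧ (i : ℕ) = 0) := by
        rintro ⟨hc, _⟩
        have : (j : ℕ) - 1 = n - 1 := hc
        have := j.isLt; omega
      rw [if_neg h1, if_neg h2, Matrix.one_apply_ne hij]
  · rw [dif_neg h, Btm_apply, Bmat_apply]
    have hj : (j : ℕ) = 0 := by omega
    by_cases hij : i = j
    · have hi0 : (i : ℕ) = 0 := by rw [hij]; exact hj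
      have h1 : ¬ ((i : ℕ) = (((⟨n - 1, by have := j.pos; omega⟩ : Fin n)) : ℕ) + 1) := by
        show ¬ ((i : ℕ) = (n - 1) + 1)
        have := i.isLt; omega
      have h2 : ((((⟨n - 1, by have := j.pos; omega⟩ : Fin n)) : ℕ) = n - 1 ∧ (i : ℕ) = 0) :=
        ⟨rfl, hi0⟩
      rw [if_neg h1, if_pos h2, sign_sq]
      simp [hij, Matrix.one_apply]
    · have h1 : ¬ ((i : ℕ) = (((⟨n - 1, by have := j.pos; omega⟩ : Fin n)) : ℕ) + 1) := by
        show ¬ ((i : ℕ) = (n - 1) + 1)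
        have := i.isLt; omega
      have h2 : ¬ ((((⟨n - 1, by have := j.pos; omega⟩ : Fin n)) : ℕ) = n - 1 ∧ (i : ℕ) = 0) := by
        rintro ⟨_, hc⟩
        exact hij (Fin.ext (show (i : ℕ) = (j : ℕ) by omega))
      rw [if_neg h1, if_neg h2, mul_zero, Matrix.one_apply_ne hij]


lemma std_apply (p q i j : Fin n) (a : ℤ) :
    Matrix.single p q a i j = if p = i ∧ q = j then a else 0 := rfl

lemma std_mul_Bmat {p q : Fin n} (hq : (q : ℕ) + 1 < n) (a : ℤ) :
    Matrix.single p q a * Bmat n = Matrix.single p (⟨(q : ℕ) + 1, hq⟩ : Fin n) a := by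
  ext i j
  rw [mul_Bmat_apply]
  by_cases h : 1 ≤ (j : ℕ)
  · rw [dif_pos h]
    simp only [std_apply]
    refine if_congr (and_congr_right fun _ => ?_) rfl rfl
    rw [Fin.ext_iff, Fin.ext_iff]
    show (q : ℕ) = (j : ℕ) - 1 ↔ (q : ℕ) + 1 = (j : ℕ)
    omega
  · rw [dif_neg h]
    simp only [std_apply]
    have h1 : ¬ (p = i ∧ q = (⟨n - 1, by have := j.isLt; omega⟩ : Fin n)) := by
      rintro ⟨_, hc⟩
      rw [Fin.ext_iff] at hc
      have : (q : ℕ) = n - 1 := hc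
      omega
    have h2 : ¬ (p = i ∧ (⟨(q : ℕ) + 1, hq⟩ : Fin n) = j) := by
      rintro ⟨_, hc⟩
      rw [Fin.ext_iff] at hc
      have : (q : ℕ) + 1 = (j : ℕ) := hc
      omega
    rw [if_neg h1, if_neg h2, mul_zero]

lemma Bmat_mul_std {p q : Fin n} (hp : 1 ≤ (p : ℕ)) (a : ℤ) :
    Bmat n * Matrix.single p q a =
      Matrix.single (⟨(p : ℕ) - 1, by have := p.isLt; omega⟩ : Fin n) q a := by
  ext i l
  rw [Bmat_mul_apply]
  by_cases h : (i : ℕ) + 1 < n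
  · rw [dif_pos h]
    simp only [std_apply]
    refine if_congr (and_congr_left fun _ => ?_) rfl rfl
    rw [Fin.ext_iff, Fin.ext_iff]
    show (p : ℕ) = (i : ℕ) + 1 ↔ (p : ℕ) - 1 = (i : ℕ)
    omega
  · rw [dif_neg h]
    simp only [std_apply]
    have h1 : ¬ (p = (⟨0, i.pos⟩ : Fin n) ∧ q = l) := by
      rintro ⟨hc, _⟩
      rw [Fin.ext_iff] at hc
      have : (p : ℕ) = 0 := hc
      omega
    have h2 : ¬ ((⟨(p : ℕ) - 1, by have := p.isLt; omega⟩ : Fin n) = i ∧ q = l) := by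
      rintro ⟨hc, _⟩
      rw [Fin.ext_iff] at hc
      have hc' : (p : ℕ) - 1 = (i : ℕ) := hc
      have := p.isLt
      omega
    rw [if_neg h1, if_neg h2, mul_zero]

lemma Emat_of_lt {j : ℕ} (h : j + 1 < n) (a : ℤ) :
    Emat n j a =
      1 + Matrix.single (⟨j, Nat.lt_of_succ_lt h⟩ : Fin n) (⟨j + 1, h⟩ : Fin n) a := by
  rw [Emat, dif_pos h]

lemma Emat_zero (j : ℕ) : Emat n j 0 = 1 := by
  rw [Emat]
  split_ifs with h
  · rw [Matrix.single_zero, add_zero]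
  · rfl

lemma Emat_mul_Emat (j : ℕ) (a b : ℤ) : Emat n j a * Emat n j b = Emat n j (a + b) := by
  rw [Emat]
  split_ifs with h
  · rw [Emat_of_lt h, Emat_of_lt h]
    have hne : (⟨j + 1, h⟩ : Fin n) ≠ (⟨j, Nat.lt_of_succ_lt h⟩ : Fin n) := by
      rw [Ne, Fin.ext_iff]
      show ¬ (j + 1 = j)
      omega
    rw [add_mul, one_mul, mul_add, mul_one, Matrix.single_mul_single_of_ne _ _ _ _ hne,
      add_zero, Matrix.single_add, add_assoc, add_comm (Matrix.single _ _ b)]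
  · rw [Emat, dif_neg h, Emat, dif_neg h, one_mul]

lemma Emat_mul_Bmat {j : ℕ} (h : j + 2 < n) (a : ℤ) :
    Emat n j a * Bmat n = Bmat n * Emat n (j + 1) a := by
  have h1 : j + 1 < n := by omega
  rw [Emat_of_lt h1, Emat_of_lt (show (j + 1) + 1 < n from h)]
  rw [add_mul, one_mul, mul_add, mul_one]
  congr 1
  rw [std_mul_Bmat (show ((⟨j + 1, h1⟩ : Fin n) : ℕ) + 1 < n from h),
    Bmat_mul_std (show 1 ≤ ((⟨j + 1, by omega⟩ : Fin n) : ℕ) from by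
      show 1 ≤ j + 1; omega)]
  congr 1 <;> apply Fin.ext <;> show _ = _ <;> omega

lemma Btm_pow_mul_Emat {j : ℕ} (hn2 : 2 ≤ n) (hj : j ≤ n - 2) (a : ℤ) :
    Btm n ^ j * Emat n 0 a = Emat n j a * Btm n ^ j := by
  induction j with
  | zero => rw [pow_zero, one_mul, mul_one]
  | succ j ih =>
    have hj' : j ≤ n - 2 := by omega
    have hcomm : Btm n * Emat n j a = Emat n (j + 1) a * Btm n := by
      have h2 : j + 2 < n := by omega
      calc Btm n * Emat n j a
          = Btm n * Emat n j a * (Bmat n * Btm n) := by rw [Bmat_mul_Btm, mul_one]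
        _ = Btm n * (Emat n j a * Bmat n) * Btm n := by rw [mul_assoc, mul_assoc, mul_assoc]
        _ = Btm n * (Bmat n * Emat n (j + 1) a) * Btm n := by rw [Emat_mul_Bmat h2]
        _ = (Btm n * Bmat n) * (Emat n (j + 1) a * Btm n) := by
            rw [mul_assoc, mul_assoc, mul_assoc]
        _ = Emat n (j + 1) a * Btm n := by rw [Btm_mul_Bmat, one_mul]
    calc Btm n ^ (j + 1) * Emat n 0 a = Btm n * (Btm n ^ j * Emat n 0 a) := by
          rw [pow_succ']; rw [mul_assoc]
      _ = Btm n * (Emat n j a * Btm n ^ j) := by rw [ih hj']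
      _ = (Btm n * Emat n j a) * Btm n ^ j := by rw [mul_assoc]
      _ = (Emat n (j + 1) a * Btm n) * Btm n ^ j := by rw [hcomm]
      _ = Emat n (j + 1) a * Btm n ^ (j + 1) := by rw [mul_assoc, ← pow_succ']

lemma Btm_pow_mul_Bmat {k : ℕ} (hk : 1 ≤ k) : Btm n ^ k * Bmat n = Btm n ^ (k - 1) := by
  obtain ⟨m, rfl⟩ : ∃ m, k = m + 1 := ⟨k - 1, by omega⟩
  rw [pow_succ, mul_assoc, Btm_mul_Bmat, mul_one]
  simp


/-- The elementary "move" on row vectors: add `a * w j` at position `j+1`. -/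
def movev (j : ℕ) (a : ℤ) (w : ℕ → ℤ) : ℕ → ℤ :=
  fun m => if m = j + 1 then w m + a * w j else w m

/-- Initial row vector: `a` at position 1. -/
def w0v (a : ℤ) : ℕ → ℤ := fun m => if m = 1 then a else 0

lemma Rv_eq (h : 0 < n) (w : ℕ → ℤ) :
    Rv n w = 1 + ∑ m : Fin n, Matrix.single (⟨0, h⟩ : Fin n) m (w (m : ℕ)) := by
  rw [Rv, dif_pos h]

lemma Rv_congr {w w' : ℕ → ℤ} (h : ∀ m : Fin n, w (m : ℕ) = w' (m : ℕ)) :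
    Rv n w = Rv n w' := by
  rw [Rv, Rv]
  split_ifs with h0
  · congr 1
    exact Finset.sum_congr rfl fun m _ => by rw [h m]
  · rfl

lemma Rv_mul_Emat {j : ℕ} (hj : j + 1 < n) (a : ℤ) (w : ℕ → ℤ) :
    Rv n w * Emat n j a = Emat n j a * Rv n (movev j a w) := by
  have h0 : 0 < n := by omega
  have hjn : j < n := by omega
  rw [Rv_eq h0, Rv_eq h0, Emat_of_lt hj]
  have hST : (∑ m : Fin n, Matrix.single (⟨0, h0⟩ : Fin n) m (w (m : ℕ))) *
      Matrix.single (⟨j, Nat.lt_of_succ_lt hj⟩ : Fin n) (⟨j + 1, hj⟩ : Fin n) a =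
      Matrix.single (⟨0, h0⟩ : Fin n) (⟨j + 1, hj⟩ : Fin n) (a * w j) := by
    rw [Finset.sum_mul, Finset.sum_eq_single (⟨j, hjn⟩ : Fin n)]
    · rw [Matrix.single_mul_single_same, mul_comm]
    · intro m _ hm
      exact Matrix.single_mul_single_of_ne _ _ _ _ hm _
    · intro hc; exact absurd (Finset.mem_univ _) hc
  have hTS : Matrix.single (⟨j, Nat.lt_of_succ_lt hj⟩ : Fin n) (⟨j + 1, hj⟩ : Fin n) a *
      (∑ m : Fin n, Matrix.single (⟨0, h0⟩ : Fin n) m (movev j a w (m : ℕ))) = 0 := by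
    rw [Finset.mul_sum]
    apply Finset.sum_eq_zero
    intro m _
    apply Matrix.single_mul_single_of_ne
    rw [Ne, Fin.ext_iff]
    show ¬ (j + 1 = 0)
    omega
  have hS' : (∑ m : Fin n, Matrix.single (⟨0, h0⟩ : Fin n) m (movev j a w (m : ℕ))) =
      (∑ m : Fin n, Matrix.single (⟨0, h0⟩ : Fin n) m (w (m : ℕ))) +
      Matrix.single (⟨0, h0⟩ : Fin n) (⟨j + 1, hj⟩ : Fin n) (a * w j) := by
    have hterm : ∀ m : Fin n, Matrix.single (⟨0, h0⟩ : Fin n) m (movev j a w (m : ℕ)) =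
        Matrix.single (⟨0, h0⟩ : Fin n) m (w (m : ℕ)) +
        Matrix.single (⟨0, h0⟩ : Fin n) m (if (m : ℕ) = j + 1 then a * w j else 0) := by
      intro m
      rw [← Matrix.single_add]
      congr 1
      rw [movev]
      split_ifs <;> ring
    rw [Finset.sum_congr rfl fun m _ => hterm m, Finset.sum_add_distrib]
    congr 1
    rw [Finset.sum_eq_single (⟨j + 1, hj⟩ : Fin n)]
    · rw [if_pos rfl]
    · intro m _ hm
      rw [if_neg (fne hm), Matrix.single_zero]
    · intro hc; exact absurd (Finset.mem_univ _) hc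
  have expand1 : ∀ S T : Matrix (Fin n) (Fin n) ℤ, (1 + S) * (1 + T) = 1 + T + S + S * T := by
    intro S T; noncomm_ring
  have expand2 : ∀ T S' : Matrix (Fin n) (Fin n) ℤ, (1 + T) * (1 + S') = 1 + S' + T + T * S' := by
    intro T S'; noncomm_ring
  rw [expand1, expand2, hST, hTS, hS', add_zero]
  abel

lemma Rv_mul_Emat0 (h1 : 1 < n) (a : ℤ) {w : ℕ → ℤ} (hw0 : w 0 = 0) :
    Rv n w * Emat n 0 a = Rv n (fun m => w m + if m = 1 then a else 0) := by
  have h0 : 0 < n := by omega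
  rw [Rv_eq h0, Rv_eq h0, Emat_of_lt (show 0 + 1 < n from by omega)]
  have hST : (∑ m : Fin n, Matrix.single (⟨0, h0⟩ : Fin n) m (w (m : ℕ))) *
      Matrix.single (⟨0, Nat.lt_of_succ_lt (show 0 + 1 < n from by omega)⟩ : Fin n)
        (⟨0 + 1, show 0 + 1 < n from by omega⟩ : Fin n) a = 0 := by
    rw [Finset.sum_mul, Finset.sum_eq_single (⟨0, h0⟩ : Fin n)]
    · rw [Matrix.single_mul_single_same]
      have : w ((⟨0, h0⟩ : Fin n) : ℕ) = 0 := hw0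
      rw [this, zero_mul, Matrix.single_zero]
    · intro m _ hm
      exact Matrix.single_mul_single_of_ne _ _ _ _ hm _
    · intro hc; exact absurd (Finset.mem_univ _) hc
  have hS' : (∑ m : Fin n, Matrix.single (⟨0, h0⟩ : Fin n) m
        (w (m : ℕ) + if (m : ℕ) = 1 then a else 0)) =
      (∑ m : Fin n, Matrix.single (⟨0, h0⟩ : Fin n) m (w (m : ℕ))) +
      Matrix.single (⟨0, h0⟩ : Fin n) (⟨0 + 1, show 0 + 1 < n from by omega⟩ : Fin n) a := by
    have hterm : ∀ m : Fin n, Matrix.single (⟨0, h0⟩ : Fin n) m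
        (w (m : ℕ) + if (m : ℕ) = 1 then a else 0) =
        Matrix.single (⟨0, h0⟩ : Fin n) m (w (m : ℕ)) +
        Matrix.single (⟨0, h0⟩ : Fin n) m (if (m : ℕ) = 1 then a else 0) := by
      intro m
      rw [← Matrix.single_add]
    rw [Finset.sum_congr rfl fun m _ => hterm m, Finset.sum_add_distrib]
    congr 1
    rw [Finset.sum_eq_single (⟨0 + 1, show 0 + 1 < n from by omega⟩ : Fin n)]
    · rw [if_pos rfl]
    · intro m _ hm
      rw [if_neg (fne hm), Matrix.single_zero]
    · intro hc; exact absurd (Finset.mem_univ _) hc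
  have expand1 : ∀ S T : Matrix (Fin n) (Fin n) ℤ, (1 + S) * (1 + T) = 1 + S + T + S * T := by
    intro S T; noncomm_ring
  rw [expand1, hST, hS', add_zero]
  abel

lemma Rv_w0v (h1 : 1 < n) (a : ℤ) : Rv n (w0v a) = Emat n 0 a := by
  have h0 : 0 < n := by omega
  rw [Rv_eq h0, Emat_of_lt (show 0 + 1 < n from by omega)]
  congr 1
  rw [Finset.sum_eq_single (⟨0 + 1, show 0 + 1 < n from by omega⟩ : Fin n)]
  · rw [w0v]
    norm_num
  · intro m _ hm
    rw [w0v]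
    rw [show (if (m : ℕ) = 1 then a else 0) = 0 from by rw [if_neg (fne hm)], Matrix.single_zero]
  · intro hc; exact absurd (Finset.mem_univ _) hc


/-- The solid sign pattern derived from `u`. -/
def epsv (u : ℕ → ℤ) : ℕ → ℤ
  | 0 => 1
  | (m + 1) => if m = 0 then u 1 else (if u (m + 1) = 0 then epsv u m else u (m + 1))

lemma epsv_succ (u : ℕ → ℤ) (m : ℕ) :
    epsv u (m + 1) = if m = 0 then u 1 else (if u (m + 1) = 0 then epsv u m else u (m + 1)) :=
  rfl

def cv (u : ℕ → ℤ) (j : ℕ) : ℤ := epsv u (j + 1) * epsv u j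

def tv (u : ℕ → ℤ) (j : ℕ) : ℤ := epsv u j * (u (j + 1) - epsv u (j + 1))

def wP1 (u : ℕ → ℤ) : ℕ → (ℕ → ℤ)
  | 0 => w0v (u 1)
  | (j + 1) => movev (j + 1) (cv u (j + 1)) (wP1 u j)

def wP2 (n : ℕ) (u : ℕ → ℤ) : ℕ → (ℕ → ℤ)
  | 0 => wP1 u (n - 2)
  | (m + 1) => movev (n - 2 - m) (tv u (n - 2 - m)) (wP2 n u m)

section Bits

variable {u : ℕ → ℤ} (hu1 : u 1 = 1 ∨ u 1 = -1)
variable (hub : ∀ m, 2 ≤ m → u m = 0 ∨ u m = 1 ∨ u m = -1)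

include hu1 hub

lemma epsv_bit : ∀ m, 1 ≤ m → epsv u m = 1 ∨ epsv u m = -1 := by
  intro m hm
  obtain ⟨k, rfl⟩ : ∃ k, m = k + 1 := ⟨m - 1, by omega⟩
  clear hm
  induction k with
  | zero => rw [epsv_succ, if_pos rfl]; exact hu1
  | succ j ih =>
    rw [epsv_succ, if_neg (by omega : ¬ (j + 1 = 0))]
    by_cases h : u (j + 2) = 0
    · rw [if_pos h]; exact ih
    · rw [if_neg h]
      rcases hub (j + 2) (by omega) with h0 | h1 | h2
      · exact absurd h0 h
      · exact Or.inl h1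
      · exact Or.inr h2

lemma epsv_sq : ∀ m, 1 ≤ m → epsv u m * epsv u m = 1 := by
  intro m hm
  rcases epsv_bit hu1 hub m hm with h | h <;> rw [h] <;> norm_num

lemma cv_bit (j : ℕ) (hj : 1 ≤ j) : cv u j = 1 ∨ cv u j = -1 := by
  rw [cv]
  rcases epsv_bit hu1 hub j hj with h | h <;>
    rcases epsv_bit hu1 hub (j + 1) (by omega) with h' | h' <;>
      rw [h, h'] <;> norm_num

lemma tv_bit (j : ℕ) (hj : 1 ≤ j) : tv u j = 0 ∨ tv u j = 1 ∨ tv u j = -1 := by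
  rw [tv]
  by_cases h : u (j + 1) = 0
  · have he : epsv u (j + 1) = if u (j + 1) = 0 then epsv u j else u (j + 1) := by
      rw [epsv_succ, if_neg (by omega : ¬ (j = 0))]
    rw [he, if_pos h, h]
    have hsq := epsv_sq hu1 hub j hj
    right; right
    linear_combination -hsq
  · have he : epsv u (j + 1) = u (j + 1) := by
      rw [epsv_succ, if_neg (by omega : ¬ (j = 0)), if_neg h]
    rw [he]
    left; ring

lemma wP1_closed : ∀ j m, wP1 u j m = if 1 ≤ m ∧ m ≤ j + 1 then epsv u m else 0 := by
  intro j
  induction j with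
  | zero =>
    intro m
    by_cases hm : m = 1
    · subst hm
      show (if 1 = 1 then u 1 else 0) = _
      rw [if_pos rfl, if_pos (by omega : 1 ≤ 1 ∧ 1 ≤ 0 + 1)]
      rw [epsv_succ, if_pos rfl]
    · show (if m = 1 then u 1 else 0) = _
      rw [if_neg hm, if_neg (by omega : ¬ (1 ≤ m ∧ m ≤ 0 + 1))]
  | succ j ih =>
    intro m
    show (if m = (j + 1) + 1 then wP1 u j m + cv u (j + 1) * wP1 u j (j + 1) else wP1 u j m) = _
    by_cases hm : m = j + 2
    · rw [if_pos hm, ih m, ih (j + 1)]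
      rw [if_neg (by omega : ¬ (1 ≤ m ∧ m ≤ j + 1)),
        if_pos (by omega : 1 ≤ j + 1 ∧ j + 1 ≤ j + 1),
        if_pos (by omega : 1 ≤ m ∧ m ≤ j + 1 + 1)]
      subst hm
      rw [cv]
      have hsq := epsv_sq hu1 hub (j + 1) (by omega)
      linear_combination epsv u (j + 2) * hsq
    · rw [if_neg hm, ih m]
      by_cases h1 : 1 ≤ m ∧ m ≤ j + 1
      · rw [if_pos h1, if_pos (by omega : 1 ≤ m ∧ m ≤ j + 1 + 1)]
      · rw [if_neg h1, if_neg (by omega : ¬ (1 ≤ m ∧ m ≤ j + 1 + 1))]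

lemma wP2_closed (h3 : 3 ≤ n) :
    ∀ m, m ≤ n - 2 → ∀ k, wP2 n u m k =
      if n - m ≤ k ∧ k ≤ n - 1 then u k
      else if 1 ≤ k ∧ k ≤ n - 1 - m then epsv u k else 0 := by
  intro m
  induction m with
  | zero =>
    intro _ k
    show wP1 u (n - 2) k = _
    rw [wP1_closed hu1 hub]
    have he : n - 2 + 1 = n - 1 := by omega
    rw [he]
    by_cases h1 : 1 ≤ k ∧ k ≤ n - 1
    · rw [if_pos h1, if_neg (by omega : ¬ (n - 0 ≤ k ∧ k ≤ n - 1)),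
        if_pos (by omega : 1 ≤ k ∧ k ≤ n - 1 - 0)]
    · rw [if_neg h1, if_neg (by omega : ¬ (n - 0 ≤ k ∧ k ≤ n - 1)),
        if_neg (by omega : ¬ (1 ≤ k ∧ k ≤ n - 1 - 0))]
  | succ m ih =>
    intro hm k
    have hm' : m ≤ n - 2 := by omega
    have hm3 : m ≤ n - 3 := by omega
    show (if k = (n - 2 - m) + 1 then
        wP2 n u m k + tv u (n - 2 - m) * wP2 n u m (n - 2 - m) else wP2 n u m k) = _
    have hidx : (n - 2 - m) + 1 = n - 1 - m := by omega
    by_cases hk : k = (n - 2 - m) + 1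
    · rw [if_pos hk, ih hm', ih hm']
      rw [if_neg (by omega : ¬ (n - m ≤ k ∧ k ≤ n - 1)),
        if_pos (by omega : 1 ≤ k ∧ k ≤ n - 1 - m),
        if_neg (by omega : ¬ (n - m ≤ n - 2 - m ∧ n - 2 - m ≤ n - 1)),
        if_pos (by omega : 1 ≤ n - 2 - m ∧ n - 2 - m ≤ n - 1 - m),
        if_pos (by omega : n - (m + 1) ≤ k ∧ k ≤ n - 1)]
      rw [tv]
      have hk' : k = (n - 2 - m) + 1 := hk
      have hsq := epsv_sq hu1 hub (n - 2 - m) (by omega)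
      rw [hk']
      linear_combination (u (n - 2 - m + 1) - epsv u (n - 2 - m + 1)) * hsq
    · rw [if_neg hk, ih hm']
      by_cases h1 : n - m ≤ k ∧ k ≤ n - 1
      · rw [if_pos h1, if_pos (by omega : n - (m + 1) ≤ k ∧ k ≤ n - 1)]
      · rw [if_neg h1]
        by_cases h2 : 1 ≤ k ∧ k ≤ n - 1 - m
        · rw [if_pos h2, if_neg (by omega : ¬ (n - (m + 1) ≤ k ∧ k ≤ n - 1)),
            if_pos (by omega : 1 ≤ k ∧ k ≤ n - 1 - (m + 1))]
        · rw [if_neg h2, if_neg (by omega : ¬ (n - (m + 1) ≤ k ∧ k ≤ n - 1)),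
            if_neg (by omega : ¬ (1 ≤ k ∧ k ≤ n - 1 - (m + 1)))]

end Bits

/-- Partial products of the ascending conjugator. -/
def CP1 (n : ℕ) (u : ℕ → ℤ) : ℕ → Matrix (Fin n) (Fin n) ℤ
  | 0 => 1
  | (j + 1) => CP1 n u j * Emat n (j + 1) (cv u (j + 1))

/-- Partial products of the descending conjugator. -/
def Qm (n : ℕ) (u : ℕ → ℤ) : ℕ → Matrix (Fin n) (Fin n) ℤ
  | 0 => 1
  | (m + 1) => Qm n u m * Emat n (n - 2 - m) (tv u (n - 2 - m))

lemma phase1 (h3 : 3 ≤ n) (u : ℕ → ℤ) :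
    ∀ j, j ≤ n - 2 → Rv n (w0v (u 1)) * CP1 n u j = CP1 n u j * Rv n (wP1 u j) := by
  intro j
  induction j with
  | zero => intro _; show Rv n (w0v (u 1)) * 1 = 1 * Rv n (wP1 u 0)
            rw [mul_one, one_mul]; rfl
  | succ j ih =>
    intro hj
    have hj' : j ≤ n - 2 := by omega
    have hlt : (j + 1) + 1 < n := by omega
    show Rv n (w0v (u 1)) * (CP1 n u j * Emat n (j + 1) (cv u (j + 1))) = _
    rw [← mul_assoc, ih hj', mul_assoc, Rv_mul_Emat hlt, ← mul_assoc]
    rfl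

lemma phase2 (h3 : 3 ≤ n) (u : ℕ → ℤ) :
    ∀ m, m ≤ n - 2 → Rv n (wP1 u (n - 2)) * Qm n u m = Qm n u m * Rv n (wP2 n u m) := by
  intro m
  induction m with
  | zero => intro _; show Rv n (wP1 u (n - 2)) * 1 = 1 * Rv n (wP2 n u 0)
            rw [mul_one, one_mul]; rfl
  | succ m ih =>
    intro hm
    have hm' : m ≤ n - 2 := by omega
    have hlt : (n - 2 - m) + 1 < n := by omega
    show Rv n (wP1 u (n - 2)) * (Qm n u m * Emat n (n - 2 - m) (tv u (n - 2 - m))) = _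
    rw [← mul_assoc, ih hm', mul_assoc, Rv_mul_Emat hlt, ← mul_assoc]
    rfl


abbrev SL (n : ℕ) := Matrix.SpecialLinearGroup (Fin n) ℤ

lemma Amat_eq (h1 : 1 < n) : Amat n = Emat n 0 1 := by
  ext i j
  rw [Emat_of_lt (show 0 + 1 < n from by omega), Matrix.add_apply, std_apply]
  simp only [Amat, Matrix.of_apply]
  by_cases hij : i = j
  · subst hij
    rw [if_pos rfl, Matrix.one_apply_eq, if_neg (by
      rintro ⟨ha, hb⟩
      rw [Fin.ext_iff] at ha hb
      have ha' : (0 : ℕ) = (i : ℕ) := ha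
      have hb' : (0 + 1 : ℕ) = (i : ℕ) := hb
      omega), add_zero]
  · rw [if_neg hij, Matrix.one_apply_ne hij, zero_add]
    by_cases hc : (i : ℕ) = 0 ∧ (j : ℕ) = 1
    · rw [if_pos hc, if_pos ⟨Fin.ext (show (0 : ℕ) = (i : ℕ) from hc.1.symm),
        Fin.ext (show (0 + 1 : ℕ) = (j : ℕ) from by have := hc.2; omega)⟩]
    · rw [if_neg hc, if_neg (by
        rintro ⟨ha, hb⟩
        rw [Fin.ext_iff] at ha hb
        have ha' : (0 : ℕ) = (i : ℕ) := ha
        have hb' : (0 + 1 : ℕ) = (j : ℕ) := hb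
        exact hc ⟨ha'.symm, by omega⟩)]

section Words

variable {A B : SL n}

lemma coe_Ainv (h1 : 1 < n) (hA : (A : Matrix (Fin n) (Fin n) ℤ) = Amat n) :
    ((A⁻¹ : SL n) : Matrix (Fin n) (Fin n) ℤ) = Emat n 0 (-1) := by
  have hAA : (A : Matrix (Fin n) (Fin n) ℤ) * ((A⁻¹ : SL n) : Matrix (Fin n) (Fin n) ℤ) = 1 := by
    rw [← Matrix.SpecialLinearGroup.coe_mul, mul_inv_cancel,
      Matrix.SpecialLinearGroup.coe_one]
  have hEE : Emat n 0 (-1) * Emat n 0 1 = 1 := by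
    rw [Emat_mul_Emat]
    norm_num [Emat_zero]
  calc ((A⁻¹ : SL n) : Matrix (Fin n) (Fin n) ℤ)
      = (Emat n 0 (-1) * Emat n 0 1) * ((A⁻¹ : SL n) : Matrix (Fin n) (Fin n) ℤ) := by
        rw [hEE, one_mul]
    _ = Emat n 0 (-1) * ((A : Matrix (Fin n) (Fin n) ℤ) *
        ((A⁻¹ : SL n) : Matrix (Fin n) (Fin n) ℤ)) := by
        rw [hA, Amat_eq h1, mul_assoc]
    _ = Emat n 0 (-1) := by rw [hAA, mul_one]

lemma coe_Binv (hB : (B : Matrix (Fin n) (Fin n) ℤ) = Bmat n) :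
    ((B⁻¹ : SL n) : Matrix (Fin n) (Fin n) ℤ) = Btm n := by
  have hBB : (B : Matrix (Fin n) (Fin n) ℤ) * ((B⁻¹ : SL n) : Matrix (Fin n) (Fin n) ℤ) = 1 := by
    rw [← Matrix.SpecialLinearGroup.coe_mul, mul_inv_cancel,
      Matrix.SpecialLinearGroup.coe_one]
  calc ((B⁻¹ : SL n) : Matrix (Fin n) (Fin n) ℤ)
      = (Btm n * Bmat n) * ((B⁻¹ : SL n) : Matrix (Fin n) (Fin n) ℤ) := by
        rw [Btm_mul_Bmat, one_mul]
    _ = Btm n * ((B : Matrix (Fin n) (Fin n) ℤ) *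
        ((B⁻¹ : SL n) : Matrix (Fin n) (Fin n) ℤ)) := by rw [hB, mul_assoc]
    _ = Btm n := by rw [hBB, mul_one]

/-- Word for a power of `A`. -/
def wAword (A : SL n) (a : ℤ) : List (SL n) :=
  if a = 1 then [A] else if a = -1 then [A⁻¹] else []

lemma wAword_length (a : ℤ) : (wAword A a).length ≤ 1 := by
  rw [wAword]; split_ifs <;> simp

lemma wAword_mem {a : ℤ} {x : SL n} (hx : x ∈ wAword A a) : x = A ∨ x = A⁻¹ := by
  rw [wAword] at hx
  split_ifs at hx <;> simp at hx <;> tauto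

lemma wAword_prod (h1 : 1 < n) (hA : (A : Matrix (Fin n) (Fin n) ℤ) = Amat n)
    {a : ℤ} (ha : a = 0 ∨ a = 1 ∨ a = -1) :
    (((wAword A a).prod : SL n) : Matrix (Fin n) (Fin n) ℤ) = Emat n 0 a := by
  rcases ha with rfl | rfl | rfl
  · rw [wAword, if_neg (by norm_num), if_neg (by norm_num)]
    rw [List.prod_nil, Matrix.SpecialLinearGroup.coe_one, Emat_zero]
  · rw [wAword, if_pos rfl, List.prod_singleton, hA, Amat_eq h1]
  · rw [wAword, if_neg (by norm_num), if_pos rfl, List.prod_singleton, coe_Ainv h1 hA]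

/-- Ascending part of the conjugator word. -/
def W1w (n : ℕ) (A B : SL n) (u : ℕ → ℤ) : ℕ → List (SL n)
  | 0 => []
  | (j + 1) => W1w n A B u j ++ (B⁻¹ :: wAword A (cv u (j + 1)))

/-- Descending part of the conjugator word. -/
def W2w (n : ℕ) (A B : SL n) (u : ℕ → ℤ) : ℕ → List (SL n)
  | 0 => []
  | (m + 1) => W2w n A B u m ++ (wAword A (tv u (n - 2 - m)) ++ [B])

lemma W1w_length (u : ℕ → ℤ) : ∀ j, (W1w n A B u j).length ≤ 2 * j := by
  intro j
  induction j with
  | zero => simp [W1w]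
  | succ j ih =>
    show (W1w n A B u j ++ (B⁻¹ :: wAword A (cv u (j + 1)))).length ≤ _
    rw [List.length_append, List.length_cons]
    have := wAword_length (A := A) (cv u (j + 1))
    omega

lemma W2w_length (u : ℕ → ℤ) : ∀ m, (W2w n A B u m).length ≤ 2 * m := by
  intro m
  induction m with
  | zero => simp [W2w]
  | succ m ih =>
    show (W2w n A B u m ++ (wAword A (tv u (n - 2 - m)) ++ [B])).length ≤ _
    rw [List.length_append, List.length_append, List.length_singleton]
    have := wAword_length (A := A) (tv u (n - 2 - m))
    omega

lemma W1w_mem (u : ℕ → ℤ) :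
    ∀ j, ∀ x ∈ W1w n A B u j, x = A ∨ x = A⁻¹ ∨ x = B ∨ x = B⁻¹ := by
  intro j
  induction j with
  | zero => intro x hx; simp [W1w] at hx
  | succ j ih =>
    intro x hx
    rw [show W1w n A B u (j + 1) = W1w n A B u j ++ (B⁻¹ :: wAword A (cv u (j + 1))) from rfl,
      List.mem_append, List.mem_cons] at hx
    rcases hx with h | h | h
    · exact ih x h
    · exact Or.inr (Or.inr (Or.inr h))
    · rcases wAword_mem h with h' | h' <;> tauto

lemma W2w_mem (u : ℕ → ℤ) :
    ∀ m, ∀ x ∈ W2w n A B u m, x = A ∨ x = A⁻¹ ∨ x = B ∨ x = B⁻¹ := by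
  intro m
  induction m with
  | zero => intro x hx; simp [W2w] at hx
  | succ m ih =>
    intro x hx
    rw [show W2w n A B u (m + 1) = W2w n A B u m ++ (wAword A (tv u (n - 2 - m)) ++ [B])
        from rfl, List.mem_append, List.mem_append, List.mem_singleton] at hx
    rcases hx with h | h | h
    · exact ih x h
    · rcases wAword_mem h with h' | h' <;> tauto
    · exact Or.inr (Or.inr (Or.inl h))

lemma W1w_prod (h3 : 3 ≤ n) (hA : (A : Matrix (Fin n) (Fin n) ℤ) = Amat n)
    (hB : (B : Matrix (Fin n) (Fin n) ℤ) = Bmat n)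
    {u : ℕ → ℤ} (hu1 : u 1 = 1 ∨ u 1 = -1)
    (hub : ∀ m, 2 ≤ m → u m = 0 ∨ u m = 1 ∨ u m = -1) :
    ∀ j, j ≤ n - 2 →
      (((W1w n A B u j).prod : SL n) : Matrix (Fin n) (Fin n) ℤ) = CP1 n u j * Btm n ^ j := by
  intro j
  induction j with
  | zero =>
    intro _
    show (((List.nil).prod : SL n) : Matrix (Fin n) (Fin n) ℤ) = CP1 n u 0 * Btm n ^ 0
    rw [List.prod_nil, Matrix.SpecialLinearGroup.coe_one, pow_zero]
    show (1 : Matrix (Fin n) (Fin n) ℤ) = 1 * 1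
    rw [mul_one]
  | succ j ih =>
    intro hj
    have hj' : j ≤ n - 2 := by omega
    show (((W1w n A B u j ++ (B⁻¹ :: wAword A (cv u (j + 1)))).prod : SL n) :
        Matrix (Fin n) (Fin n) ℤ) = _
    rw [List.prod_append, List.prod_cons, Matrix.SpecialLinearGroup.coe_mul,
      Matrix.SpecialLinearGroup.coe_mul, ih hj', coe_Binv hB,
      wAword_prod (by omega) hA (Or.inr (cv_bit hu1 hub (j + 1) (by omega)))]
    calc CP1 n u j * Btm n ^ j * (Btm n * Emat n 0 (cv u (j + 1)))
        = CP1 n u j * (Btm n ^ (j + 1) * Emat n 0 (cv u (j + 1))) := by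
          rw [pow_succ, mul_assoc, mul_assoc]
      _ = CP1 n u j * (Emat n (j + 1) (cv u (j + 1)) * Btm n ^ (j + 1)) := by
          rw [Btm_pow_mul_Emat (by omega) hj]
      _ = CP1 n u (j + 1) * Btm n ^ (j + 1) := by
          rw [← mul_assoc]; rfl

lemma W2w_prod (h3 : 3 ≤ n) (hA : (A : Matrix (Fin n) (Fin n) ℤ) = Amat n)
    (hB : (B : Matrix (Fin n) (Fin n) ℤ) = Bmat n)
    {u : ℕ → ℤ} (hu1 : u 1 = 1 ∨ u 1 = -1)
    (hub : ∀ m, 2 ≤ m → u m = 0 ∨ u m = 1 ∨ u m = -1) :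
    ∀ m, m ≤ n - 2 →
      Btm n ^ (n - 2) * (((W2w n A B u m).prod : SL n) : Matrix (Fin n) (Fin n) ℤ) =
        Qm n u m * Btm n ^ (n - 2 - m) := by
  intro m
  induction m with
  | zero =>
    intro _
    show Btm n ^ (n - 2) * (((List.nil).prod : SL n) : Matrix (Fin n) (Fin n) ℤ) = _
    rw [List.prod_nil, Matrix.SpecialLinearGroup.coe_one, mul_one]
    show _ = 1 * Btm n ^ (n - 2 - 0)
    rw [one_mul]
    norm_num
  | succ m ih =>
    intro hm
    have hm' : m ≤ n - 2 := by omega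
    have hk1 : 1 ≤ n - 2 - m := by omega
    show Btm n ^ (n - 2) *
        (((W2w n A B u m ++ (wAword A (tv u (n - 2 - m)) ++ [B])).prod : SL n) :
          Matrix (Fin n) (Fin n) ℤ) = _
    rw [List.prod_append, List.prod_append, List.prod_singleton,
      Matrix.SpecialLinearGroup.coe_mul, Matrix.SpecialLinearGroup.coe_mul,
      wAword_prod (by omega) hA (tv_bit hu1 hub (n - 2 - m) hk1), hB]
    calc Btm n ^ (n - 2) * ((((W2w n A B u m).prod : SL n) : Matrix (Fin n) (Fin n) ℤ) *
          (Emat n 0 (tv u (n - 2 - m)) * Bmat n))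
        = Qm n u m * (Btm n ^ (n - 2 - m) * (Emat n 0 (tv u (n - 2 - m)) * Bmat n)) := by
          rw [← mul_assoc, ih hm', mul_assoc]
      _ = Qm n u m * (Emat n (n - 2 - m) (tv u (n - 2 - m)) * (Btm n ^ (n - 2 - m) * Bmat n)) := by
          rw [← mul_assoc (Btm n ^ (n - 2 - m)), Btm_pow_mul_Emat (by omega) (by omega), mul_assoc]
      _ = Qm n u m * (Emat n (n - 2 - m) (tv u (n - 2 - m)) * Btm n ^ (n - 2 - (m + 1))) := by
          rw [Btm_pow_mul_Bmat hk1, show n - 2 - m - 1 = n - 2 - (m + 1) from by omega]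
      _ = Qm n u (m + 1) * Btm n ^ (n - 2 - (m + 1)) := by
          rw [← mul_assoc]; rfl

end Words


lemma core (hn : 3 ≤ n) (A B M : SL n)
    (hA : (A : Matrix (Fin n) (Fin n) ℤ) = Amat n)
    (hB : (B : Matrix (Fin n) (Fin n) ℤ) = Bmat n)
    (hd : ∀ i : Fin n, (M : Matrix (Fin n) (Fin n) ℤ) i i = 1)
    (hr : ∀ i j : Fin n, (i : ℕ) ≠ 0 → i ≠ j → (M : Matrix (Fin n) (Fin n) ℤ) i j = 0)
    (hb : ∀ i j : Fin n, (M : Matrix (Fin n) (Fin n) ℤ) i j = 0 ∨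
      (M : Matrix (Fin n) (Fin n) ℤ) i j = 1 ∨ (M : Matrix (Fin n) (Fin n) ℤ) i j = -1) :
    ∃ l : List (SL n), l.length ≤ 8 * n ∧
      (∀ x ∈ l, x = A ∨ x = A⁻¹ ∨ x = B ∨ x = B⁻¹) ∧ l.prod = M := by
  have h0 : 0 < n := by omega
  have h1 : 1 < n := by omega
  set Mm : Matrix (Fin n) (Fin n) ℤ := (M : Matrix (Fin n) (Fin n) ℤ) with hMm
  set vm : ℕ → ℤ := fun m => if h : m < n ∧ 1 ≤ m then Mm ⟨0, h0⟩ ⟨m, h.1⟩ else 0 with hvm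
  set sv : ℤ := if vm 1 = 0 then 1 else 0 with hsv
  set uu : ℕ → ℤ := fun m => vm m - (if m = 1 then sv else 0) with huu
  have vm_pos : ∀ m (hm : m < n), 1 ≤ m → vm m = Mm ⟨0, h0⟩ ⟨m, hm⟩ := by
    intro m hm hm1
    simp only [hvm]
    rw [dif_pos ⟨hm, hm1⟩]
  have vm_zero : ∀ m, ¬ (m < n ∧ 1 ≤ m) → vm m = 0 := by
    intro m hm
    simp only [hvm]
    rw [dif_neg hm]
  have uu_eq : ∀ m, m ≠ 1 → uu m = vm m := by
    intro m hm
    simp only [huu]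
    rw [if_neg hm, sub_zero]
  have uu1_eq : uu 1 = vm 1 - sv := by
    simp only [huu]
    norm_num
  have hvm1 : vm 1 = Mm ⟨0, h0⟩ ⟨1, h1⟩ := vm_pos 1 h1 le_rfl
  have hu1 : uu 1 = 1 ∨ uu 1 = -1 := by
    by_cases hz : vm 1 = 0
    · have hsv1 : sv = 1 := by rw [hsv, if_pos hz]
      right; rw [uu1_eq, hz, hsv1]; ring
    · have hsv0 : sv = 0 := by rw [hsv, if_neg hz]
      rcases hb ⟨0, h0⟩ ⟨1, h1⟩ with h | h | h
      · exact absurd (hvm1.trans h) hz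
      · left; rw [uu1_eq, hvm1, h, hsv0]; ring
      · right; rw [uu1_eq, hvm1, h, hsv0]; ring
  have hub : ∀ m, 2 ≤ m → uu m = 0 ∨ uu m = 1 ∨ uu m = -1 := by
    intro m hm
    rw [uu_eq m (by omega)]
    by_cases hcond : m < n ∧ 1 ≤ m
    · rw [vm_pos m hcond.1 hcond.2]
      exact hb _ _
    · rw [vm_zero m hcond]
      exact Or.inl rfl
  set Cw : List (SL n) := W1w n A B uu (n - 2) ++ W2w n A B uu (n - 2) with hCwdef
  set Cinv : List (SL n) := (Cw.map (fun x => x⁻¹)).reverse with hCinvdef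
  set l : List (SL n) := Cinv ++ wAword A (uu 1) ++ Cw ++ wAword A sv with hldef
  refine ⟨l, ?_, ?_, ?_⟩
  · -- length
    have hC : Cw.length ≤ 4 * (n - 2) := by
      rw [hCwdef, List.length_append]
      have := W1w_length (A := A) (B := B) uu (n - 2)
      have := W2w_length (A := A) (B := B) uu (n - 2)
      omega
    have hCi : Cinv.length = Cw.length := by
      rw [hCinvdef, List.length_reverse, List.length_map]
    rw [hldef]
    rw [List.length_append, List.length_append, List.length_append]
    have := wAword_length (A := A) (uu 1)
    have := wAword_length (A := A) sv
    omega
  · -- letters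
    intro x hx
    rw [hldef] at hx
    simp only [List.mem_append] at hx
    rcases hx with ((hx | hx) | hx) | hx
    · rw [hCinvdef, List.mem_reverse, List.mem_map] at hx
      obtain ⟨y, hy, rfl⟩ := hx
      rw [hCwdef, List.mem_append] at hy
      rcases hy with hy | hy
      · rcases W1w_mem uu (n - 2) y hy with h | h | h | h <;> subst h <;> simp <;> tauto
      · rcases W2w_mem uu (n - 2) y hy with h | h | h | h <;> subst h <;> simp <;> tauto
    · rcases wAword_mem hx with h | h <;> tauto
    · rw [hCwdef, List.mem_append] at hx
      rcases hx with hx | hx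
      · exact W1w_mem uu (n - 2) x hx
      · exact W2w_mem uu (n - 2) x hx
    · rcases wAword_mem hx with h | h <;> tauto
  · -- product
    have hCw : ((Cw.prod : SL n) : Matrix (Fin n) (Fin n) ℤ) =
        CP1 n uu (n - 2) * Qm n uu (n - 2) := by
      rw [hCwdef, List.prod_append, Matrix.SpecialLinearGroup.coe_mul,
        W1w_prod hn hA hB hu1 hub (n - 2) le_rfl, mul_assoc,
        W2w_prod hn hA hB hu1 hub (n - 2) le_rfl]
      rw [Nat.sub_self, pow_zero, mul_one]
    have hCinv : (Cinv.prod : SL n) = (Cw.prod)⁻¹ := by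
      rw [hCinvdef, ← List.prod_inv_reverse]
    have hkey : Rv n (w0v (uu 1)) * (CP1 n uu (n - 2) * Qm n uu (n - 2)) =
        (CP1 n uu (n - 2) * Qm n uu (n - 2)) * Rv n (wP2 n uu (n - 2)) := by
      calc Rv n (w0v (uu 1)) * (CP1 n uu (n - 2) * Qm n uu (n - 2))
          = (Rv n (w0v (uu 1)) * CP1 n uu (n - 2)) * Qm n uu (n - 2) := by rw [mul_assoc]
        _ = (CP1 n uu (n - 2) * Rv n (wP1 uu (n - 2))) * Qm n uu (n - 2) := by
            rw [phase1 hn uu (n - 2) le_rfl]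
        _ = CP1 n uu (n - 2) * (Rv n (wP2 n uu 0) * Qm n uu (n - 2)) := by rw [mul_assoc]; rfl
        _ = CP1 n uu (n - 2) * (Qm n uu (n - 2) * Rv n (wP2 n uu (n - 2))) := by
            rw [show Rv n (wP2 n uu 0) = Rv n (wP1 uu (n - 2)) from rfl,
              phase2 hn uu (n - 2) le_rfl]
        _ = (CP1 n uu (n - 2) * Qm n uu (n - 2)) * Rv n (wP2 n uu (n - 2)) := by rw [mul_assoc]
    have hwf0 : wP2 n uu (n - 2) 0 = 0 := by
      rw [wP2_closed hu1 hub hn (n - 2) le_rfl 0]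
      rw [if_neg (by omega), if_neg (by omega)]
    have hprod : ((l.prod : SL n) : Matrix (Fin n) (Fin n) ℤ) =
        Rv n (fun m => wP2 n uu (n - 2) m + if m = 1 then sv else 0) := by
      rw [hldef, List.prod_append, List.prod_append, List.prod_append,
        Matrix.SpecialLinearGroup.coe_mul, Matrix.SpecialLinearGroup.coe_mul,
        Matrix.SpecialLinearGroup.coe_mul]
      rw [wAword_prod h1 hA (Or.inr hu1), hCw]
      rw [show Emat n 0 (uu 1) = Rv n (w0v (uu 1)) from (Rv_w0v h1 (uu 1)).symm]
      rw [wAword_prod h1 hA (by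
        rw [hsv]; split_ifs
        · exact Or.inr (Or.inl rfl)
        · exact Or.inl rfl)]
      calc ((Cinv.prod : SL n) : Matrix (Fin n) (Fin n) ℤ) * Rv n (w0v (uu 1)) *
            (CP1 n uu (n - 2) * Qm n uu (n - 2)) * Emat n 0 sv
          = ((Cinv.prod : SL n) : Matrix (Fin n) (Fin n) ℤ) *
            (Rv n (w0v (uu 1)) * (CP1 n uu (n - 2) * Qm n uu (n - 2))) * Emat n 0 sv := by
            rw [mul_assoc ((Cinv.prod : SL n) : Matrix (Fin n) (Fin n) ℤ)]
        _ = ((Cinv.prod : SL n) : Matrix (Fin n) (Fin n) ℤ) *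
            ((CP1 n uu (n - 2) * Qm n uu (n - 2)) * Rv n (wP2 n uu (n - 2))) * Emat n 0 sv := by
            rw [hkey]
        _ = (((Cinv.prod : SL n) : Matrix (Fin n) (Fin n) ℤ) *
            (CP1 n uu (n - 2) * Qm n uu (n - 2))) * (Rv n (wP2 n uu (n - 2)) * Emat n 0 sv) := by
            simp only [mul_assoc]
        _ = 1 * (Rv n (wP2 n uu (n - 2)) * Emat n 0 sv) := by
            rw [← hCw, ← Matrix.SpecialLinearGroup.coe_mul, hCinv, inv_mul_cancel,
              Matrix.SpecialLinearGroup.coe_one]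
        _ = Rv n (fun m => wP2 n uu (n - 2) m + if m = 1 then sv else 0) := by
            rw [one_mul, Rv_mul_Emat0 h1 sv hwf0]
    have hfin : Rv n (fun m => wP2 n uu (n - 2) m + if m = 1 then sv else 0) = Rv n vm := by
      apply Rv_congr
      intro m
      have hmlt := m.isLt
      show wP2 n uu (n - 2) (m : ℕ) + (if (m : ℕ) = 1 then sv else 0) = vm (m : ℕ)
      rw [wP2_closed hu1 hub hn (n - 2) le_rfl (m : ℕ)]
      by_cases hm0 : (m : ℕ) = 0
      · rw [hm0]
        rw [if_neg (by omega), if_neg (by omega), if_neg (by omega), add_zero]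
        rw [vm_zero 0 (by omega)]
      · by_cases hm1 : (m : ℕ) = 1
        · rw [hm1]
          rw [if_neg (by omega), if_pos (by omega : 1 ≤ 1 ∧ 1 ≤ n - 1 - (n - 2)), if_pos rfl]
          have heps : epsv uu 1 = uu 1 := by rw [epsv_succ, if_pos rfl]
          rw [heps, uu1_eq]
          ring
        · rw [if_pos (by omega : n - (n - 2) ≤ (m : ℕ) ∧ (m : ℕ) ≤ n - 1),
            if_neg hm1, add_zero]
          exact uu_eq (m : ℕ) hm1
    have hMRv : Rv n vm = Mm := by
      ext i j
      rw [Rv_eq h0, Matrix.add_apply, Matrix.sum_apply]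
      have hsum : (∑ m : Fin n, Matrix.single (⟨0, h0⟩ : Fin n) m (vm (m : ℕ)) i j) =
          if (⟨0, h0⟩ : Fin n) = i then vm (j : ℕ) else 0 := by
        rw [Finset.sum_eq_single j]
        · rw [std_apply]
          by_cases hi : (⟨0, h0⟩ : Fin n) = i
          · rw [if_pos ⟨hi, rfl⟩, if_pos hi]
          · rw [if_neg (fun hc => hi hc.1), if_neg hi]
        · intro m _ hm
          rw [std_apply, if_neg (fun hc => hm hc.2)]
        · intro hc; exact absurd (Finset.mem_univ _) hc
      rw [hsum]
      by_cases hi : (⟨0, h0⟩ : Fin n) = i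
      · rw [if_pos hi]
        by_cases hij : i = j
        · subst hij
          have hj0 : (i : ℕ) = 0 := by rw [← hi]
          rw [Matrix.one_apply_eq, hj0, vm_zero 0 (by omega), add_zero]
          exact (hd i).symm
        · rw [Matrix.one_apply_ne hij, zero_add]
          have hj1 : 1 ≤ (j : ℕ) := by
            by_contra hc
            have hj0 : (j : ℕ) = 0 := by omega
            exact hij (by rw [← hi]; exact Fin.ext hj0.symm)
          rw [vm_pos (j : ℕ) j.isLt hj1]
          rw [hi, Fin.eta]
      · rw [if_neg hi, add_zero]
        have hi0 : (i : ℕ) ≠ 0 := fun hc => hi (Fin.ext hc.symm)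
        by_cases hij : i = j
        · rw [hij, Matrix.one_apply_eq]
          exact (hd _).symm
        · rw [Matrix.one_apply_ne hij]
          exact (hr i j hi0 hij).symm
    have hfinal : ((l.prod : SL n) : Matrix (Fin n) (Fin n) ℤ) = Mm := by
      rw [hprod, hfin, hMRv]
    exact Subtype.ext hfinal


lemma conj_step {k : ℕ} (hk : k + 1 < n) (Xm : Matrix (Fin n) (Fin n) ℤ)
    (hd : ∀ i : Fin n, Xm i i = 1)
    (hr : ∀ i j : Fin n, (i : ℕ) ≠ k + 1 → i ≠ j → Xm i j = 0)
    (hb : ∀ i j : Fin n, Xm i j = 0 ∨ Xm i j = 1 ∨ Xm i j = -1) :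
    (∀ i : Fin n, (Bmat n * Xm * Btm n) i i = 1) ∧
    (∀ i j : Fin n, (i : ℕ) ≠ k → i ≠ j → (Bmat n * Xm * Btm n) i j = 0) ∧
    (∀ i j : Fin n, (Bmat n * Xm * Btm n) i j = 0 ∨ (Bmat n * Xm * Btm n) i j = 1 ∨
      (Bmat n * Xm * Btm n) i j = -1) := by
  have hsb : ∀ c : ℤ, (c = 0 ∨ c = 1 ∨ c = -1) →
      ((-1 : ℤ) ^ (n - 1) * c = 0 ∨ (-1 : ℤ) ^ (n - 1) * c = 1 ∨
        (-1 : ℤ) ^ (n - 1) * c = -1) := by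
    intro c hc
    rcases sign_cases (n := n) with hs | hs <;> rcases hc with h | h | h <;>
      rw [hs, h] <;> norm_num
  refine ⟨?_, ?_, ?_⟩
  · intro i
    rw [mul_Btm_apply]
    split_ifs with h
    · rw [Bmat_mul_apply, dif_pos h]
      exact hd _
    · rw [Bmat_mul_apply, dif_neg h, hd, mul_one, sign_sq]
  · intro i j hik hij
    have hij' : (i : ℕ) ≠ (j : ℕ) := fun hc => hij (Fin.ext hc)
    rw [mul_Btm_apply]
    split_ifs with hj
    · rw [Bmat_mul_apply]
      split_ifs with hi2
      · refine hr _ _ ?_ ?_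
        · show ¬ ((i : ℕ) + 1 = k + 1)
          omega
        · rw [Ne, Fin.ext_iff]
          show ¬ ((i : ℕ) + 1 = (j : ℕ) + 1)
          omega
      · rw [hr _ _ (show ¬ ((0 : ℕ) = k + 1) from by omega)
          (by rw [Ne, Fin.ext_iff]; show ¬ ((0 : ℕ) = (j : ℕ) + 1); omega), mul_zero]
    · rw [Bmat_mul_apply]
      split_ifs with hi2
      · rw [hr _ _ (show ¬ ((i : ℕ) + 1 = k + 1) from by omega)
          (by rw [Ne, Fin.ext_iff]; show ¬ ((i : ℕ) + 1 = (0 : ℕ)); omega), mul_zero]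
      · exfalso
        have h1 : (i : ℕ) = n - 1 := by have := i.isLt; omega
        have h2 : (j : ℕ) = n - 1 := by have := j.isLt; omega
        exact hij (Fin.ext (show (i : ℕ) = (j : ℕ) by omega))
  · intro i j
    rw [mul_Btm_apply]
    split_ifs with hj
    · rw [Bmat_mul_apply]
      split_ifs with hi2
      · exact hb _ _
      · exact hsb _ (hb _ _)
    · rw [Bmat_mul_apply]
      split_ifs with hi2
      · exact hsb _ (hb _ _)
      · exact hsb _ (hsb _ (hb _ _))

lemma rot (hn : 3 ≤ n) (A B : SL n)
    (hA : (A : Matrix (Fin n) (Fin n) ℤ) = Amat n)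
    (hB : (B : Matrix (Fin n) (Fin n) ℤ) = Bmat n) :
    ∀ k, k < n → ∀ M : SL n,
      (∀ i : Fin n, (M : Matrix (Fin n) (Fin n) ℤ) i i = 1) →
      (∀ i j : Fin n, (i : ℕ) ≠ k → i ≠ j → (M : Matrix (Fin n) (Fin n) ℤ) i j = 0) →
      (∀ i j : Fin n, (M : Matrix (Fin n) (Fin n) ℤ) i j = 0 ∨
        (M : Matrix (Fin n) (Fin n) ℤ) i j = 1 ∨ (M : Matrix (Fin n) (Fin n) ℤ) i j = -1) →
      ∃ l : List (SL n), l.length ≤ 8 * n + 2 * k ∧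
        (∀ x ∈ l, x = A ∨ x = A⁻¹ ∨ x = B ∨ x = B⁻¹) ∧ l.prod = M := by
  intro k
  induction k with
  | zero =>
    intro _ M hd hr hb
    obtain ⟨l, hlen, hmem, hprod⟩ := core hn A B M hA hB hd hr hb
    exact ⟨l, by omega, hmem, hprod⟩
  | succ k ih =>
    intro hk M hd hr hb
    set N : SL n := B * M * B⁻¹ with hN
    have hNm : (N : Matrix (Fin n) (Fin n) ℤ) =
        Bmat n * (M : Matrix (Fin n) (Fin n) ℤ) * Btm n := by
      rw [hN, Matrix.SpecialLinearGroup.coe_mul, Matrix.SpecialLinearGroup.coe_mul,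
        coe_Binv hB, hB]
    obtain ⟨hd', hr', hb'⟩ := conj_step hk (M : Matrix (Fin n) (Fin n) ℤ) hd hr hb
    obtain ⟨l, hlen, hmem, hprod⟩ := ih (by omega) N
      (fun i => by rw [hNm]; exact hd' i)
      (fun i j h1 h2 => by rw [hNm]; exact hr' i j h1 h2)
      (fun i j => by rw [hNm]; exact hb' i j)
    refine ⟨B⁻¹ :: (l ++ [B]), ?_, ?_, ?_⟩
    · rw [List.length_cons, List.length_append, List.length_singleton]
      omega
    · intro x hx
      rw [List.mem_cons, List.mem_append, List.mem_singleton] at hx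
      rcases hx with h | h | h
      · tauto
      · exact hmem x h
      · tauto
    · rw [List.prod_cons, List.prod_append, List.prod_singleton, hprod, hN]
      group

end BitRowAux


/-- A bit-row matrix in SL_n(ℤ) is a product of at most 49n elements of
{A, A⁻¹, B, B⁻¹}, and of at most 48n such elements if the row differing from the
identity is the first row. -/
theorem bitRowMatrix_short_word (n : ℕ) (hn : 3 ≤ n)
    (A B M : Matrix.SpecialLinearGroup (Fin n) ℤ)
    (hA : (A : Matrix (Fin n) (Fin n) ℤ) = Amat n)
    (hB : (B : Matrix (Fin n) (Fin n) ℤ) = Bmat n)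
    (hM : IsBitRowMatrix (M : Matrix (Fin n) (Fin n) ℤ)) :
    (∃ l : List (Matrix.SpecialLinearGroup (Fin n) ℤ),
        l.length ≤ 49 * n ∧
        (∀ x ∈ l, x = A ∨ x = A⁻¹ ∨ x = B ∨ x = B⁻¹) ∧
        l.prod = M) ∧
    ((∀ i j : Fin n, (i : ℕ) ≠ 0 → i ≠ j → (M : Matrix (Fin n) (Fin n) ℤ) i j = 0) →
      ∃ l : List (Matrix.SpecialLinearGroup (Fin n) ℤ),
        l.length ≤ 48 * n ∧
        (∀ x ∈ l, x = A ∨ x = A⁻¹ ∨ x = B ∨ x = B⁻¹) ∧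
        l.prod = M) := by
  obtain ⟨⟨hdiag, r, hrow⟩, hbits⟩ := hM
  constructor
  · have hr' : ∀ i j : Fin n, (i : ℕ) ≠ (r : ℕ) → i ≠ j →
        (M : Matrix (Fin n) (Fin n) ℤ) i j = 0 := by
      intro i j h1 h2
      exact hrow i j (fun hc => h1 (by rw [hc])) h2
    obtain ⟨l, hlen, hmem, hprod⟩ :=
      BitRowAux.rot hn A B hA hB (r : ℕ) r.isLt M hdiag hr' hbits
    refine ⟨l, ?_, hmem, hprod⟩
    have := r.isLt
    omega
  · intro h0
    obtain ⟨l, hlen, hmem, hprod⟩ := BitRowAux.core hn A B M hA hB hdiag h0 hbits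
    exact ⟨l, by omega, hmem, hprod⟩
end

section
/- Let n ≥ 3 and let M ∈ SL_n(ℤ) be a bit-column matrix. Then M can be written as a product of at most 49n elements of {A_n, A_n⁻¹, B_n, B_n⁻¹}; moreover, if the column of M that differs from the identity is the final (n-th) column, then M can be written as a product of at most 48n such elements. -/
/-- A column matrix: all diagonal entries are 1 and it differs from the identity only
in one column. -/
def IsColumnMatrix {n : ℕ} (M : Matrix (Fin n) (Fin n) ℤ) : Prop :=
  (∀ i, M i i = 1) ∧ ∃ c : Fin n, ∀ i j, j ≠ c → i ≠ j → M i j = 0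

/-- A bit-column matrix: a column matrix all of whose entries lie in {0, 1, −1}. -/
def IsBitColumnMatrix {n : ℕ} (M : Matrix (Fin n) (Fin n) ℤ) : Prop :=
  IsColumnMatrix M ∧ ∀ i j, M i j = 0 ∨ M i j = 1 ∨ M i j = -1

namespace BCMaux
open Matrix

variable {n : ℕ}

def tv (n : ℕ) (a b : Fin n) (t : ℤ) : Matrix (Fin n) (Fin n) ℤ :=
  Matrix.of fun i j => if i = j then 1 else if i = a ∧ j = b then t else 0

lemma tv_apply (a b : Fin n) (t : ℤ) (i j : Fin n) :
    tv n a b t i j = if i = j then 1 else if i = a ∧ j = b then t else 0 := rfl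

lemma tv_eq (a b : Fin n) (hab : a ≠ b) (t : ℤ) :
    tv n a b t = 1 + Matrix.single a b t := by
  ext i j
  rw [tv_apply, Matrix.add_apply, Matrix.one_apply]
  by_cases h1 : i = j
  · subst h1
    rw [if_pos rfl, if_pos rfl, Matrix.single_apply_of_ne]
    · ring
    · rintro ⟨rfl, rfl⟩; exact hab rfl
  · rw [if_neg h1, if_neg h1, zero_add]
    by_cases h2 : i = a ∧ j = b
    · obtain ⟨rfl, rfl⟩ := h2
      rw [if_pos ⟨rfl, rfl⟩, Matrix.single_apply_same]
    · rw [if_neg h2]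
      refine (Matrix.single_apply_of_ne a b t i j ?_).symm
      rintro ⟨rfl, rfl⟩; exact h2 ⟨rfl, rfl⟩

lemma tv_zero (a b : Fin n) (hab : a ≠ b) : tv n a b 0 = 1 := by
  rw [tv_eq a b hab, Matrix.single_zero, add_zero]

lemma mul_tv_apply (a b : Fin n) (hab : a ≠ b) (t : ℤ) (M : Matrix (Fin n) (Fin n) ℤ)
    (i l : Fin n) :
    (M * tv n a b t) i l = M i l + if l = b then M i a * t else 0 := by
  rw [tv_eq a b hab, Matrix.mul_add, Matrix.mul_one, Matrix.add_apply]
  congr 1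
  by_cases h : l = b
  · subst h; rw [if_pos rfl, Matrix.mul_single_apply_same]
  · rw [if_neg h]
    exact Matrix.mul_single_apply_of_ne t a b i l h M

lemma tv_mul_apply (a b : Fin n) (hab : a ≠ b) (t : ℤ) (M : Matrix (Fin n) (Fin n) ℤ)
    (i l : Fin n) :
    (tv n a b t * M) i l = M i l + if i = a then t * M b l else 0 := by
  rw [tv_eq a b hab, Matrix.add_mul, Matrix.one_mul, Matrix.add_apply]
  congr 1
  by_cases h : i = a
  · subst h; rw [if_pos rfl, Matrix.single_mul_apply_same]
  · rw [if_neg h]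
    exact Matrix.single_mul_apply_of_ne t a b i l h M

lemma tv_mul_tv (a b : Fin n) (hab : a ≠ b) (s t : ℤ) :
    tv n a b s * tv n a b t = tv n a b (s + t) := by
  rw [tv_eq a b hab s, tv_eq a b hab t, tv_eq a b hab (s + t)]
  rw [Matrix.add_mul, Matrix.mul_add, Matrix.mul_add, Matrix.one_mul, Matrix.mul_one,
    Matrix.single_mul_single_of_ne s a b a (Ne.symm hab) t]
  rw [Matrix.single_add, one_mul, add_zero]
  abel

lemma Bmat_apply (i j : Fin n) : Bmat n i j = if (j : ℕ) = (i : ℕ) + 1 then 1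
    else if (i : ℕ) = n - 1 ∧ (j : ℕ) = 0 then (-1 : ℤ) ^ (n - 1) else 0 := rfl

lemma Bmat_mul_apply_of_lt (M : Matrix (Fin n) (Fin n) ℤ) (i l : Fin n)
    (hi : (i : ℕ) + 1 < n) :
    (Bmat n * M) i l = M ⟨(i : ℕ) + 1, hi⟩ l := by
  rw [Matrix.mul_apply]
  rw [Finset.sum_eq_single (⟨(i : ℕ) + 1, hi⟩ : Fin n)]
  · rw [Bmat_apply]
    norm_num
  · intro k _ hk
    rw [Bmat_apply]
    have h1 : ¬ ((k : ℕ) = (i : ℕ) + 1) := by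
      intro h; exact hk (Fin.ext h)
    have h2 : ¬ ((i : ℕ) = n - 1 ∧ (k : ℕ) = 0) := by
      rintro ⟨h, -⟩; omega
    rw [if_neg h1, if_neg h2, zero_mul]
  · intro h; exact absurd (Finset.mem_univ _) h

lemma Bmat_mul_apply_last (M : Matrix (Fin n) (Fin n) ℤ) (i l : Fin n)
    (hi : (i : ℕ) = n - 1) :
    (Bmat n * M) i l = (-1 : ℤ) ^ (n - 1) * M ⟨0, Nat.pos_of_ne_zero (by omega)⟩ l := by
  have hn : 0 < n := i.pos
  rw [Matrix.mul_apply]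
  rw [Finset.sum_eq_single (⟨0, hn⟩ : Fin n)]
  · rw [Bmat_apply]
    have h1 : ¬ ((0 : ℕ) = (i : ℕ) + 1) := by omega
    rw [if_neg h1, if_pos ⟨hi, rfl⟩]
  · intro k _ hk
    rw [Bmat_apply]
    have hk0 : (k : ℕ) ≠ 0 := by
      intro h; exact hk (Fin.ext h)
    have h1 : ¬ ((k : ℕ) = (i : ℕ) + 1) := by
      have := k.isLt; omega
    rw [if_neg h1, if_neg (by tauto), zero_mul]
  · intro h; exact absurd (Finset.mem_univ _) h

lemma mul_Bmat_apply_zero (M : Matrix (Fin n) (Fin n) ℤ) (i l : Fin n)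
    (hl : (l : ℕ) = 0) :
    (M * Bmat n) i l = (-1 : ℤ) ^ (n - 1) * M i ⟨n - 1, by have := i.isLt; omega⟩ := by
  have hn : 0 < n := i.pos
  rw [Matrix.mul_apply]
  rw [Finset.sum_eq_single (⟨n - 1, by omega⟩ : Fin n)]
  · rw [Bmat_apply]
    have h1 : ¬ ((l : ℕ) = (n - 1 : ℕ) + 1) := by omega
    rw [if_neg h1, if_pos ⟨rfl, hl⟩, mul_comm]
  · intro k _ hk
    rw [Bmat_apply]
    have hk0 : (k : ℕ) ≠ n - 1 := by
      intro h; exact hk (Fin.ext h)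
    have h1 : ¬ ((l : ℕ) = (k : ℕ) + 1) := by omega
    rw [if_neg h1, if_neg (by tauto), mul_zero]
  · intro h; exact absurd (Finset.mem_univ _) h

lemma mul_Bmat_apply_pos (M : Matrix (Fin n) (Fin n) ℤ) (i l : Fin n)
    (hl : 0 < (l : ℕ)) :
    (M * Bmat n) i l = M i ⟨(l : ℕ) - 1, by have := l.isLt; omega⟩ := by
  rw [Matrix.mul_apply]
  rw [Finset.sum_eq_single (⟨(l : ℕ) - 1, by have := l.isLt; omega⟩ : Fin n)]
  · rw [Bmat_apply]
    have h1 : (l : ℕ) = ((l : ℕ) - 1) + 1 := by omega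
    rw [if_pos h1, mul_one]
  · intro k _ hk
    rw [Bmat_apply]
    have hk0 : (k : ℕ) ≠ (l : ℕ) - 1 := by
      intro h; exact hk (Fin.ext h)
    have h1 : ¬ ((l : ℕ) = (k : ℕ) + 1) := by omega
    have h2 : ¬ ((k : ℕ) = n - 1 ∧ (l : ℕ) = 0) := by
      rintro ⟨-, h⟩; omega
    rw [if_neg h1, if_neg h2, mul_zero]
  · intro h; exact absurd (Finset.mem_univ _) h

lemma B_tv_comm (a b c : Fin n) (hb : (b : ℕ) = (a : ℕ) + 1) (hc : (c : ℕ) = (b : ℕ) + 1)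
    (t : ℤ) :
    Bmat n * tv n b c t = tv n a b t * Bmat n := by
  have hbc : b ≠ c := by intro h; rw [h] at hc; omega
  have hab : a ≠ b := by intro h; rw [h] at hb; omega
  ext i l
  rw [mul_tv_apply b c hbc t (Bmat n) i l, tv_mul_apply a b hab t (Bmat n) i l]
  congr 1
  have hBib : Bmat n i b = if i = a then 1 else 0 := by
    rw [Bmat_apply]
    by_cases h : i = a
    · subst h; rw [if_pos hb, if_pos rfl]
    · have h1 : ¬ ((b : ℕ) = (i : ℕ) + 1) := by
        intro hh; exact h (Fin.ext (by omega))
      have h2 : ¬ ((i : ℕ) = n - 1 ∧ (b : ℕ) = 0) := by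
        rintro ⟨-, hh⟩; omega
      rw [if_neg h1, if_neg h2, if_neg h]
  have hBbl : Bmat n b l = if l = c then 1 else 0 := by
    rw [Bmat_apply]
    by_cases h : l = c
    · subst h; rw [if_pos hc, if_pos rfl]
    · have h1 : ¬ ((l : ℕ) = (b : ℕ) + 1) := by
        intro hh; exact h (Fin.ext (by omega))
      have h2 : ¬ ((b : ℕ) = n - 1 ∧ (l : ℕ) = 0) := by
        rintro ⟨hh, -⟩; have := c.isLt; omega
      rw [if_neg h1, if_neg h2, if_neg h]
  rw [hBib, hBbl]
  by_cases h1 : l = c <;> by_cases h2 : i = a <;> simp [h1, h2, mul_comm]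

lemma Amat_eq_tv (hn : 3 ≤ n) :
    Amat n = tv n ⟨0, by omega⟩ ⟨1, by omega⟩ 1 := by
  ext i j
  rw [tv_apply]
  show (if i = j then 1 else if (i : ℕ) = 0 ∧ (j : ℕ) = 1 then 1 else 0 : ℤ) = _
  by_cases h1 : i = j
  · rw [if_pos h1, if_pos h1]
  · rw [if_neg h1, if_neg h1]
    by_cases h2 : (i : ℕ) = 0 ∧ (j : ℕ) = 1
    · rw [if_pos h2, if_pos ⟨Fin.ext h2.1, Fin.ext h2.2⟩]
    · rw [if_neg h2, if_neg (by rintro ⟨rfl, rfl⟩; exact h2 ⟨rfl, rfl⟩)]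


section GroupPart

abbrev SL (n : ℕ) := Matrix.SpecialLinearGroup (Fin n) ℤ

lemma coe_mul_inv (g : SL n) :
    (g : Matrix (Fin n) (Fin n) ℤ) * ((g⁻¹ : SL n) : Matrix (Fin n) (Fin n) ℤ) = 1 := by
  rw [← Matrix.SpecialLinearGroup.coe_mul, mul_inv_cancel, Matrix.SpecialLinearGroup.coe_one]

lemma coe_inv_mul (g : SL n) :
    ((g⁻¹ : SL n) : Matrix (Fin n) (Fin n) ℤ) * (g : Matrix (Fin n) (Fin n) ℤ) = 1 := by
  rw [← Matrix.SpecialLinearGroup.coe_mul, inv_mul_cancel, Matrix.SpecialLinearGroup.coe_one]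

lemma coe_cancel_right (g : SL n) {X Y : Matrix (Fin n) (Fin n) ℤ}
    (h : X * (g : Matrix (Fin n) (Fin n) ℤ) = Y * (g : Matrix (Fin n) (Fin n) ℤ)) : X = Y := by
  have h2 : X * (g : Matrix (Fin n) (Fin n) ℤ) * ((g⁻¹ : SL n) : Matrix (Fin n) (Fin n) ℤ)
      = Y * (g : Matrix (Fin n) (Fin n) ℤ) * ((g⁻¹ : SL n) : Matrix (Fin n) (Fin n) ℤ) := by
    rw [h]
  rwa [mul_assoc, coe_mul_inv, mul_one, mul_assoc, coe_mul_inv, mul_one] at h2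

lemma coe_cancel_left (g : SL n) {X Y : Matrix (Fin n) (Fin n) ℤ}
    (h : (g : Matrix (Fin n) (Fin n) ℤ) * X = (g : Matrix (Fin n) (Fin n) ℤ) * Y) : X = Y := by
  have h2 : ((g⁻¹ : SL n) : Matrix (Fin n) (Fin n) ℤ) * ((g : Matrix (Fin n) (Fin n) ℤ) * X)
      = ((g⁻¹ : SL n) : Matrix (Fin n) (Fin n) ℤ) * ((g : Matrix (Fin n) (Fin n) ℤ) * Y) := by
    rw [h]
  rwa [← mul_assoc, coe_inv_mul, one_mul, ← mul_assoc, coe_inv_mul, one_mul] at h2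

variable (A B : SL n)

def Wd (k : ℕ) (g : SL n) : Prop :=
  ∃ l : List (SL n), l.length ≤ k ∧ (∀ x ∈ l, x = A ∨ x = A⁻¹ ∨ x = B ∨ x = B⁻¹) ∧ l.prod = g

variable {A B}

lemma Wd_one : Wd A B 0 1 := ⟨[], by simp, by simp, rfl⟩

lemma Wd_mono {k k' : ℕ} (h : k ≤ k') {g : SL n} (hg : Wd A B k g) : Wd A B k' g := by
  obtain ⟨l, h1, h2, h3⟩ := hg
  exact ⟨l, le_trans h1 h, h2, h3⟩

lemma Wd_mul {k k' : ℕ} {g g' : SL n} (h : Wd A B k g) (h' : Wd A B k' g') :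
    Wd A B (k + k') (g * g') := by
  obtain ⟨l, h1, h2, h3⟩ := h
  obtain ⟨l', h1', h2', h3'⟩ := h'
  refine ⟨l ++ l', by simp; omega, ?_, by rw [List.prod_append, h3, h3']⟩
  intro x hx
  rcases List.mem_append.1 hx with hx | hx
  · exact h2 x hx
  · exact h2' x hx

lemma Wd_A : Wd A B 1 A := ⟨[A], by simp, by simp, by simp⟩
lemma Wd_Ainv : Wd A B 1 A⁻¹ := ⟨[A⁻¹], by simp, by simp, by simp⟩
lemma Wd_B : Wd A B 1 B := ⟨[B], by simp, by simp, by simp⟩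
lemma Wd_Binv : Wd A B 1 B⁻¹ := ⟨[B⁻¹], by simp, by simp, by simp⟩

lemma Wd_inv {k : ℕ} {g : SL n} (h : Wd A B k g) : Wd A B k g⁻¹ := by
  obtain ⟨l, h1, h2, h3⟩ := h
  refine ⟨(l.map (fun x => x⁻¹)).reverse, by simp [h1], ?_, ?_⟩
  · intro x hx
    simp only [List.mem_reverse, List.mem_map] at hx
    obtain ⟨y, hy, rfl⟩ := hx
    rcases h2 y hy with rfl | rfl | rfl | rfl
    · right; left; rfl
    · left; rw [inv_inv]
    · right; right; right; rfl
    · right; right; left; rw [inv_inv]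
  · rw [← List.prod_inv_reverse, h3]

lemma Wd_Bpow (k : ℕ) : Wd A B k (B ^ k) :=
  ⟨List.replicate k B, by simp, by intro x hx; rw [List.eq_of_mem_replicate hx]; tauto,
    List.prod_replicate k B⟩

lemma Wd_Bpow_inv (k : ℕ) : Wd A B k ((B ^ k)⁻¹) := Wd_inv (Wd_Bpow k)

def cj (B : SL n) (g : SL n) (k : ℕ) : SL n := (B ^ k)⁻¹ * g * B ^ k

lemma Wd_cj {m : ℕ} {g : SL n} (h : Wd A B m g) (k : ℕ) : Wd A B (m + 2 * k) (cj B g k) := by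
  have := Wd_mul (Wd_mul (Wd_Bpow_inv (A := A) k) h) (Wd_Bpow k)
  exact Wd_mono (by omega) this

lemma cj_zero (B g : SL n) : cj B g 0 = g := by simp [cj]

lemma cj_succ (B g : SL n) (k : ℕ) : cj B g (k + 1) = B⁻¹ * cj B g k * B := by
  simp only [cj, pow_succ, _root_.mul_inv_rev, mul_assoc]

lemma cj_coe (hn : 3 ≤ n) (hB : (B : Matrix (Fin n) (Fin n) ℤ) = Bmat n) (g : SL n) (t : ℤ)
    (hg : (g : Matrix (Fin n) (Fin n) ℤ) = tv n ⟨0, by omega⟩ ⟨1, by omega⟩ t) :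
    ∀ k : ℕ, (hk : k + 1 ≤ n - 1) →
      ((cj B g k : SL n) : Matrix (Fin n) (Fin n) ℤ)
        = tv n ⟨k, by omega⟩ ⟨k + 1, by omega⟩ t := by
  intro k
  induction k with
  | zero => intro _; rw [cj_zero]; exact hg
  | succ k ih =>
    intro hk
    have ihk := ih (by omega)
    apply coe_cancel_left B
    have e1 : B * cj B g (k + 1) = cj B g k * B := by
      rw [cj_succ]; group
    calc (B : Matrix (Fin n) (Fin n) ℤ) * ↑(cj B g (k + 1))
        = ((B * cj B g (k + 1) : SL n) : Matrix (Fin n) (Fin n) ℤ) := by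
          rw [Matrix.SpecialLinearGroup.coe_mul]
      _ = ((cj B g k * B : SL n) : Matrix (Fin n) (Fin n) ℤ) := by rw [e1]
      _ = tv n ⟨k, by omega⟩ ⟨k + 1, by omega⟩ t * (B : Matrix (Fin n) (Fin n) ℤ) := by
          rw [Matrix.SpecialLinearGroup.coe_mul, ihk]
      _ = (B : Matrix (Fin n) (Fin n) ℤ) * tv n ⟨k + 1, by omega⟩ ⟨k + 1 + 1, by omega⟩ t := by
          rw [hB]
          exact (B_tv_comm ⟨k, by omega⟩ ⟨k + 1, by omega⟩ ⟨k + 2, by omega⟩ rfl rfl t).symm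

lemma coe_A_inv (hn : 3 ≤ n) (hA : (A : Matrix (Fin n) (Fin n) ℤ) = Amat n) :
    ((A⁻¹ : SL n) : Matrix (Fin n) (Fin n) ℤ) = tv n ⟨0, by omega⟩ ⟨1, by omega⟩ (-1) := by
  have h01 : (⟨0, by omega⟩ : Fin n) ≠ ⟨1, by omega⟩ := by
    intro h; have := Fin.mk.injEq .. ▸ h; simp at this
  apply coe_cancel_right A
  rw [coe_inv_mul, hA, Amat_eq_tv hn, tv_mul_tv _ _ h01]
  norm_num
  exact (tv_zero _ _ h01).symm

def elA (A : SL n) (s : ℤ) : SL n := if s = 0 then 1 else if s = -1 then A⁻¹ else A⁻¹ * A⁻¹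

lemma Wd_elA (s : ℤ) : Wd A B 2 (elA A s) := by
  unfold elA
  split_ifs
  · exact Wd_mono (by omega) Wd_one
  · exact Wd_mono (by omega) Wd_Ainv
  · exact Wd_mul Wd_Ainv Wd_Ainv

lemma coe_elA (hn : 3 ≤ n) (hA : (A : Matrix (Fin n) (Fin n) ℤ) = Amat n) (s : ℤ)
    (hs : s = 0 ∨ s = -1 ∨ s = -2) :
    ((elA A s : SL n) : Matrix (Fin n) (Fin n) ℤ) = tv n ⟨0, by omega⟩ ⟨1, by omega⟩ s := by
  have h01 : (⟨0, by omega⟩ : Fin n) ≠ ⟨1, by omega⟩ := by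
    intro h; have := Fin.mk.injEq .. ▸ h; simp at this
  rcases hs with rfl | rfl | rfl
  · rw [show elA A 0 = 1 by rfl, Matrix.SpecialLinearGroup.coe_one, tv_zero _ _ h01]
  · rw [show elA A (-1) = A⁻¹ by rfl]
    exact coe_A_inv hn hA
  · rw [show elA A (-2) = A⁻¹ * A⁻¹ by rfl, Matrix.SpecialLinearGroup.coe_mul,
      coe_A_inv hn hA, tv_mul_tv _ _ h01]
    norm_num

def elA' (A : SL n) (s : ℤ) : SL n := if s = 0 then 1 else if s = 1 then A else A⁻¹

lemma Wd_elA' (s : ℤ) : Wd A B 1 (elA' A s) := by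
  unfold elA'
  split_ifs
  · exact Wd_mono (by omega) Wd_one
  · exact Wd_A
  · exact Wd_Ainv

lemma coe_elA' (hn : 3 ≤ n) (hA : (A : Matrix (Fin n) (Fin n) ℤ) = Amat n) (s : ℤ)
    (hs : s = 0 ∨ s = 1 ∨ s = -1) :
    ((elA' A s : SL n) : Matrix (Fin n) (Fin n) ℤ) = tv n ⟨0, by omega⟩ ⟨1, by omega⟩ s := by
  have h01 : (⟨0, by omega⟩ : Fin n) ≠ ⟨1, by omega⟩ := by
    intro h; have := Fin.mk.injEq .. ▸ h; simp at this
  rcases hs with rfl | rfl | rfl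
  · rw [show elA' A 0 = 1 by rfl, Matrix.SpecialLinearGroup.coe_one, tv_zero _ _ h01]
  · rw [show elA' A 1 = A by rfl, hA, Amat_eq_tv hn]
  · rw [show elA' A (-1) = A⁻¹ by rfl]
    exact coe_A_inv hn hA

end GroupPart


def Tmat (n m : ℕ) : Matrix (Fin n) (Fin n) ℤ :=
  Matrix.of fun i j => if i = j then 1 else if (i : ℕ) < (j : ℕ) ∧ (j : ℕ) ≤ m + 1 then 1 else 0

lemma Tmat_zero (hn : 3 ≤ n) : Tmat n 0 = tv n ⟨0, by omega⟩ ⟨1, by omega⟩ 1 := by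
  ext i l
  simp only [Tmat, tv, Matrix.of_apply, Fin.ext_iff]
  split_ifs <;> omega

lemma Tmat_step (hn : 3 ≤ n) (m : ℕ) (hm : m + 2 ≤ n - 1) :
    Tmat n m * tv n ⟨m + 1, by omega⟩ ⟨m + 2, by omega⟩ 1 = Tmat n (m + 1) := by
  have hne : (⟨m + 1, by omega⟩ : Fin n) ≠ ⟨m + 2, by omega⟩ := by
    intro h; rw [Fin.ext_iff] at h; simp at h
  ext i l
  rw [mul_tv_apply _ _ hne]
  simp only [Tmat, Matrix.of_apply, Fin.ext_iff, mul_one]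
  split_ifs <;> omega

def Umat (n : ℕ) (w : ℕ → ℤ) (a : ℕ) : Matrix (Fin n) (Fin n) ℤ :=
  Matrix.of fun i j => if i = j then 1
    else if (j : ℕ) = (i : ℕ) + 1 ∧ a ≤ (i : ℕ) ∧ (i : ℕ) + 2 ≤ n - 1 then w i - 1 else 0

lemma Umat_top (hn : 3 ≤ n) (w : ℕ → ℤ) : Umat n w (n - 2) = 1 := by
  ext i l
  simp only [Umat, Matrix.of_apply, Matrix.one_apply, Fin.ext_iff]
  split_ifs <;> omega

lemma Umat_step (hn : 3 ≤ n) (w : ℕ → ℤ) (a : ℕ) (ha : a + 2 ≤ n - 1) :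
    Umat n w (a + 1) * tv n ⟨a, by omega⟩ ⟨a + 1, by omega⟩ (w a - 1) = Umat n w a := by
  have hne : (⟨a, by omega⟩ : Fin n) ≠ ⟨a + 1, by omega⟩ := by
    intro h; rw [Fin.ext_iff] at h; simp at h
  ext i l
  rw [mul_tv_apply _ _ hne]
  simp only [Umat, Matrix.of_apply, Fin.ext_iff]
  split_ifs <;> first | omega | (subst_vars; first | ring | omega)

section Prods

variable (A B : SL n)

def RT : ℕ → SL n
  | 0 => A
  | m + 1 => RT m * B⁻¹ * A

def TP (m : ℕ) : SL n := RT A B m * B ^ m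

variable {A B}

lemma Wd_RT (m : ℕ) : Wd A B (2 * m + 1) (RT A B m) := by
  induction m with
  | zero => exact Wd_A
  | succ m ih =>
    have := Wd_mul (Wd_mul ih Wd_Binv) Wd_A
    exact Wd_mono (by omega) this

lemma Wd_TP (m : ℕ) : Wd A B (3 * m + 1) (TP A B m) := by
  have := Wd_mul (Wd_RT m) (Wd_Bpow (A := A) (B := B) m)
  exact Wd_mono (by omega) this

lemma TP_succ (m : ℕ) : TP A B (m + 1) = TP A B m * cj B A (m + 1) := by
  show RT A B m * B⁻¹ * A * B ^ (m + 1) = RT A B m * B ^ m * ((B ^ (m + 1))⁻¹ * A * B ^ (m + 1))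
  group

lemma coe_TP (hn : 3 ≤ n) (hA : (A : Matrix (Fin n) (Fin n) ℤ) = Amat n)
    (hB : (B : Matrix (Fin n) (Fin n) ℤ) = Bmat n) :
    ∀ m : ℕ, (hm : m + 1 ≤ n - 1) →
      ((TP A B m : SL n) : Matrix (Fin n) (Fin n) ℤ) = Tmat n m := by
  intro m
  induction m with
  | zero =>
    intro _
    have : TP A B 0 = A := by
      show RT A B 0 * B ^ 0 = A
      rw [pow_zero, mul_one]; rfl
    rw [this, hA, Amat_eq_tv hn, Tmat_zero hn]
  | succ m ih =>
    intro hm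
    rw [TP_succ, Matrix.SpecialLinearGroup.coe_mul, ih (by omega),
      cj_coe hn hB A 1 (by rw [hA]; exact Amat_eq_tv hn) (m + 1) (by omega),
      Tmat_step hn m (by omega)]

variable (A B)

def RU (w : ℕ → ℤ) (d : ℕ) : ℕ → SL n
  | 0 => (B ^ d)⁻¹
  | j + 1 => RU w d j * B * elA A (w (d - 1 - j) - 1)

def UPP (w : ℕ → ℤ) (d : ℕ) (j : ℕ) : SL n := RU A B w d j * B ^ (d - j)

variable {A B}

lemma Wd_RU (w : ℕ → ℤ) (d : ℕ) (j : ℕ) : Wd A B (d + 3 * j) (RU A B w d j) := by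
  induction j with
  | zero => exact Wd_Bpow_inv d
  | succ j ih =>
    have := Wd_mul (Wd_mul ih Wd_B) (Wd_elA (w (d - 1 - j) - 1))
    exact Wd_mono (by omega) this

lemma Wd_UPP (w : ℕ → ℤ) (d : ℕ) (j : ℕ) (hj : j ≤ d) :
    Wd A B (2 * d + 2 * j) (UPP A B w d j) := by
  have := Wd_mul (Wd_RU w d j) (Wd_Bpow (A := A) (B := B) (d - j))
  exact Wd_mono (by omega) this

lemma UPP_zero (w : ℕ → ℤ) (d : ℕ) : UPP A B w d 0 = 1 := by
  show (B ^ d)⁻¹ * B ^ (d - 0) = 1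
  rw [Nat.sub_zero, inv_mul_cancel]

lemma UPP_succ (w : ℕ → ℤ) (d : ℕ) (j : ℕ) (hj : j < d) :
    UPP A B w d (j + 1) = UPP A B w d j * cj B (elA A (w (d - 1 - j) - 1)) (d - 1 - j) := by
  show RU A B w d j * B * elA A (w (d - 1 - j) - 1) * B ^ (d - (j + 1))
    = RU A B w d j * B ^ (d - j) *
      ((B ^ (d - 1 - j))⁻¹ * elA A (w (d - 1 - j) - 1) * B ^ (d - 1 - j))
  have e1 : d - j = (d - 1 - j) + 1 := by omega
  have e2 : d - (j + 1) = d - 1 - j := by omega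
  rw [e1, e2, pow_succ']
  group

lemma coe_UPP (hn : 3 ≤ n) (hA : (A : Matrix (Fin n) (Fin n) ℤ) = Amat n)
    (hB : (B : Matrix (Fin n) (Fin n) ℤ) = Bmat n) (w : ℕ → ℤ)
    (hw : ∀ k, w k = 0 ∨ w k = 1 ∨ w k = -1) :
    ∀ j : ℕ, (hj : j ≤ n - 2) →
      ((UPP A B w (n - 2) j : SL n) : Matrix (Fin n) (Fin n) ℤ) = Umat n w (n - 2 - j) := by
  intro j
  induction j with
  | zero =>
    intro _
    rw [UPP_zero, Matrix.SpecialLinearGroup.coe_one, Nat.sub_zero, Umat_top hn w]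
  | succ j ih =>
    intro hj
    set k := n - 2 - 1 - j with hk
    have hkn : k + 2 ≤ n - 1 := by omega
    have hs : w k - 1 = 0 ∨ w k - 1 = -1 ∨ w k - 1 = -2 := by
      rcases hw k with h | h | h <;> omega
    rw [UPP_succ w (n - 2) j (by omega), Matrix.SpecialLinearGroup.coe_mul, ih (by omega),
      cj_coe hn hB _ (w k - 1) (coe_elA hn hA _ hs) k (by omega)]
    have e3 : n - 2 - j = k + 1 := by omega
    have e4 : n - 2 - (j + 1) = k := by omega
    rw [e3, Umat_step hn w k hkn, e4]

end Prods


def CM (n : ℕ) (w : ℕ → ℤ) : Matrix (Fin n) (Fin n) ℤ :=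
  Matrix.of fun i l => if i = l then 1 else if (l : ℕ) = n - 1 then w i else 0

lemma CM_mul_apply (w : ℕ → ℤ) (hw : w (n - 1) = 0) (e : Fin n) (he : (e : ℕ) = n - 1)
    (M : Matrix (Fin n) (Fin n) ℤ) (i l : Fin n) :
    (CM n w * M) i l = M i l + w i * M e l := by
  rw [Matrix.mul_apply]
  have key : ∀ k : Fin n, CM n w i k * M k l =
      (if k = i then M i l else 0) + (if k = e then w i * M e l else 0) := by
    intro k
    simp only [CM, Matrix.of_apply]
    by_cases h1 : k = i
    · subst h1
      rw [if_pos rfl, if_pos rfl]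
      by_cases h2 : k = e
      · have hwk : w (k : ℕ) = 0 := by rw [h2, he]; exact hw
        rw [if_pos h2, hwk, one_mul, zero_mul, add_zero]
      · rw [if_neg h2, one_mul, add_zero]
    · rw [if_neg h1, if_neg (fun h => h1 h.symm)]
      by_cases h2 : k = e
      · subst h2
        rw [if_pos (by omega), if_pos rfl, zero_add]
      · rw [if_neg h2, if_neg (fun h => h2 (Fin.ext (by omega))), zero_mul, zero_add]
  rw [Finset.sum_congr rfl (fun k _ => key k), Finset.sum_add_distrib]
  rw [Finset.sum_ite_eq' Finset.univ i, Finset.sum_ite_eq' Finset.univ]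
  simp

lemma Umat_mul_apply_hi (w : ℕ → ℤ) (M : Matrix (Fin n) (Fin n) ℤ)
    (i i1 : Fin n) (hi1 : (i1 : ℕ) = (i : ℕ) + 1) (l : Fin n) (hi : (i : ℕ) + 2 ≤ n - 1) :
    (Umat n w 0 * M) i l = M i l + (w i - 1) * M i1 l := by
  rw [Matrix.mul_apply]
  have hne : i ≠ i1 := fun h => by rw [h] at hi1; omega
  have key : ∀ k : Fin n, Umat n w 0 i k * M k l =
      (if k = i then M i l else 0) + (if k = i1 then (w i - 1) * M i1 l else 0) := by
    intro k
    simp only [Umat, Matrix.of_apply]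
    by_cases h1 : k = i
    · subst h1
      rw [if_pos rfl, if_pos rfl, if_neg hne, one_mul, add_zero]
    · rw [if_neg (fun h => h1 h.symm), if_neg h1]
      by_cases h2 : k = i1
      · subst h2
        rw [if_pos ⟨hi1, Nat.zero_le _, hi⟩, if_pos rfl, zero_add]
      · rw [if_neg h2, if_neg (by rintro ⟨hh, -⟩; exact h2 (Fin.ext (by omega))), zero_mul,
          zero_add]
  rw [Finset.sum_congr rfl (fun k _ => key k), Finset.sum_add_distrib]
  rw [Finset.sum_ite_eq' Finset.univ i, Finset.sum_ite_eq' Finset.univ]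
  simp

lemma Umat_mul_apply_lo (w : ℕ → ℤ) (M : Matrix (Fin n) (Fin n) ℤ)
    (i l : Fin n) (hi : ¬ ((i : ℕ) + 2 ≤ n - 1)) :
    (Umat n w 0 * M) i l = M i l := by
  rw [Matrix.mul_apply]
  have key : ∀ k : Fin n, Umat n w 0 i k * M k l = (if k = i then M i l else 0) := by
    intro k
    simp only [Umat, Matrix.of_apply]
    by_cases h1 : k = i
    · subst h1; rw [if_pos rfl, if_pos rfl, one_mul]
    · rw [if_neg (fun h => h1 h.symm), if_neg h1,
        if_neg (by rintro ⟨-, -, hh⟩; omega), zero_mul]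
  rw [Finset.sum_congr rfl (fun k _ => key k), Finset.sum_ite_eq' Finset.univ i]
  simp

lemma Xrow (hn : 3 ≤ n) (w : ℕ → ℤ) (e : Fin n) (he : (e : ℕ) = n - 1) (l : Fin n) :
    (Umat n w 0 * Tmat n (n - 3)) e l = if e = l then 1 else 0 := by
  rw [Umat_mul_apply_lo w _ _ l (by omega)]
  simp only [Tmat, Matrix.of_apply]
  by_cases h : e = l
  · rw [if_pos h, if_pos h]
  · rw [if_neg h, if_neg h, if_neg (by have := l.isLt; rintro ⟨hh, hh2⟩; omega)]

lemma Xcol (hn : 3 ≤ n) (w : ℕ → ℤ) (d : Fin n) (hd : (d : ℕ) = n - 2) (i : Fin n) :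
    (Umat n w 0 * Tmat n (n - 3)) i d
      = (if i = d then 1 else 0) + (if (i : ℕ) ≤ n - 3 then w i else 0) := by
  have hil := i.isLt
  by_cases hi : (i : ℕ) + 2 ≤ n - 1
  · have hi1v : ((⟨(i : ℕ) + 1, by omega⟩ : Fin n) : ℕ) = (i : ℕ) + 1 := rfl
    rw [Umat_mul_apply_hi w _ i ⟨(i : ℕ) + 1, by omega⟩ hi1v d hi]
    have h1 : Tmat n (n - 3) i d = 1 := by
      simp only [Tmat, Matrix.of_apply]
      by_cases h : i = d
      · rw [if_pos h]
      · rw [if_neg h, if_pos (by rw [Fin.ext_iff] at h; constructor <;> omega)]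
    have h2 : Tmat n (n - 3) ⟨(i : ℕ) + 1, by omega⟩ d = 1 := by
      simp only [Tmat, Matrix.of_apply]
      by_cases h : (⟨(i : ℕ) + 1, by omega⟩ : Fin n) = d
      · rw [if_pos h]
      · rw [if_neg h, if_pos (by rw [Fin.ext_iff] at h; rw [hi1v] at h; constructor <;> omega)]
    rw [h1, h2, if_neg (fun h => by rw [Fin.ext_iff] at h; omega), if_pos (by omega)]
    ring
  · rw [Umat_mul_apply_lo w _ _ _ hi]
    simp only [Tmat, Matrix.of_apply]
    by_cases h : i = d
    · rw [if_pos h, if_pos h, if_neg (show ¬ ((i : ℕ) ≤ n - 3) by rw [h] at hil ⊢; omega),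
        add_zero]
    · rw [if_neg h, if_neg h, if_neg (by rintro ⟨hh, -⟩; omega),
        if_neg (by omega), add_zero]

lemma mml (hn : 3 ≤ n) (ww : ℕ → ℤ) (hlast : ww (n - 1) = 0)
    (d e : Fin n) (hd : (d : ℕ) = n - 2) (he : (e : ℕ) = n - 1)
    (Y : Matrix (Fin n) (Fin n) ℤ)
    (hrow : ∀ l, Y e l = if e = l then 1 else 0)
    (hcol : ∀ i, Y i d = (if i = d then 1 else 0) + ww i) :
    CM n ww * (tv n d e 1 * Y) = Y * tv n d e 1 := by
  have hde : d ≠ e := fun h => by rw [h] at hd; omega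
  ext i l
  rw [CM_mul_apply ww hlast e he, tv_mul_apply _ _ hde 1 Y i l,
    tv_mul_apply _ _ hde 1 Y e l, mul_tv_apply _ _ hde 1 Y i l,
    if_neg (Ne.symm hde), add_zero, hrow l, hcol i]
  by_cases hl : l = e
  · rw [if_pos hl, if_pos hl.symm]
    split_ifs <;> ring
  · rw [if_neg hl, if_neg (show ¬ (e = l) from fun h => hl h.symm)]
    split_ifs <;> ring


lemma core (hn : 3 ≤ n) (A B N : SL n)
    (hA : (A : Matrix (Fin n) (Fin n) ℤ) = Amat n)
    (hB : (B : Matrix (Fin n) (Fin n) ℤ) = Bmat n)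
    (hdiag : ∀ i : Fin n, (N : Matrix (Fin n) (Fin n) ℤ) i i = 1)
    (hcol : ∀ i j : Fin n, (j : ℕ) ≠ n - 1 → i ≠ j → (N : Matrix (Fin n) (Fin n) ℤ) i j = 0)
    (hbits : ∀ i j : Fin n, (N : Matrix (Fin n) (Fin n) ℤ) i j = 0 ∨
      (N : Matrix (Fin n) (Fin n) ℤ) i j = 1 ∨ (N : Matrix (Fin n) (Fin n) ℤ) i j = -1) :
    Wd A B (20 * n) N := by
  set d : Fin n := ⟨n - 2, by omega⟩ with hd_def
  set e : Fin n := ⟨n - 2 + 1, by omega⟩ with he_def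
  have hd : (d : ℕ) = n - 2 := rfl
  have he : (e : ℕ) = n - 1 := by show n - 2 + 1 = n - 1; omega
  have hde : d ≠ e := fun h => by rw [Fin.ext_iff, hd, he] at h; omega
  set w : ℕ → ℤ := fun k =>
    if h : k < n then (if k = n - 1 then 0 else (N : Matrix (Fin n) (Fin n) ℤ) ⟨k, h⟩ e) else 0
    with hw_def
  have hw : ∀ k, w k = 0 ∨ w k = 1 ∨ w k = -1 := by
    intro k
    rw [hw_def]
    dsimp only
    split_ifs with h1 h2
    · left; rfl
    · exact hbits _ _
    · left; rfl
  have hwlast : w (n - 1) = 0 := by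
    rw [hw_def]; dsimp only; rw [dif_pos (show n - 1 < n by omega), if_pos rfl]
  have hwval : ∀ i : Fin n, (i : ℕ) ≠ n - 1 → w i = (N : Matrix (Fin n) (Fin n) ℤ) i e := by
    intro i hi
    rw [hw_def]; dsimp only
    rw [dif_pos i.isLt, if_neg hi]
  set ww : ℕ → ℤ := fun k => if k ≤ n - 3 then w k else 0 with hww_def
  have hwwlast : ww (n - 1) = 0 := by
    rw [hww_def]; dsimp only; rw [if_neg (show ¬ (n - 1 ≤ n - 3) by omega)]
  -- the group elements
  set Xel : SL n := UPP A B w (n - 2) (n - 2) * TP A B (n - 3) with hXel_def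
  set Dg : SL n := cj B A (n - 2) with hDg_def
  set Dt : SL n := cj B (elA' A (w (n - 2))) (n - 2) with hDt_def
  set Z0 : SL n := Xel * Dg * Xel⁻¹ * Dg⁻¹ with hZ0_def
  have coeXel : (Xel : Matrix (Fin n) (Fin n) ℤ) = Umat n w 0 * Tmat n (n - 3) := by
    rw [hXel_def, Matrix.SpecialLinearGroup.coe_mul,
      coe_UPP hn hA hB w hw (n - 2) le_rfl, coe_TP hn hA hB (n - 3) (by omega),
      Nat.sub_self]
  have coeDg : (Dg : Matrix (Fin n) (Fin n) ℤ) = tv n d e 1 := by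
    rw [hDg_def]
    exact cj_coe hn hB A 1 (by rw [hA]; exact Amat_eq_tv hn) (n - 2) (by omega)
  have coeDt : (Dt : Matrix (Fin n) (Fin n) ℤ) = tv n d e (w (n - 2)) := by
    rw [hDt_def]
    exact cj_coe hn hB _ _ (coe_elA' hn hA _ (hw (n - 2))) (n - 2) (by omega)
  have hkey : CM n ww * ((Dg : Matrix (Fin n) (Fin n) ℤ) * (Xel : Matrix (Fin n) (Fin n) ℤ))
      = (Xel : Matrix (Fin n) (Fin n) ℤ) * (Dg : Matrix (Fin n) (Fin n) ℤ) := by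
    rw [coeXel, coeDg]
    exact mml hn ww hwwlast d e hd he _ (Xrow hn w e he) (Xcol hn w d hd)
  have coeZ0 : (Z0 : Matrix (Fin n) (Fin n) ℤ) = CM n ww := by
    have hgrp : Z0 * (Dg * Xel) = Xel * Dg := by rw [hZ0_def]; group
    have e0 : ((Z0 * (Dg * Xel) : SL n) : Matrix (Fin n) (Fin n) ℤ)
        = ((Xel * Dg : SL n) : Matrix (Fin n) (Fin n) ℤ) := by rw [hgrp]
    have e1 : ((Z0 * (Dg * Xel) : SL n) : Matrix (Fin n) (Fin n) ℤ)
        = (Z0 : Matrix (Fin n) (Fin n) ℤ) * ((Dg * Xel : SL n) : Matrix (Fin n) (Fin n) ℤ) :=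
      Matrix.SpecialLinearGroup.coe_mul _ _
    have e2 : ((Xel * Dg : SL n) : Matrix (Fin n) (Fin n) ℤ)
        = (Xel : Matrix (Fin n) (Fin n) ℤ) * (Dg : Matrix (Fin n) (Fin n) ℤ) :=
      Matrix.SpecialLinearGroup.coe_mul _ _
    have e3 : ((Dg * Xel : SL n) : Matrix (Fin n) (Fin n) ℤ)
        = (Dg : Matrix (Fin n) (Fin n) ℤ) * (Xel : Matrix (Fin n) (Fin n) ℤ) :=
      Matrix.SpecialLinearGroup.coe_mul _ _
    apply coe_cancel_right (Dg * Xel)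
    rw [← e1, e0, e2, e3, hkey]
  have hwd : w (n - 2) = (N : Matrix (Fin n) (Fin n) ℤ) d e := by
    rw [hw_def]; dsimp only
    rw [dif_pos (show n - 2 < n by omega), if_neg (show ¬ (n - 2 = n - 1) by omega)]
  have coeN : (N : Matrix (Fin n) (Fin n) ℤ) = CM n ww * tv n d e (w (n - 2)) := by
    ext i l
    rw [mul_tv_apply d e hde (w (n - 2)) (CM n ww) i l]
    have hCMid : CM n ww i d = if i = d then 1 else 0 := by
      simp only [CM, Matrix.of_apply]
      by_cases h : i = d
      · rw [if_pos h, if_pos h]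
      · rw [if_neg h, if_neg h, if_neg (show ¬ ((d : ℕ) = n - 1) by rw [hd]; omega)]
    rw [hCMid]
    simp only [CM, Matrix.of_apply]
    by_cases hle : l = e
    · rw [if_pos hle]
      by_cases hil : i = l
      · rw [if_pos hil, if_neg (show ¬ i = d by
            intro h; apply hde; rw [← h]; exact hil.trans hle), hil, hle, hdiag e]
        ring
      · rw [if_neg hil, if_pos (show (l : ℕ) = n - 1 by rw [hle, he])]
        by_cases hid : i = d
        · rw [if_pos hid, hww_def]
          dsimp only
          rw [if_neg (show ¬ ((i : ℕ) ≤ n - 3) by rw [hid, hd]; omega), hid, hle, ← hwd]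
          ring
        · rw [if_neg hid, hww_def]
          dsimp only
          have hi3 : (i : ℕ) ≤ n - 3 := by
            have h1 := i.isLt
            have h2 : (i : ℕ) ≠ n - 1 := by
              intro hh; exact hil (by rw [hle]; exact Fin.ext (by rw [he]; omega))
            have h3 : (i : ℕ) ≠ n - 2 := by
              intro hh; exact hid (Fin.ext (by rw [hd]; omega))
            omega
          rw [if_pos hi3, hwval i (by omega), hle]
          ring
    · rw [if_neg hle, add_zero]
      by_cases hil : i = l
      · rw [if_pos hil, hil, hdiag l]
      · rw [if_neg hil,
          if_neg (show ¬ ((l : ℕ) = n - 1) by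
            intro h; exact hle (Fin.ext (by rw [he]; omega))),
          hcol i l (by intro h; exact hle (Fin.ext (by rw [he]; omega))) hil]
  have hNeq : N = Z0 * Dt := by
    apply Subtype.ext
    show (N : Matrix (Fin n) (Fin n) ℤ) = _
    calc (N : Matrix (Fin n) (Fin n) ℤ) = CM n ww * tv n d e (w (n - 2)) := coeN
      _ = (Z0 : Matrix (Fin n) (Fin n) ℤ) * (Dt : Matrix (Fin n) (Fin n) ℤ) := by
          rw [coeZ0, coeDt]
      _ = ((Z0 * Dt : SL n) : Matrix (Fin n) (Fin n) ℤ) :=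
          (Matrix.SpecialLinearGroup.coe_mul Z0 Dt).symm
  have WXel : Wd A B ((2 * (n - 2) + 2 * (n - 2)) + (3 * (n - 3) + 1)) Xel :=
    Wd_mul (Wd_UPP w (n - 2) (n - 2) le_rfl) (Wd_TP (n - 3))
  have WDg : Wd A B (1 + 2 * (n - 2)) Dg := Wd_cj Wd_A (n - 2)
  have WDt : Wd A B (1 + 2 * (n - 2)) Dt := Wd_cj (Wd_elA' (w (n - 2))) (n - 2)
  have total := Wd_mul (Wd_mul (Wd_mul (Wd_mul WXel WDg) (Wd_inv WXel)) (Wd_inv WDg)) WDt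
  rw [← hNeq] at total
  exact Wd_mono (by omega) total


def prevF {n : ℕ} (x : Fin n) : Fin n :=
  ⟨if (x : ℕ) = 0 then n - 1 else (x : ℕ) - 1, by have := x.isLt; split_ifs <;> omega⟩

lemma prevF_val_zero {n : ℕ} (x : Fin n) (h : (x : ℕ) = 0) : ((prevF x : Fin n) : ℕ) = n - 1 := by
  show (if (x : ℕ) = 0 then n - 1 else (x : ℕ) - 1) = n - 1
  rw [if_pos h]

lemma prevF_val_pos {n : ℕ} (x : Fin n) (h : (x : ℕ) ≠ 0) : ((prevF x : Fin n) : ℕ) = (x : ℕ) - 1 := by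
  show (if (x : ℕ) = 0 then n - 1 else (x : ℕ) - 1) = (x : ℕ) - 1
  rw [if_neg h]

lemma Bmat_mul_lt' (M : Matrix (Fin n) (Fin n) ℤ) (i j l : Fin n)
    (hj : (j : ℕ) = (i : ℕ) + 1) : (Bmat n * M) i l = M j l := by
  have h : (i : ℕ) + 1 < n := by have := j.isLt; omega
  rw [Bmat_mul_apply_of_lt M i l h]
  exact congrFun (congrArg M (Fin.ext (show (i : ℕ) + 1 = (j : ℕ) by omega))) l

lemma Bmat_mul_last' (M : Matrix (Fin n) (Fin n) ℤ) (i j l : Fin n)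
    (hi : (i : ℕ) = n - 1) (hj : (j : ℕ) = 0) :
    (Bmat n * M) i l = (-1 : ℤ) ^ (n - 1) * M j l := by
  rw [Bmat_mul_apply_last M i l hi]
  exact congrArg (fun x => (-1 : ℤ) ^ (n - 1) * x)
    (congrFun (congrArg M (Fin.ext (show (0 : ℕ) = (j : ℕ) by omega))) l)

lemma mul_Bmat_zero' (M : Matrix (Fin n) (Fin n) ℤ) (a l j : Fin n)
    (hl : (l : ℕ) = 0) (hj : (j : ℕ) = n - 1) :
    (M * Bmat n) a l = (-1 : ℤ) ^ (n - 1) * M a j := by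
  rw [mul_Bmat_apply_zero M a l hl]
  exact congrArg (fun x => (-1 : ℤ) ^ (n - 1) * x)
    (congrArg (M a) (Fin.ext (show n - 1 = (j : ℕ) by omega)))

lemma mul_Bmat_pos' (M : Matrix (Fin n) (Fin n) ℤ) (a l j : Fin n)
    (hl : 0 < (l : ℕ)) (hj : (j : ℕ) = (l : ℕ) - 1) :
    (M * Bmat n) a l = M a j := by
  rw [mul_Bmat_apply_pos M a l hl]
  exact congrArg (M a) (Fin.ext (show (l : ℕ) - 1 = (j : ℕ) by omega))

lemma colstruct_step (hn : 3 ≤ n) (B Y Z : SL n)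
    (hB : (B : Matrix (Fin n) (Fin n) ℤ) = Bmat n) (hZ : B * Z = Y * B) (q : ℕ)
    (hq : q + 1 ≤ n - 1)
    (hdiag : ∀ i : Fin n, (Y : Matrix (Fin n) (Fin n) ℤ) i i = 1)
    (hoff : ∀ i l : Fin n, (l : ℕ) ≠ q → i ≠ l → (Y : Matrix (Fin n) (Fin n) ℤ) i l = 0)
    (hbits : ∀ i l : Fin n, (Y : Matrix (Fin n) (Fin n) ℤ) i l = 0 ∨
      (Y : Matrix (Fin n) (Fin n) ℤ) i l = 1 ∨ (Y : Matrix (Fin n) (Fin n) ℤ) i l = -1) :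
    (∀ i : Fin n, (Z : Matrix (Fin n) (Fin n) ℤ) i i = 1) ∧
    (∀ i l : Fin n, (l : ℕ) ≠ q + 1 → i ≠ l → (Z : Matrix (Fin n) (Fin n) ℤ) i l = 0) ∧
    (∀ i l : Fin n, (Z : Matrix (Fin n) (Fin n) ℤ) i l = 0 ∨
      (Z : Matrix (Fin n) (Fin n) ℤ) i l = 1 ∨ (Z : Matrix (Fin n) (Fin n) ℤ) i l = -1) := by
  have hsq : ((-1 : ℤ) ^ (n - 1)) * ((-1 : ℤ) ^ (n - 1)) = 1 := by
    rw [← mul_pow]; norm_num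
  have E : Bmat n * (Z : Matrix (Fin n) (Fin n) ℤ) = (Y : Matrix (Fin n) (Fin n) ℤ) * Bmat n := by
    rw [← hB]
    calc (B : Matrix (Fin n) (Fin n) ℤ) * ↑Z = ((B * Z : SL n) : Matrix (Fin n) (Fin n) ℤ) :=
          (Matrix.SpecialLinearGroup.coe_mul _ _).symm
      _ = ((Y * B : SL n) : Matrix (Fin n) (Fin n) ℤ) := by rw [hZ]
      _ = (Y : Matrix (Fin n) (Fin n) ℤ) * ↑B := Matrix.SpecialLinearGroup.coe_mul _ _
  have hYB : ∀ (a l : Fin n), ((Y : Matrix (Fin n) (Fin n) ℤ) * Bmat n) a l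
      = (if (l : ℕ) = 0 then (-1 : ℤ) ^ (n - 1) else 1)
        * (Y : Matrix (Fin n) (Fin n) ℤ) a (prevF l) := by
    intro a l
    by_cases hl : (l : ℕ) = 0
    · rw [if_pos hl]
      exact mul_Bmat_zero' _ a l (prevF l) hl (prevF_val_zero l hl)
    · rw [if_neg hl, one_mul]
      exact mul_Bmat_pos' _ a l (prevF l) (by omega) (prevF_val_pos l hl)
  have hmaster : ∀ i' l : Fin n, (Z : Matrix (Fin n) (Fin n) ℤ) i' l =
      ((if (i' : ℕ) = 0 then (-1 : ℤ) ^ (n - 1) else 1) *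
        (if (l : ℕ) = 0 then (-1 : ℤ) ^ (n - 1) else 1))
        * (Y : Matrix (Fin n) (Fin n) ℤ) (prevF i') (prevF l) := by
    intro i' l
    have e := congrFun (congrFun E (prevF i')) l
    by_cases hi0 : (i' : ℕ) = 0
    · rw [Bmat_mul_last' (Z : Matrix (Fin n) (Fin n) ℤ) (prevF i') i' l
        (prevF_val_zero i' hi0) hi0, hYB (prevF i') l] at e
      rw [if_pos hi0]
      calc (Z : Matrix (Fin n) (Fin n) ℤ) i' l
          = ((-1 : ℤ) ^ (n - 1) * (-1 : ℤ) ^ (n - 1)) * (Z : Matrix (Fin n) (Fin n) ℤ) i' l := by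
            rw [hsq, one_mul]
        _ = (-1 : ℤ) ^ (n - 1) * ((-1 : ℤ) ^ (n - 1) * (Z : Matrix (Fin n) (Fin n) ℤ) i' l) := by
            ring
        _ = (-1 : ℤ) ^ (n - 1) * ((if (l : ℕ) = 0 then (-1 : ℤ) ^ (n - 1) else 1) *
              (Y : Matrix (Fin n) (Fin n) ℤ) (prevF i') (prevF l)) := by rw [e]
        _ = _ := by ring
    · rw [Bmat_mul_lt' (Z : Matrix (Fin n) (Fin n) ℤ) (prevF i') i' l
        (by rw [prevF_val_pos i' hi0]; omega), hYB (prevF i') l] at e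
      rw [if_neg hi0, e]
      ring
  have hpm : (-1 : ℤ) ^ (n - 1) = 1 ∨ (-1 : ℤ) ^ (n - 1) = -1 := neg_one_pow_eq_or _ _
  refine ⟨?_, ?_, ?_⟩
  · intro i
    rw [hmaster i i, hdiag (prevF i), mul_one]
    by_cases h : (i : ℕ) = 0
    · rw [if_pos h, hsq]
    · rw [if_neg h]; norm_num
  · intro i l hl hil
    have hYz : (Y : Matrix (Fin n) (Fin n) ℤ) (prevF i) (prevF l) = 0 := by
      apply hoff
      · by_cases h : (l : ℕ) = 0
        · rw [prevF_val_zero l h]; omega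
        · rw [prevF_val_pos l h]; have := l.isLt; omega
      · intro hcontra
        rw [Fin.ext_iff] at hcontra
        have hil2 : (i : ℕ) ≠ (l : ℕ) := fun hh => hil (Fin.ext hh)
        have hi' := i.isLt
        have hl' := l.isLt
        by_cases h1 : (i : ℕ) = 0 <;> by_cases h2 : (l : ℕ) = 0
        · omega
        · rw [prevF_val_zero i h1, prevF_val_pos l h2] at hcontra; omega
        · rw [prevF_val_pos i h1, prevF_val_zero l h2] at hcontra; omega
        · rw [prevF_val_pos i h1, prevF_val_pos l h2] at hcontra; omega
    rw [hmaster i l, hYz, mul_zero]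
  · intro i l
    rw [hmaster i l]
    have hs1 : (if (i : ℕ) = 0 then (-1 : ℤ) ^ (n - 1) else 1) = 1 ∨
        (if (i : ℕ) = 0 then (-1 : ℤ) ^ (n - 1) else 1) = -1 := by
      split_ifs
      · exact hpm
      · left; rfl
    have hs2 : (if (l : ℕ) = 0 then (-1 : ℤ) ^ (n - 1) else 1) = 1 ∨
        (if (l : ℕ) = 0 then (-1 : ℤ) ^ (n - 1) else 1) = -1 := by
      split_ifs
      · exact hpm
      · left; rfl
    rcases hs1 with h1 | h1 <;> rcases hs2 with h2 | h2 <;> rw [h1, h2] <;>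
      rcases hbits (prevF i) (prevF l) with h3 | h3 | h3 <;> rw [h3] <;> norm_num

lemma colstruct_conj (hn : 3 ≤ n) (B M : SL n)
    (hB : (B : Matrix (Fin n) (Fin n) ℤ) = Bmat n) (c : Fin n)
    (hdiag : ∀ i : Fin n, (M : Matrix (Fin n) (Fin n) ℤ) i i = 1)
    (hoff : ∀ i l : Fin n, (l : ℕ) ≠ (c : ℕ) → i ≠ l → (M : Matrix (Fin n) (Fin n) ℤ) i l = 0)
    (hbits : ∀ i l : Fin n, (M : Matrix (Fin n) (Fin n) ℤ) i l = 0 ∨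
      (M : Matrix (Fin n) (Fin n) ℤ) i l = 1 ∨ (M : Matrix (Fin n) (Fin n) ℤ) i l = -1) :
    ∀ s : ℕ, (hs : (c : ℕ) + s ≤ n - 1) →
      (∀ i : Fin n, ((cj B M s : SL n) : Matrix (Fin n) (Fin n) ℤ) i i = 1) ∧
      (∀ i l : Fin n, (l : ℕ) ≠ (c : ℕ) + s → i ≠ l →
        ((cj B M s : SL n) : Matrix (Fin n) (Fin n) ℤ) i l = 0) ∧
      (∀ i l : Fin n, ((cj B M s : SL n) : Matrix (Fin n) (Fin n) ℤ) i l = 0 ∨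
        ((cj B M s : SL n) : Matrix (Fin n) (Fin n) ℤ) i l = 1 ∨
        ((cj B M s : SL n) : Matrix (Fin n) (Fin n) ℤ) i l = -1) := by
  intro s
  induction s with
  | zero =>
    intro _
    rw [cj_zero]
    exact ⟨hdiag, fun i l hl => hoff i l (by omega), hbits⟩
  | succ s ih =>
    intro hs
    obtain ⟨d1, d2, d3⟩ := ih (by omega)
    have hZeq : B * cj B M (s + 1) = cj B M s * B := by rw [cj_succ]; group
    have := colstruct_step hn B (cj B M s) (cj B M (s + 1)) hB hZeq ((c : ℕ) + s)
      (by omega) d1 d2 d3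
    obtain ⟨e1, e2, e3⟩ := this
    exact ⟨e1, fun i l hl => e2 i l (by omega), e3⟩

end BCMaux

/-- A bit-column matrix in SL_n(ℤ) is a product of at most 49n elements of
{A, A⁻¹, B, B⁻¹}, and of at most 48n such elements if the column differing from the
identity is the final column. -/
theorem bitColumnMatrix_short_word (n : ℕ) (hn : 3 ≤ n)
    (A B M : Matrix.SpecialLinearGroup (Fin n) ℤ)
    (hA : (A : Matrix (Fin n) (Fin n) ℤ) = Amat n)
    (hB : (B : Matrix (Fin n) (Fin n) ℤ) = Bmat n)
    (hM : IsBitColumnMatrix (M : Matrix (Fin n) (Fin n) ℤ)) :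
    (∃ l : List (Matrix.SpecialLinearGroup (Fin n) ℤ),
        l.length ≤ 49 * n ∧
        (∀ x ∈ l, x = A ∨ x = A⁻¹ ∨ x = B ∨ x = B⁻¹) ∧
        l.prod = M) ∧
    ((∀ i j : Fin n, (j : ℕ) ≠ n - 1 → i ≠ j → (M : Matrix (Fin n) (Fin n) ℤ) i j = 0) →
      ∃ l : List (Matrix.SpecialLinearGroup (Fin n) ℤ),
        l.length ≤ 48 * n ∧
        (∀ x ∈ l, x = A ∨ x = A⁻¹ ∨ x = B ∨ x = B⁻¹) ∧
        l.prod = M) := by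
  obtain ⟨⟨hdiag, c, hcolc⟩, hbits⟩ := hM
  constructor
  · have hcl := c.isLt
    set s := n - 1 - (c : ℕ) with hs_def
    have hcs : (c : ℕ) + s ≤ n - 1 := by omega
    obtain ⟨d1, d2, d3⟩ := BCMaux.colstruct_conj hn B M hB c hdiag
      (fun i l hl hil => hcolc i l (fun hh => hl (by rw [hh])) hil) hbits s hcs
    have hcol' : ∀ i l : Fin n, (l : ℕ) ≠ n - 1 → i ≠ l →
        ((BCMaux.cj B M s : Matrix.SpecialLinearGroup (Fin n) ℤ) :
          Matrix (Fin n) (Fin n) ℤ) i l = 0 :=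
      fun i l hl hil => d2 i l (by omega) hil
    have hW := BCMaux.core hn A B (BCMaux.cj B M s) hA hB d1 hcol' d3
    have hMeq : M = B ^ s * BCMaux.cj B M s * (B ^ s)⁻¹ := by
      unfold BCMaux.cj; group
    have htot := BCMaux.Wd_mul (BCMaux.Wd_mul (BCMaux.Wd_Bpow (A := A) s) hW)
      (BCMaux.Wd_Bpow_inv (A := A) s)
    rw [← hMeq] at htot
    exact BCMaux.Wd_mono (by omega) htot
  · intro hlast
    exact BCMaux.Wd_mono (by omega) (BCMaux.core hn A B M hA hB hdiag hlast hbits)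
end

section
/- Let n ≥ 3 and let s_2, …, s_{n−1} and t_2, …, t_{n−2} be integers. Let N = N(s,t) ∈ SL_n(ℤ). Then N · e_{1,2} · N⁻¹ = R_m, where the sequence m = (m_2, …, m_n) is defined recursively by m_2 = 1, m_3 = s_2, and m_i = m_{i−1}·s_{i−1} + m_{i−2}·t_{i−2} for 4 ≤ i ≤ n. -/
/-!
Write `E = 1 + e₁ e₂ᵀ`. The first column of `N` is `e₁`, so `N E N⁻¹ = 1 + e₁ r` with
`r = e₂ᵀ N⁻¹`, while `R_m = 1 + e₁ r'` with `r' = (0, m₂, …, mₙ)`; it therefore suffices that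
`r' N = e₂ᵀ`. The only nonzero off-diagonal entries of `N` are `-s_i` at `(i, i+1)` and `-t_i` at
`(i, i+2)` for `i ≥ 2`, so the `j`-th coordinate of `r' N` is
`m_j - m_{j-1} s_{j-1} - m_{j-2} t_{j-2}` (terms with an index below 2 dropped): this is `m₂ = 1`
for `j = 2`, `m₃ - m₂ s₂ = 0` for `j = 3`, and `0` for `j ≥ 4` by the recursion.
-/

/-- The elementary matrix e_{1,2} (zero-indexed (0,1)): 1's on the diagonal,
1 in the (1,2) entry, and 0's elsewhere. -/
def E12mat (n : ℕ) : Matrix (Fin n) (Fin n) ℤ :=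
  Matrix.of fun i j => if i = j then 1 else if (i : ℕ) = 0 ∧ (j : ℕ) = 1 then 1 else 0

/-- The matrix N(s,t): upper triangular with 1's on the diagonal, entry (i, i+1) equal
to −s_i for 2 ≤ i ≤ n−1 and entry (i, i+2) equal to −t_i for 2 ≤ i ≤ n−2 (one-indexed),
and all other entries 0. -/
def Nmat (n : ℕ) (s t : ℕ → ℤ) : Matrix (Fin n) (Fin n) ℤ :=
  Matrix.of fun i j =>
    if i = j then 1
    else if (j : ℕ) = (i : ℕ) + 1 ∧ 1 ≤ (i : ℕ) then -s ((i : ℕ) + 1)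
    else if (j : ℕ) = (i : ℕ) + 2 ∧ 1 ≤ (i : ℕ) then -t ((i : ℕ) + 1)
    else 0

/-- The row matrix R_m: agrees with the identity except in the first row, which is
(1, m_2, m_3, …, m_n). -/
def Rmat (n : ℕ) (m : ℕ → ℤ) : Matrix (Fin n) (Fin n) ℤ :=
  Matrix.of fun i j => if i = j then 1 else if (i : ℕ) = 0 then m ((j : ℕ) + 1) else 0

open Matrix

lemma Nmat_apply (n : ℕ) (s t : ℕ → ℤ) (i j : Fin n) :
    Nmat n s t i j = (if (i : ℕ) = j then 1 else 0)
      - (if (j : ℕ) = i + 1 ∧ 1 ≤ (i : ℕ) then s (i + 1) else 0)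
      - (if (j : ℕ) = i + 2 ∧ 1 ≤ (i : ℕ) then t (i + 1) else 0) := by
  simp only [Nmat, Matrix.of_apply, Fin.ext_iff]
  split_ifs <;> omega

lemma sum_range_ite_eq_add {M : Type*} [AddCommMonoid M] {n j : ℕ} (hj : j < n) (d : ℕ)
    (f : ℕ → M) :
    ∑ k ∈ Finset.range n, (if j = k + d ∧ 1 ≤ k then f k else 0)
      = if d + 1 ≤ j then f (j - d) else 0 := by
  rw [Finset.sum_eq_single (j - d)]
  · split_ifs <;> first | rfl | omega
  · intro k _ hk
    rw [if_neg (by omega)]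
  · intro hmem
    rw [Finset.mem_range] at hmem
    rw [if_neg (by omega)]

lemma vecMul_Nmat_apply (n : ℕ) (s t w : ℕ → ℤ) (j : Fin n) :
    ((fun k : Fin n => w k) ᵥ* Nmat n s t) j
      = w j - (if 2 ≤ (j : ℕ) then w (j - 1) * s j else 0)
        - (if 3 ≤ (j : ℕ) then w (j - 2) * t (j - 1) else 0) := by
  simp only [Matrix.vecMul, dotProduct, Nmat_apply, mul_sub, mul_ite, mul_one, mul_zero,
    Finset.sum_sub_distrib]
  simp only [Fin.sum_univ_eq_sum_range (fun k => if k = (j : ℕ) then w k else 0),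
    Fin.sum_univ_eq_sum_range (fun k => if (j : ℕ) = k + 1 ∧ 1 ≤ k then w k * s (k + 1) else 0),
    Fin.sum_univ_eq_sum_range (fun k => if (j : ℕ) = k + 2 ∧ 1 ≤ k then w k * t (k + 1) else 0),
    Finset.sum_ite_eq', Finset.mem_range, j.isLt, if_true, sum_range_ite_eq_add j.isLt]
  grind

lemma Nmat_mulVec_single_zero (n : ℕ) [NeZero n] (s t : ℕ → ℤ) :
    Nmat n s t *ᵥ Pi.single 0 1 = Pi.single 0 1 := by
  ext i
  by_cases hi : i = 0 <;> simp [Nmat, hi]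

lemma E12mat_eq (n : ℕ) [NeZero n] (hn : 1 < n) :
    E12mat n = 1 + vecMulVec (Pi.single 0 1) (Pi.single ⟨1, hn⟩ 1) := by
  ext i j
  simp only [E12mat, of_apply, Matrix.add_apply, one_apply, vecMulVec_apply, Pi.single_apply,
    Fin.ext_iff, Fin.val_zero, mul_ite, mul_one, mul_zero]
  split_ifs <;> omega

lemma Rmat_eq (n : ℕ) [NeZero n] (m : ℕ → ℤ) :
    Rmat n m = 1 + vecMulVec (Pi.single 0 1)
      (fun k : Fin n => if (k : ℕ) = 0 then 0 else m (k + 1)) := by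
  ext i j
  simp only [Rmat, of_apply, Matrix.add_apply, one_apply, vecMulVec_apply, Pi.single_apply,
    Fin.ext_iff, Fin.val_zero, ite_mul, one_mul, zero_mul]
  split_ifs <;> omega

lemma vecMul_Nmat_eq_single_one (n : ℕ) (hn : 1 < n) (s t m : ℕ → ℤ)
    (hm2 : m 2 = 1) (hm3 : m 3 = s 2)
    (hrec : ∀ i, 4 ≤ i → i ≤ n → m i = m (i - 1) * s (i - 1) + m (i - 2) * t (i - 2)) :
    (fun k : Fin n => if (k : ℕ) = 0 then 0 else m (k + 1)) ᵥ* Nmat n s t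
      = Pi.single ⟨1, hn⟩ 1 := by
  ext ⟨j, hj⟩
  rw [vecMul_Nmat_apply n s t (fun k => if k = 0 then 0 else m (k + 1))]
  simp only [Pi.single_apply, Fin.mk.injEq]
  match j, hj with
  | 0, _ => simp
  | 1, _ => simp [hm2]
  | 2, _ => simp [hm3, hm2]
  | j + 3, hj =>
    have hr : m (j + 4) = m (j + 3) * s (j + 3) + m (j + 2) * t (j + 2) :=
      hrec (j + 4) (by omega) (by omega)
    simp [hr]

/-- N · e_{1,2} · N⁻¹ = R_m where m_2 = 1, m_3 = s_2 and
m_i = m_{i−1} s_{i−1} + m_{i−2} t_{i−2} for 4 ≤ i ≤ n. -/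
theorem N_conj_e12_eq_Rm (n : ℕ) (hn : 3 ≤ n) (s t m : ℕ → ℤ)
    (hm2 : m 2 = 1) (hm3 : m 3 = s 2)
    (hrec : ∀ i, 4 ≤ i → i ≤ n → m i = m (i - 1) * s (i - 1) + m (i - 2) * t (i - 2))
    (N E R : Matrix.SpecialLinearGroup (Fin n) ℤ)
    (hN : (N : Matrix (Fin n) (Fin n) ℤ) = Nmat n s t)
    (hE : (E : Matrix (Fin n) (Fin n) ℤ) = E12mat n)
    (hR : (R : Matrix (Fin n) (Fin n) ℤ) = Rmat n m) :
    N * E * N⁻¹ = R := by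
  have : NeZero n := ⟨by omega⟩
  have hn1 : 1 < n := by omega
  have hcomm : (N : Matrix (Fin n) (Fin n) ℤ) * E = R * N := by
    rw [hN, hE, hR]
    simp only [E12mat_eq n hn1, Rmat_eq, mul_add, add_mul, mul_one, one_mul, mul_vecMulVec,
      vecMulVec_mul, Nmat_mulVec_single_zero, vecMul_Nmat_eq_single_one n hn1 s t m hm2 hm3 hrec]
  rw [show N * E = R * N from Subtype.ext hcomm, mul_inv_cancel_right]
end

section
/- Let n ≥ 3 and let m_2 = 1 and m_3, …, m_n ∈ {0, ±1, ±2} be integers satisfying one of the two conditions: (i) m_{2i} = 1 for every index 2i with 2 ≤ 2i ≤ n, or (ii) m_{2i+1} = 1 for every index 2i+1 with 3 ≤ 2i+1 ≤ n. Then there exist s_2, …, s_{n−1} ∈ {0, ±1, ±2} and t_2, …, t_{n−2} ∈ {0, 1} such that m_3 = s_2 and m_i = m_{i−1}·s_{i−1} + m_{i−2}·t_{i−2} for all 4 ≤ i ≤ n. -/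
/-!
Each equation `m i = m (i-1) * s (i-1) + m (i-2) * t (i-2)` involves its own pair of unknowns,
so the equations can be solved one at a time. If `i - 1` has the parity on which `m` is `1`,
take `s (i-1) = m i` and `t (i-2) = 0`; otherwise `i` and `i - 2` have that parity (or
`i - 2 = 2`), so `m i = m (i-2) = 1` and `s (i-1) = 0`, `t (i-2) = 1` works.
-/

lemma exists_parity_eq_one {n : ℕ} {m : ℕ → ℤ}
    (hcond : (∀ i : ℕ, 2 ≤ 2 * i → 2 * i ≤ n → m (2 * i) = 1) ∨
             (∀ i : ℕ, 3 ≤ 2 * i + 1 → 2 * i + 1 ≤ n → m (2 * i + 1) = 1)) :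
    ∃ r < 2, ∀ i, 3 ≤ i → i ≤ n → i % 2 = r → m i = 1 := by
  rcases hcond with h | h
  · refine ⟨0, by norm_num, fun i hi hin hr => ?_⟩
    simpa [show 2 * (i / 2) = i by omega] using h (i / 2) (by omega) (by omega)
  · refine ⟨1, by norm_num, fun i hi hin hr => ?_⟩
    simpa [show 2 * (i / 2) + 1 = i by omega] using h (i / 2) (by omega) (by omega)

lemma eq_one_prev_or_eq_one_two_apart {n r : ℕ} {m : ℕ → ℤ} (hm2 : m 2 = 1) (hr2 : r < 2)
    (hr : ∀ i, 3 ≤ i → i ≤ n → i % 2 = r → m i = 1) {i : ℕ} (hi : 4 ≤ i) (hin : i ≤ n) :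
    m (i - 1) = 1 ∨ m (i - 2) = 1 ∧ m i = 1 := by
  by_cases hpar : i % 2 = r
  · refine .inr ⟨?_, hr i (by omega) hin hpar⟩
    rcases Nat.lt_or_ge (i - 2) 3 with hsmall | hbig
    · rwa [show i - 2 = 2 by omega]
    · exact hr (i - 2) hbig (by omega) (by omega)
  · exact .inl (hr (i - 1) (by omega) (by omega) (by omega))

lemma exists_coeffs_of_eq_one {x y z : ℤ} (hz : z ∈ ({0, 1, -1, 2, -2} : Set ℤ))
    (h : y = 1 ∨ x = 1 ∧ z = 1) :
    ∃ a ∈ ({0, 1, -1, 2, -2} : Set ℤ), ∃ b ∈ ({0, 1} : Set ℤ), z = y * a + x * b := by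
  rcases h with hy | ⟨hx, hz1⟩
  · exact ⟨z, hz, 0, by simp, by simp [hy]⟩
  · exact ⟨0, by simp, 1, by simp, by simp [hx, hz1]⟩

lemma exists_s_t_of_forall_exists_coeffs {n : ℕ} {m : ℕ → ℤ}
    (hm3 : m 3 ∈ ({0, 1, -1, 2, -2} : Set ℤ))
    (h : ∀ i, 4 ≤ i → i ≤ n → ∃ a ∈ ({0, 1, -1, 2, -2} : Set ℤ), ∃ b ∈ ({0, 1} : Set ℤ),
      m i = m (i - 1) * a + m (i - 2) * b) :
    ∃ s t : ℕ → ℤ,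
      (∀ i, 2 ≤ i → i ≤ n - 1 → s i ∈ ({0, 1, -1, 2, -2} : Set ℤ)) ∧
      (∀ i, 2 ≤ i → i ≤ n - 2 → t i ∈ ({0, 1} : Set ℤ)) ∧
      m 3 = s 2 ∧
      (∀ i, 4 ≤ i → i ≤ n → m i = m (i - 1) * s (i - 1) + m (i - 2) * t (i - 2)) := by
  have h' : ∀ i, ∃ c : ℤ × ℤ, 4 ≤ i → i ≤ n →
      c.1 ∈ ({0, 1, -1, 2, -2} : Set ℤ) ∧ c.2 ∈ ({0, 1} : Set ℤ) ∧
      m i = m (i - 1) * c.1 + m (i - 2) * c.2 := by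
    intro i
    by_cases hi : 4 ≤ i ∧ i ≤ n
    · obtain ⟨a, ha, b, hb, hab⟩ := h i hi.1 hi.2
      exact ⟨(a, b), fun _ _ => ⟨ha, hb, hab⟩⟩
    · exact ⟨0, fun h4 hn => absurd ⟨h4, hn⟩ hi⟩
  choose c hc using h'
  refine ⟨fun j => if j = 2 then m 3 else (c (j + 1)).1, fun j => (c (j + 2)).2,
    fun i hi hin => ?_, fun i hi hin => (hc (i + 2) (by omega) (by omega)).2.1, rfl,
    fun i hi hin => ?_⟩
  · by_cases h2 : i = 2
    · simpa [h2] using hm3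
    · simpa [h2] using (hc (i + 1) (by omega) (by omega)).1
  · obtain ⟨i, rfl⟩ : ∃ k, i = k + 4 := ⟨i - 4, by omega⟩
    simpa using (hc (i + 4) (by omega) hin).2.2

/-- If m_2 = 1 and m_3, …, m_n ∈ {0, ±1, ±2} satisfy either m_{2i} = 1 for all i or
m_{2i+1} = 1 for all i, then there exist s_2, …, s_{n−1} ∈ {0, ±1, ±2} and
t_2, …, t_{n−2} ∈ {0, 1} with m_3 = s_2 and
m_i = m_{i−1} s_{i−1} + m_{i−2} t_{i−2} for 4 ≤ i ≤ n. -/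
theorem exists_s_t_solving_recursion (n : ℕ) (hn : 3 ≤ n) (m : ℕ → ℤ)
    (hm2 : m 2 = 1)
    (hmval : ∀ i, 3 ≤ i → i ≤ n → m i ∈ ({0, 1, -1, 2, -2} : Set ℤ))
    (hcond : (∀ i : ℕ, 2 ≤ 2 * i → 2 * i ≤ n → m (2 * i) = 1) ∨
             (∀ i : ℕ, 3 ≤ 2 * i + 1 → 2 * i + 1 ≤ n → m (2 * i + 1) = 1)) :
    ∃ s t : ℕ → ℤ,
      (∀ i, 2 ≤ i → i ≤ n - 1 → s i ∈ ({0, 1, -1, 2, -2} : Set ℤ)) ∧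
      (∀ i, 2 ≤ i → i ≤ n - 2 → t i ∈ ({0, 1} : Set ℤ)) ∧
      m 3 = s 2 ∧
      (∀ i, 4 ≤ i → i ≤ n → m i = m (i - 1) * s (i - 1) + m (i - 2) * t (i - 2)) := by
  obtain ⟨r, hr2, hr⟩ := exists_parity_eq_one hcond
  refine exists_s_t_of_forall_exists_coeffs (hmval 3 le_rfl hn) fun i hi hin => ?_
  exact exists_coeffs_of_eq_one (hmval i (by omega) hin)
    (eq_one_prev_or_eq_one_two_apart hm2 hr2 hr hi hin)
end

section
/- Let n ≥ 3 and let m = (m_2, …, m_n) with m_2 = 0 and m_3, …, m_n ∈ {0, ±1}. Then there exist integer parameters s_2, …, s_{n−1}, t_2, …, t_{n−2} and s′_2, …, s′_{n−1}, t′_2, …, t′_{n−2}, all lying in {0, ±1, ±2}, such that, setting N_1 = N(s,t) and N_2 = N(s′,t′), one has R_m = N_1 · e_{1,2} · N_1⁻¹ · N_2 · e_{1,2}⁻¹ · N_2⁻¹. -/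
namespace RmAux

open Finset

def Fvmat (n : ℕ) (c : ℕ → ℤ) : Matrix (Fin n) (Fin n) ℤ :=
  Matrix.of fun i j => if i = j then 1 else if (i : ℕ) = 0 then c (j : ℕ) else 0

def Gmat (n : ℕ) (c : ℕ → ℤ) : Matrix (Fin n) (Fin n) ℤ :=
  Matrix.of fun i j => if (i : ℕ) = 0 ∧ ¬(j : ℕ) = 0 then c (j : ℕ) else 0

lemma Fvmat_eq (n : ℕ) (c : ℕ → ℤ) : Fvmat n c = 1 + Gmat n c := by
  ext i j
  simp only [Fvmat, Gmat, Matrix.add_apply, Matrix.one_apply, Matrix.of_apply]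
  by_cases h : i = j
  · subst h
    rw [if_pos rfl, if_neg (show ¬((i : ℕ) = 0 ∧ ¬(i : ℕ) = 0) by omega)]
    simp
  · rw [if_neg h, if_neg h]
    have hij : ¬ (i : ℕ) = (j : ℕ) := fun hc => h (Fin.ext hc)
    split_ifs with h1 h2 h2 <;> simp_all <;> omega

lemma Fvmat_zero (n : ℕ) : Fvmat n (fun _ => 0) = 1 := by
  ext i j
  simp only [Fvmat, Matrix.one_apply, Matrix.of_apply]
  split_ifs <;> rfl

lemma Gmat_mul_Gmat (n : ℕ) (c d : ℕ → ℤ) : Gmat n c * Gmat n d = 0 := by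
  ext i j
  rw [Matrix.mul_apply]
  refine Finset.sum_eq_zero fun k _ => ?_
  simp only [Gmat, Matrix.of_apply, Matrix.zero_apply]
  split_ifs <;> first | omega | ring

lemma Gmat_add (n : ℕ) (c d : ℕ → ℤ) :
    Gmat n c + Gmat n d = Gmat n (fun j => c j + d j) := by
  ext i j
  simp only [Gmat, Matrix.add_apply, Matrix.of_apply]
  split_ifs <;> ring

lemma Fvmat_mul (n : ℕ) (c d : ℕ → ℤ) :
    Fvmat n c * Fvmat n d = Fvmat n (fun j => c j + d j) := by
  rw [Fvmat_eq, Fvmat_eq, Fvmat_eq]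
  have h : (1 + Gmat n c) * (1 + Gmat n d)
      = 1 + (Gmat n c + Gmat n d) + Gmat n c * Gmat n d := by noncomm_ring
  rw [h, Gmat_mul_Gmat, add_zero, Gmat_add]

lemma Fvmat_det (n : ℕ) (c : ℕ → ℤ) : (Fvmat n c).det = 1 := by
  have h : (Fvmat n c).BlockTriangular id := by
    intro i j hij
    simp only [id_eq] at hij
    simp only [Fvmat, Matrix.of_apply]
    have h1 : ¬ i = j := by
      intro hc; subst hc; exact lt_irrefl _ hij
    have h2 : ¬ (i : ℕ) = 0 := by
      have := hij; omega
    rw [if_neg h1, if_neg h2]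
  rw [Matrix.det_of_upperTriangular h]
  simp [Fvmat]

lemma E12_eq (n : ℕ) : E12mat n = Fvmat n (fun j => if j = 1 then 1 else 0) := by
  ext i j
  simp only [E12mat, Fvmat, Matrix.of_apply]
  split_ifs <;> first | rfl | omega

lemma sum_shift (n d j : ℕ) (f : ℕ → ℤ) (hj : j < n) :
    ∑ k ∈ Finset.range n, (if j = k + d ∧ 1 ≤ k then f k else 0)
      = if d + 1 ≤ j then f (j - d) else 0 := by
  by_cases h : d + 1 ≤ j
  · rw [if_pos h]
    rw [Finset.sum_congr rfl (fun k _ => show (if j = k + d ∧ 1 ≤ k then f k else 0)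
        = (if k = j - d then f k else 0) by split_ifs <;> first | rfl | omega)]
    rw [Finset.sum_ite_eq' (Finset.range n) (j - d) f, if_pos (Finset.mem_range.2 (by omega))]
  · rw [if_neg h]
    exact Finset.sum_eq_zero fun k _ => by rw [if_neg (by omega)]


lemma Nmat_mul_Gmat (n : ℕ) (hn : 0 < n) (s t c : ℕ → ℤ) :
    Nmat n s t * Gmat n c = Gmat n c := by
  ext i j
  rw [Matrix.mul_apply]
  rw [Finset.sum_eq_single (⟨0, hn⟩ : Fin n)]
  · simp only [Nmat, Gmat, Matrix.of_apply]
    by_cases h : (i : ℕ) = 0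
    · have : i = ⟨0, hn⟩ := Fin.ext h
      subst this
      rw [if_pos rfl, one_mul]
      simp
    · have h1 : ¬ i = ⟨0, hn⟩ := fun hc => h (by rw [hc])
      rw [if_neg h1]
      have h2 : ¬((0 : ℕ) = (i : ℕ) + 1 ∧ 1 ≤ (i : ℕ)) := by omega
      have h3 : ¬((0 : ℕ) = (i : ℕ) + 2 ∧ 1 ≤ (i : ℕ)) := by omega
      rw [if_neg h2, if_neg h3, zero_mul, if_neg (by omega : ¬((i:ℕ) = 0 ∧ ¬(j:ℕ) = 0))]
  · intro k _ hk
    have : ¬ (k : ℕ) = 0 := fun hc => hk (Fin.ext hc)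
    simp only [Gmat, Matrix.of_apply]
    rw [if_neg (by omega : ¬((k:ℕ) = 0 ∧ ¬(j:ℕ) = 0)), mul_zero]
  · intro h
    exact absurd (Finset.mem_univ _) h

lemma rowsum (n : ℕ) (s t a : ℕ → ℤ) (ha0 : a 0 = 0) (ha1 : a 1 = 1)
    (ha2 : 2 < n → a 2 = s 2 * a 1)
    (hrec : ∀ j, 3 ≤ j → j < n → a j = s j * a (j-1) + t (j-1) * a (j-2))
    (j : Fin n) :
    ∑ k : Fin n, a (k : ℕ) * Nmat n s t k j = if (j : ℕ) = 1 then 1 else 0 := by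
  have hstep : ∀ k : Fin n, a (k : ℕ) * Nmat n s t k j =
      (if (k : ℕ) = (j : ℕ) then a (k : ℕ) else 0)
      + (if (j : ℕ) = (k : ℕ) + 1 ∧ 1 ≤ (k : ℕ) then a (k : ℕ) * -s ((k : ℕ) + 1) else 0)
      + (if (j : ℕ) = (k : ℕ) + 2 ∧ 1 ≤ (k : ℕ) then a (k : ℕ) * -t ((k : ℕ) + 1) else 0) := by
    intro k
    simp only [Nmat, Matrix.of_apply, Fin.ext_iff]
    split_ifs <;> (first | ring1 | (exfalso; omega))
  rw [Finset.sum_congr rfl (fun k _ => hstep k)]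
  rw [Finset.sum_add_distrib, Finset.sum_add_distrib]
  have e1 : ∑ k : Fin n, (if (k : ℕ) = (j : ℕ) then a (k : ℕ) else 0) = a (j : ℕ) := by
    rw [Fin.sum_univ_eq_sum_range (fun k => if k = (j : ℕ) then a k else 0) n]
    rw [Finset.sum_ite_eq' (Finset.range n) ((j : ℕ)) a, if_pos (Finset.mem_range.2 j.isLt)]
  have e2 : ∑ k : Fin n, (if (j : ℕ) = (k : ℕ) + 1 ∧ 1 ≤ (k : ℕ)
      then a (k : ℕ) * -s ((k : ℕ) + 1) else 0)
      = if 2 ≤ (j : ℕ) then a ((j : ℕ) - 1) * -s ((j : ℕ) - 1 + 1) else 0 := by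
    rw [Fin.sum_univ_eq_sum_range
      (fun k => if (j : ℕ) = k + 1 ∧ 1 ≤ k then a k * -s (k + 1) else 0) n]
    exact sum_shift n 1 (j : ℕ) (fun k => a k * -s (k + 1)) j.isLt
  have e3 : ∑ k : Fin n, (if (j : ℕ) = (k : ℕ) + 2 ∧ 1 ≤ (k : ℕ)
      then a (k : ℕ) * -t ((k : ℕ) + 1) else 0)
      = if 3 ≤ (j : ℕ) then a ((j : ℕ) - 2) * -t ((j : ℕ) - 2 + 1) else 0 := by
    rw [Fin.sum_univ_eq_sum_range
      (fun k => if (j : ℕ) = k + 2 ∧ 1 ≤ k then a k * -t (k + 1) else 0) n]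
    exact sum_shift n 2 (j : ℕ) (fun k => a k * -t (k + 1)) j.isLt
  rw [e1, e2, e3]
  have hjn : (j : ℕ) < n := j.isLt
  rcases (show (j : ℕ) = 0 ∨ (j : ℕ) = 1 ∨ (j : ℕ) = 2 ∨ 3 ≤ (j : ℕ) by omega)
    with h | h | h | h
  · rw [h]; norm_num; exact ha0
  · rw [h]; norm_num; exact ha1
  · rw [h]
    norm_num
    have := ha2 (by omega)
    linear_combination this
  · rw [if_pos (by omega), if_pos (by omega), if_neg (by omega)]
    have h1 : (j : ℕ) - 1 + 1 = (j : ℕ) := by omega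
    have h2 : (j : ℕ) - 2 + 1 = (j : ℕ) - 1 := by omega
    rw [h1, h2]
    linear_combination hrec (j : ℕ) h hjn

lemma Gmat_mul_Nmat (n : ℕ) (s t a : ℕ → ℤ) (ha0 : a 0 = 0) (ha1 : a 1 = 1)
    (ha2 : 2 < n → a 2 = s 2 * a 1)
    (hrec : ∀ j, 3 ≤ j → j < n → a j = s j * a (j-1) + t (j-1) * a (j-2)) :
    Gmat n a * Nmat n s t = Gmat n (fun j => if j = 1 then 1 else 0) := by
  ext i j
  rw [Matrix.mul_apply]
  by_cases hi : (i : ℕ) = 0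
  · have h1 : ∀ k : Fin n, Gmat n a i k * Nmat n s t k j
        = a (k : ℕ) * Nmat n s t k j := by
      intro k
      simp only [Gmat, Matrix.of_apply]
      by_cases hk : (k : ℕ) = 0
      · rw [if_neg (by omega : ¬((i:ℕ) = 0 ∧ ¬(k:ℕ) = 0))]
        simp [hk, ha0]
      · rw [if_pos (show (i:ℕ) = 0 ∧ ¬(k:ℕ) = 0 from ⟨hi, hk⟩)]
    rw [Finset.sum_congr rfl (fun k _ => h1 k)]
    rw [rowsum n s t a ha0 ha1 ha2 hrec j]
    simp only [Gmat, Matrix.of_apply]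
    by_cases hj : (j : ℕ) = 0
    · rw [if_neg (by omega : ¬((i:ℕ) = 0 ∧ ¬(j:ℕ) = 0)), if_neg (by omega)]
    · rw [if_pos (show (i:ℕ) = 0 ∧ ¬(j:ℕ) = 0 from ⟨hi, hj⟩)]
  · rw [Finset.sum_eq_zero, eq_comm]
    · simp only [Gmat, Matrix.of_apply]
      rw [if_neg (by omega : ¬((i:ℕ) = 0 ∧ ¬(j:ℕ) = 0))]
    · intro k _
      simp only [Gmat, Matrix.of_apply]
      rw [if_neg (by omega : ¬((i:ℕ) = 0 ∧ ¬(k:ℕ) = 0)), zero_mul]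

lemma NE_eq (n : ℕ) (hn : 0 < n) (s t a : ℕ → ℤ) (ha0 : a 0 = 0) (ha1 : a 1 = 1)
    (ha2 : 2 < n → a 2 = s 2 * a 1)
    (hrec : ∀ j, 3 ≤ j → j < n → a j = s j * a (j-1) + t (j-1) * a (j-2)) :
    Nmat n s t * E12mat n = Fvmat n a * Nmat n s t := by
  rw [E12_eq, Fvmat_eq, Fvmat_eq, mul_add, mul_one, add_mul, one_mul]
  rw [Nmat_mul_Gmat n hn, Gmat_mul_Nmat n s t a ha0 ha1 ha2 hrec]

def stepPair (p : ℤ × ℤ) (mv : ℤ) : ℤ × ℤ :=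
  if mv = 1 then (if p.1 = 2 then (3, 2) else (2, 1))
  else if mv = -1 then (if p.2 = 2 then (2, 3) else (1, 2))
  else (1, 1)

def pairSeq (m : ℕ → ℤ) : ℕ → ℤ × ℤ
  | 0 => (0, 0)
  | 1 => (1, 1)
  | (j+2) => stepPair (pairSeq m (j+1)) (m (j+3))

def Pgood (p : ℤ × ℤ) : Prop :=
  p = (1,1) ∨ p = (2,1) ∨ p = (3,2) ∨ p = (1,2) ∨ p = (2,3)

lemma Pgood_fst {p : ℤ × ℤ} (h : Pgood p) : p.1 = 1 ∨ p.1 = 2 ∨ p.1 = 3 := by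
  rcases h with rfl|rfl|rfl|rfl|rfl <;> norm_num

lemma Pgood_snd {p : ℤ × ℤ} (h : Pgood p) : p.2 = 1 ∨ p.2 = 2 ∨ p.2 = 3 := by
  rcases h with rfl|rfl|rfl|rfl|rfl <;> norm_num

lemma step_mem (p : ℤ × ℤ) (mv : ℤ) (hp : Pgood p) (hmv : mv = 0 ∨ mv = 1 ∨ mv = -1) :
    Pgood (stepPair p mv) ∧
    ((stepPair p mv).1 ≠ p.1 ∨ (stepPair p mv).1 = 1) ∧
    ((stepPair p mv).2 ≠ p.2 ∨ (stepPair p mv).2 = 1) ∧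
    (stepPair p mv).1 - (stepPair p mv).2 = mv := by
  rcases hp with rfl|rfl|rfl|rfl|rfl <;> rcases hmv with rfl|rfl|rfl <;>
    norm_num [stepPair, Pgood]

lemma pairSeq_eq (m : ℕ → ℤ) (j : ℕ) (hj : 2 ≤ j) :
    pairSeq m j = stepPair (pairSeq m (j-1)) (m (j+1)) := by
  obtain ⟨k, rfl⟩ : ∃ k, j = k + 2 := ⟨j - 2, by omega⟩
  rfl

lemma pair_good (m : ℕ → ℤ) (n : ℕ)
    (hm : ∀ i, 3 ≤ i → i ≤ n → m i ∈ ({0,1,-1} : Set ℤ)) :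
    ∀ j, 1 ≤ j → j < n → Pgood (pairSeq m j) := by
  intro j
  induction j with
  | zero => omega
  | succ k ih =>
    intro _ h2
    by_cases hk : k = 0
    · subst hk
      left; rfl
    · rw [pairSeq_eq m (k+1) (by omega)]
      have hmv := hm (k+2) (by omega) (by omega)
      simp only [Set.mem_insert_iff, Set.mem_singleton_iff] at hmv
      exact (step_mem _ _ (ih (by omega) (by omega)) hmv).1

lemma pair_step_props (m : ℕ → ℤ) (n : ℕ)
    (hm : ∀ i, 3 ≤ i → i ≤ n → m i ∈ ({0,1,-1} : Set ℤ))
    (j : ℕ) (h2 : 2 ≤ j) (hjn : j < n) :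
    Pgood (pairSeq m j) ∧
    ((pairSeq m j).1 ≠ (pairSeq m (j-1)).1 ∨ (pairSeq m j).1 = 1) ∧
    ((pairSeq m j).2 ≠ (pairSeq m (j-1)).2 ∨ (pairSeq m j).2 = 1) ∧
    (pairSeq m j).1 - (pairSeq m j).2 = m (j+1) := by
  rw [pairSeq_eq m j h2]
  have hmv := hm (j+1) (by omega) (by omega)
  simp only [Set.mem_insert_iff, Set.mem_singleton_iff] at hmv
  exact step_mem _ _ (pair_good m n hm (j-1) (by omega) (by omega)) hmv

def STsol (u v w : ℤ) : ℤ × ℤ :=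
  if v = 0 then (if w = 2 then (2, 0) else (1, 0))
  else if u = 1 then
    (if w = 2 then (2, 0)
     else if w = 3 then (if v = 1 then (1, 2) else if v = 2 then (1, 1) else (0, 1))
     else (1, 0))
  else if u = 2 then
    (if v = 1 then (if w = 1 then (0, 1) else if w = 2 then (1, 0) else (1, 1))
     else if v = 3 then (if w = 1 then (2, -1) else if w = 2 then (1, 0) else (0, 1))
     else (0, 0))
  else
    (if v = 1 then (if w = 1 then (0, 1) else if w = 2 then (0, 2) else (1, 0))
     else (if w = 1 then (1, -1) else if w = 2 then (0, 1) else (1, 0)))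

lemma STsol_mem (u v w : ℤ) :
    (STsol u v w).1 ∈ ({0,1,-1,2,-2} : Set ℤ) ∧
    (STsol u v w).2 ∈ ({0,1,-1,2,-2} : Set ℤ) := by
  unfold STsol
  split_ifs <;> norm_num

lemma STsol_correct (u v w : ℤ)
    (hu : u = 1 ∨ u = 2 ∨ u = 3)
    (hv : v = 1 ∨ v = 2 ∨ v = 3)
    (hw : w = 1 ∨ w = 2 ∨ w = 3)
    (h22 : ¬(u = 2 ∧ v = 2)) (h33 : ¬(u = 3 ∧ v = 3)) :
    (STsol u v w).1 * u + (STsol u v w).2 * v = w := by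
  rcases hu with rfl|rfl|rfl <;> rcases hw with rfl|rfl|rfl <;>
    rcases hv with rfl|rfl|rfl <;>
      first | (norm_num at h22; done) | (norm_num at h33; done) | norm_num [STsol] at h22 h33 ⊢

def aSeq (m : ℕ → ℤ) (j : ℕ) : ℤ := (pairSeq m j).1
def bSeq (m : ℕ → ℤ) (j : ℕ) : ℤ := (pairSeq m j).2
def sSeq (x : ℕ → ℤ) (j : ℕ) : ℤ := (STsol (x (j-1)) (x (j-2)) (x j)).1
def tSeq (x : ℕ → ℤ) (j : ℕ) : ℤ := (STsol (x j) (x (j-1)) (x (j+1))).2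

lemma rec_a (m : ℕ → ℤ) (n : ℕ)
    (hm : ∀ i, 3 ≤ i → i ≤ n → m i ∈ ({0,1,-1} : Set ℤ))
    (j : ℕ) (h3 : 3 ≤ j) (hjn : j < n) :
    aSeq m j = sSeq (aSeq m) j * aSeq m (j-1) + tSeq (aSeq m) (j-1) * aSeq m (j-2) := by
  have e1 : j - 1 - 1 = j - 2 := by omega
  have e2 : j - 1 + 1 = j := by omega
  unfold sSeq tSeq
  rw [e1, e2]
  have hu := Pgood_fst (pair_good m n hm (j-1) (by omega) (by omega))
  have hv := Pgood_fst (pair_good m n hm (j-2) (by omega) (by omega))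
  have hw := Pgood_fst (pair_good m n hm j (by omega) (by omega))
  have hcons := (pair_step_props m n hm (j-1) (by omega) (by omega)).2.1
  rw [e1] at hcons
  have key := STsol_correct (aSeq m (j-1)) (aSeq m (j-2)) (aSeq m j)
    hu hv hw
    (by rcases hcons with h|h <;> intro hc <;>
      simp only [aSeq] at * <;> omega)
    (by rcases hcons with h|h <;> intro hc <;>
      simp only [aSeq] at * <;> omega)
  linear_combination -key

lemma rec_b (m : ℕ → ℤ) (n : ℕ)
    (hm : ∀ i, 3 ≤ i → i ≤ n → m i ∈ ({0,1,-1} : Set ℤ))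
    (j : ℕ) (h3 : 3 ≤ j) (hjn : j < n) :
    bSeq m j = sSeq (bSeq m) j * bSeq m (j-1) + tSeq (bSeq m) (j-1) * bSeq m (j-2) := by
  have e1 : j - 1 - 1 = j - 2 := by omega
  have e2 : j - 1 + 1 = j := by omega
  unfold sSeq tSeq
  rw [e1, e2]
  have hu := Pgood_snd (pair_good m n hm (j-1) (by omega) (by omega))
  have hv := Pgood_snd (pair_good m n hm (j-2) (by omega) (by omega))
  have hw := Pgood_snd (pair_good m n hm j (by omega) (by omega))
  have hcons := (pair_step_props m n hm (j-1) (by omega) (by omega)).2.2.1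
  rw [e1] at hcons
  have key := STsol_correct (bSeq m (j-1)) (bSeq m (j-2)) (bSeq m j)
    hu hv hw
    (by rcases hcons with h|h <;> intro hc <;>
      simp only [bSeq] at * <;> omega)
    (by rcases hcons with h|h <;> intro hc <;>
      simp only [bSeq] at * <;> omega)
  linear_combination -key

lemma pair2_cases (m : ℕ → ℤ) (hm3 : m 3 = 0 ∨ m 3 = 1 ∨ m 3 = -1) :
    pairSeq m 2 = (1,1) ∨ pairSeq m 2 = (2,1) ∨ pairSeq m 2 = (1,2) := by
  have h : pairSeq m 2 = stepPair (1,1) (m 3) := rfl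
  rcases hm3 with h3|h3|h3 <;> rw [h, h3] <;> norm_num [stepPair]

lemma rec_a2 (m : ℕ → ℤ) (hm3 : m 3 = 0 ∨ m 3 = 1 ∨ m 3 = -1) :
    aSeq m 2 = sSeq (aSeq m) 2 * aSeq m 1 := by
  have h0 : aSeq m 0 = 0 := rfl
  have h1 : aSeq m 1 = 1 := rfl
  unfold sSeq
  rw [show (2:ℕ) - 1 = 1 from rfl, show (2:ℕ) - 2 = 0 from rfl, h0, h1]
  rcases pair2_cases m hm3 with h|h|h <;>
    simp only [aSeq, h] <;> norm_num [STsol]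

lemma rec_b2 (m : ℕ → ℤ) (hm3 : m 3 = 0 ∨ m 3 = 1 ∨ m 3 = -1) :
    bSeq m 2 = sSeq (bSeq m) 2 * bSeq m 1 := by
  have h0 : bSeq m 0 = 0 := rfl
  have h1 : bSeq m 1 = 1 := rfl
  unfold sSeq
  rw [show (2:ℕ) - 1 = 1 from rfl, show (2:ℕ) - 2 = 0 from rfl, h0, h1]
  rcases pair2_cases m hm3 with h|h|h <;>
    simp only [bSeq, h] <;> norm_num [STsol]

lemma Rmat_eq_Fv (n : ℕ) (hn : 3 ≤ n) (m : ℕ → ℤ) (hm2 : m 2 = 0)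
    (hm : ∀ i, 3 ≤ i → i ≤ n → m i ∈ ({0,1,-1} : Set ℤ)) :
    Rmat n m = Fvmat n (fun j => aSeq m j + -(bSeq m j)) := by
  ext i j
  simp only [Rmat, Fvmat, Matrix.of_apply]
  by_cases hij : i = j
  · rw [if_pos hij, if_pos hij]
  · rw [if_neg hij, if_neg hij]
    by_cases hi : (i : ℕ) = 0
    · rw [if_pos hi, if_pos hi]
      have hj0 : ¬ (j : ℕ) = 0 := by
        intro hc
        exact hij (Fin.ext (by omega))
      rcases (show (j:ℕ) = 1 ∨ 2 ≤ (j:ℕ) by omega) with h|h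
      · rw [h, hm2]
        have e : pairSeq m 1 = (1,1) := rfl
        simp [aSeq, bSeq, e]
      · have hd := (pair_step_props m n hm (j:ℕ) h j.isLt).2.2.2
        simp only [aSeq, bSeq]
        linarith [hd]
    · rw [if_neg hi, if_neg hi]

end RmAux

/-- If m_2 = 0 and m_3, …, m_n ∈ {0, ±1} then there are parameters s, t, s′, t′ with
values in {0, ±1, ±2} such that, with N₁ = N(s,t) and N₂ = N(s′,t′),
R_m = N₁ · e_{1,2} · N₁⁻¹ · N₂ · e_{1,2}⁻¹ · N₂⁻¹. -/
theorem Rm_eq_product_of_two_conjugates (n : ℕ) (hn : 3 ≤ n) (m : ℕ → ℤ)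
    (hm2 : m 2 = 0)
    (hmval : ∀ i, 3 ≤ i → i ≤ n → m i ∈ ({0, 1, -1} : Set ℤ)) :
    ∃ s t s' t' : ℕ → ℤ,
      (∀ i, 2 ≤ i → i ≤ n - 1 → s i ∈ ({0, 1, -1, 2, -2} : Set ℤ)) ∧
      (∀ i, 2 ≤ i → i ≤ n - 2 → t i ∈ ({0, 1, -1, 2, -2} : Set ℤ)) ∧
      (∀ i, 2 ≤ i → i ≤ n - 1 → s' i ∈ ({0, 1, -1, 2, -2} : Set ℤ)) ∧
      (∀ i, 2 ≤ i → i ≤ n - 2 → t' i ∈ ({0, 1, -1, 2, -2} : Set ℤ)) ∧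
      ∀ (N₁ N₂ E R : Matrix.SpecialLinearGroup (Fin n) ℤ),
        (N₁ : Matrix (Fin n) (Fin n) ℤ) = Nmat n s t →
        (N₂ : Matrix (Fin n) (Fin n) ℤ) = Nmat n s' t' →
        (E : Matrix (Fin n) (Fin n) ℤ) = E12mat n →
        (R : Matrix (Fin n) (Fin n) ℤ) = Rmat n m →
        R = N₁ * E * N₁⁻¹ * (N₂ * E⁻¹ * N₂⁻¹) := by
  have hm3 : m 3 = 0 ∨ m 3 = 1 ∨ m 3 = -1 := by
    have := hmval 3 le_rfl hn
    simpa using this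
  refine ⟨RmAux.sSeq (RmAux.aSeq m), RmAux.tSeq (RmAux.aSeq m),
    RmAux.sSeq (RmAux.bSeq m), RmAux.tSeq (RmAux.bSeq m),
    fun i _ _ => (RmAux.STsol_mem _ _ _).1,
    fun i _ _ => (RmAux.STsol_mem _ _ _).2,
    fun i _ _ => (RmAux.STsol_mem _ _ _).1,
    fun i _ _ => (RmAux.STsol_mem _ _ _).2, ?_⟩
  intro N₁ N₂ E R h1 h2 h3 h4
  have hn0 : 0 < n := by omega
  have hNE1 : Nmat n (RmAux.sSeq (RmAux.aSeq m)) (RmAux.tSeq (RmAux.aSeq m)) * E12mat n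
      = RmAux.Fvmat n (RmAux.aSeq m)
        * Nmat n (RmAux.sSeq (RmAux.aSeq m)) (RmAux.tSeq (RmAux.aSeq m)) :=
    RmAux.NE_eq n hn0 _ _ _ rfl rfl (fun _ => RmAux.rec_a2 m hm3)
      (fun j hj3 hjn => RmAux.rec_a m n hmval j hj3 hjn)
  have hNE2 : Nmat n (RmAux.sSeq (RmAux.bSeq m)) (RmAux.tSeq (RmAux.bSeq m)) * E12mat n
      = RmAux.Fvmat n (RmAux.bSeq m)
        * Nmat n (RmAux.sSeq (RmAux.bSeq m)) (RmAux.tSeq (RmAux.bSeq m)) :=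
    RmAux.NE_eq n hn0 _ _ _ rfl rfl (fun _ => RmAux.rec_b2 m hm3)
      (fun j hj3 hjn => RmAux.rec_b m n hmval j hj3 hjn)
  let FA : Matrix.SpecialLinearGroup (Fin n) ℤ :=
    ⟨RmAux.Fvmat n (RmAux.aSeq m), RmAux.Fvmat_det n _⟩
  let FB : Matrix.SpecialLinearGroup (Fin n) ℤ :=
    ⟨RmAux.Fvmat n (RmAux.bSeq m), RmAux.Fvmat_det n _⟩
  let FB' : Matrix.SpecialLinearGroup (Fin n) ℤ :=
    ⟨RmAux.Fvmat n (fun j => -(RmAux.bSeq m j)), RmAux.Fvmat_det n _⟩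
  have g1 : N₁ * E = FA * N₁ := by
    apply Subtype.ext
    rw [Matrix.SpecialLinearGroup.coe_mul, Matrix.SpecialLinearGroup.coe_mul, h1, h3]
    exact hNE1
  have hA : N₁ * E * N₁⁻¹ = FA := by rw [g1, mul_inv_cancel_right]
  have g2 : N₂ * E = FB * N₂ := by
    apply Subtype.ext
    rw [Matrix.SpecialLinearGroup.coe_mul, Matrix.SpecialLinearGroup.coe_mul, h2, h3]
    exact hNE2
  have hFBeq : FB = N₂ * E * N₂⁻¹ := by rw [g2, mul_inv_cancel_right]
  have hB : N₂ * E⁻¹ * N₂⁻¹ = FB⁻¹ := by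
    rw [hFBeq]
    group
  have hinv : FB⁻¹ = FB' := by
    apply inv_eq_of_mul_eq_one_right
    apply Subtype.ext
    rw [Matrix.SpecialLinearGroup.coe_mul, Matrix.SpecialLinearGroup.coe_one]
    show RmAux.Fvmat n (RmAux.bSeq m) * RmAux.Fvmat n (fun j => -(RmAux.bSeq m j)) = 1
    rw [RmAux.Fvmat_mul]
    have e : (fun j => RmAux.bSeq m j + -(RmAux.bSeq m j)) = fun _ => (0:ℤ) := by
      funext j; ring
    rw [e, RmAux.Fvmat_zero]
  have hR : R = FA * FB' := by
    apply Subtype.ext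
    rw [Matrix.SpecialLinearGroup.coe_mul, h4]
    show Rmat n m = RmAux.Fvmat n (RmAux.aSeq m)
        * RmAux.Fvmat n (fun j => -(RmAux.bSeq m j))
    rw [RmAux.Fvmat_mul]
    exact RmAux.Rmat_eq_Fv n hn m hm2 hmval
  rw [hA, hB, hinv]
  exact hR
end

section
/- Let n ≥ 3, let s_2, …, s_{n−1} ∈ {0, ±1, ±2} and t_2, …, t_{n−2} ∈ {0, ±1}, and set t_{n−1} := 0. For 2 ≤ i ≤ n−1 let Q_i := A_n^{−s_i} · [A_n, B_n⁻¹·A_n·B_n]^{−t_i}, where [X,Y] = X·Y·X⁻¹·Y⁻¹. Then the product w := B_n^{−(n−2)} · Q_{n−1} · B_n · Q_{n−2} · B_n · ⋯ · Q_2 · B_n equals N(s,t) in SL_n(ℤ); consequently N(s,t) can be written as a product of at most 12n − 24 elements of {A_n, A_n⁻¹, B_n, B_n⁻¹}. -/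
namespace WP

def S (n p q : ℕ) : Matrix (Fin n) (Fin n) ℤ :=
  Matrix.of fun i j => if (i : ℕ) = p ∧ (j : ℕ) = q then 1 else 0

lemma S_apply (n p q : ℕ) (i j : Fin n) :
    S n p q i j = if (i:ℕ) = p ∧ (j:ℕ) = q then 1 else 0 := rfl

lemma S_mul_ne {n q r : ℕ} (h : q ≠ r) (p u : ℕ) : S n p q * S n r u = 0 := by
  ext i j
  rw [Matrix.mul_apply]
  simp only [S_apply, Matrix.zero_apply]
  apply Finset.sum_eq_zero
  intro l _
  by_cases h1 : (l:ℕ) = q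
  · have h2 : ¬((l:ℕ) = r ∧ (j:ℕ) = u) := by
      rintro ⟨h2, -⟩; exact h (h1 ▸ h2)
    simp [h2]
  · simp [h1]

lemma S_mul_eq {n q : ℕ} (hq : q < n) (p u : ℕ) : S n p q * S n q u = S n p u := by
  ext i j
  rw [Matrix.mul_apply, Finset.sum_eq_single (⟨q, hq⟩ : Fin n)]
  · simp only [S_apply, and_true, if_true]
    split_ifs <;> simp_all
  · intro l _ hl
    have h1 : ¬((l:ℕ) = q) := fun h => hl (Fin.ext h)
    simp [S_apply, h1]
  · simp

lemma S_mul_B {n q : ℕ} (hq : q + 1 < n) (p : ℕ) : S n p q * Bmat n = S n p (q+1) := by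
  ext i j
  rw [Matrix.mul_apply, Finset.sum_eq_single (⟨q, by omega⟩ : Fin n)]
  · have hq' : ¬ (q = n - 1) := by omega
    simp only [S_apply, Bmat, Matrix.of_apply, hq', false_and, if_false, and_true]
    split_ifs <;> simp_all
  · intro l _ hl
    have h1 : ¬((l:ℕ) = q) := fun h => hl (Fin.ext h)
    simp [S_apply, h1]
  · simp

lemma B_mul_S {n p : ℕ} (hp : p + 1 < n) (q : ℕ) : Bmat n * S n (p+1) q = S n p q := by
  ext i j
  rw [Matrix.mul_apply, Finset.sum_eq_single (⟨p+1, hp⟩ : Fin n)]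
  · simp only [S_apply, Bmat, Matrix.of_apply]
    split_ifs <;> simp_all <;> omega
  · intro l _ hl
    have h1 : ¬((l:ℕ) = p+1) := fun h => hl (Fin.ext h)
    simp [S_apply, h1]
  · simp


lemma Amat_eq (n : ℕ) : Amat n = 1 + S n 0 1 := by
  ext i j
  simp only [Amat, S, Matrix.of_apply, Matrix.add_apply, Matrix.one_apply]
  split_ifs <;> simp_all <;> omega


lemma unip_mul {n p q : ℕ} (h : q ≠ p) (a b : ℤ) :
    (1 + a • S n p q) * (1 + b • S n p q) = 1 + (a + b) • S n p q := by
  have h0 : S n p q * S n p q = 0 := S_mul_ne h p q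
  simp only [mul_add, add_mul, mul_one, one_mul, Matrix.smul_mul, Matrix.mul_smul, h0,
    smul_zero, add_smul]
  abel


abbrev SL (n : ℕ) := Matrix.SpecialLinearGroup (Fin n) ℤ

lemma coe_inv_eq {n : ℕ} (X : SL n) (M : Matrix (Fin n) (Fin n) ℤ)
    (h : (X : Matrix (Fin n) (Fin n) ℤ) * M = 1) :
    ((X⁻¹ : SL n) : Matrix (Fin n) (Fin n) ℤ) = M := by
  calc ((X⁻¹ : SL n) : Matrix (Fin n) (Fin n) ℤ) = ↑(X⁻¹) * ((X : Matrix (Fin n) (Fin n) ℤ) * M) := by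
        rw [h, mul_one]
    _ = (((X⁻¹ * X : SL n)) : Matrix (Fin n) (Fin n) ℤ) * M := by
        rw [Matrix.SpecialLinearGroup.coe_mul, mul_assoc]
    _ = M := by rw [inv_mul_cancel, Matrix.SpecialLinearGroup.coe_one, one_mul]

lemma coe_zpow_unip {n p q : ℕ} (X : SL n) (h : q ≠ p)
    (hX : (X : Matrix (Fin n) (Fin n) ℤ) = 1 + S n p q) (z : ℤ) :
    ((X ^ z : SL n) : Matrix (Fin n) (Fin n) ℤ) = 1 + z • S n p q := by
  have hX1 : (X : Matrix (Fin n) (Fin n) ℤ) = 1 + (1:ℤ) • S n p q := by rw [hX, one_smul]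
  have hXinv : ((X⁻¹ : SL n) : Matrix (Fin n) (Fin n) ℤ) = 1 + (-1:ℤ) • S n p q := by
    apply coe_inv_eq
    rw [hX1, unip_mul h]; norm_num
  induction z using Int.induction_on with
  | zero => simp
  | succ k ih =>
      rw [zpow_add_one, Matrix.SpecialLinearGroup.coe_mul, ih, hX1, unip_mul h]
  | pred k ih =>
      rw [zpow_sub_one, Matrix.SpecialLinearGroup.coe_mul, ih, hXinv, unip_mul h]
      ring_nf


section
variable {n : ℕ} (hn : 3 ≤ n) (A B : SL n)
  (hA : (A : Matrix (Fin n) (Fin n) ℤ) = Amat n)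
  (hB : (B : Matrix (Fin n) (Fin n) ℤ) = Bmat n)

include hn hA hB

lemma coe_Binv_mul : ((B⁻¹ : SL n) : Matrix (Fin n) (Fin n) ℤ) * Bmat n = 1 := by
  rw [← hB, ← Matrix.SpecialLinearGroup.coe_mul, inv_mul_cancel,
    Matrix.SpecialLinearGroup.coe_one]

lemma coe_D : ((B⁻¹ * A * B : SL n) : Matrix (Fin n) (Fin n) ℤ) = 1 + S n 1 2 := by
  have h1 : Amat n * Bmat n = Bmat n * (1 + S n 1 2) := by
    rw [Amat_eq, add_mul, one_mul, S_mul_B (by omega : 1 + 1 < n) 0, mul_add, mul_one,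
      B_mul_S (by omega : 1 < n) 2]
  rw [Matrix.SpecialLinearGroup.coe_mul, Matrix.SpecialLinearGroup.coe_mul, hA, hB,
    mul_assoc, h1, ← mul_assoc, coe_Binv_mul hn A B hA hB, one_mul]

lemma coe_C :
    ((A * (B⁻¹ * A * B) * A⁻¹ * (B⁻¹ * A * B)⁻¹ : SL n) : Matrix (Fin n) (Fin n) ℤ)
      = 1 + S n 0 2 := by
  have hD := coe_D hn A B hA hB
  have hA' : (A : Matrix (Fin n) (Fin n) ℤ) = 1 + S n 0 1 := by rw [hA, Amat_eq]
  have hAinv : ((A⁻¹ : SL n) : Matrix (Fin n) (Fin n) ℤ) = 1 + (-1:ℤ) • S n 0 1 := by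
    apply coe_inv_eq
    rw [hA', show (1 + S n 0 1 : Matrix (Fin n) (Fin n) ℤ) = 1 + (1:ℤ) • S n 0 1 by rw [one_smul],
      unip_mul (by omega), add_neg_cancel, zero_smul, add_zero]
  have hDinv : (((B⁻¹ * A * B)⁻¹ : SL n) : Matrix (Fin n) (Fin n) ℤ) = 1 + (-1:ℤ) • S n 1 2 := by
    apply coe_inv_eq
    rw [hD, show (1 + S n 1 2 : Matrix (Fin n) (Fin n) ℤ) = 1 + (1:ℤ) • S n 1 2 by rw [one_smul],
      unip_mul (by omega), add_neg_cancel, zero_smul, add_zero]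
  rw [Matrix.SpecialLinearGroup.coe_mul, Matrix.SpecialLinearGroup.coe_mul,
    Matrix.SpecialLinearGroup.coe_mul, hA', hD, hAinv, hDinv]
  have e1 : S n 0 1 * S n 1 2 = S n 0 2 := S_mul_eq (by omega) 0 2
  have e2 : S n 1 2 * S n 0 1 = 0 := S_mul_ne (by omega) 1 1
  have e3 : S n 0 1 * S n 0 1 = 0 := S_mul_ne (by omega) 0 1
  have e4 : S n 1 2 * S n 1 2 = 0 := S_mul_ne (by omega) 1 2
  have e5 : S n 0 2 * S n 0 1 = 0 := S_mul_ne (by omega) 0 1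
  have e6 : S n 0 2 * S n 1 2 = 0 := S_mul_ne (by omega) 0 2
  simp only [mul_add, add_mul, mul_one, one_mul, mul_smul_comm, smul_mul_assoc, smul_smul,
    e1, e2, e3, e4, e5, e6, smul_zero, zero_smul, add_zero, zero_add]
  simp only [neg_smul, one_smul, neg_neg, smul_add, smul_zero]
  abel

lemma coe_Q (a b : ℤ) (hb : b = 0 ∨ True) :
    ((A ^ a * (A * (B⁻¹ * A * B) * A⁻¹ * (B⁻¹ * A * B)⁻¹) ^ b : SL n) :
      Matrix (Fin n) (Fin n) ℤ) = 1 + a • S n 0 1 + b • S n 0 2 := by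
  have hA' : (A : Matrix (Fin n) (Fin n) ℤ) = 1 + S n 0 1 := by rw [hA, Amat_eq]
  rw [Matrix.SpecialLinearGroup.coe_mul, coe_zpow_unip A (by omega) hA' a,
    coe_zpow_unip _ (by omega) (coe_C hn A B hA hB) b]
  have e : S n 0 1 * S n 0 2 = 0 := S_mul_ne (by omega) 0 2
  simp only [mul_add, add_mul, smul_mul_assoc, mul_smul_comm, e, mul_one, one_mul,
    smul_zero, add_zero, add_assoc]

end

lemma smul_S_mul_B {n q : ℕ} (a : ℤ) (h : a = 0 ∨ q + 1 < n) (p : ℕ) :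
    a • S n p q * Bmat n = a • S n p (q+1) := by
  rcases h with h | h
  · subst h; simp
  · rw [smul_mul_assoc, S_mul_B h]

def MM (n : ℕ) (s t : ℕ → ℤ) (m : ℕ) : Matrix (Fin n) (Fin n) ℤ :=
  1 + ∑ k ∈ Finset.range m,
    ((-(s (n - m + k))) • S n (k+1) (k+2) + (-(t (n - m + k))) • S n (k+1) (k+3))

lemma MM_step (n : ℕ) (s t : ℕ → ℤ) (m : ℕ) (hn : 3 ≤ n) (hm : m + 1 ≤ n - 2)
    (htop : t (n - 1) = 0) :
    MM n s t m * (1 + (-(s (n-1-m))) • S n 0 1 + (-(t (n-1-m))) • S n 0 2) * Bmat n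
      = Bmat n * MM n s t (m+1) := by
  set a := -(s (n-1-m)) with ha
  set b := -(t (n-1-m)) with hb
  have hbz : b = 0 ∨ 2 + 1 < n := by
    rcases Nat.eq_zero_or_pos m with h0 | h0
    · left; rw [hb, h0, Nat.sub_zero, htop, neg_zero]
    · right; omega
  -- step 1 : absorb Q
  have step1 : MM n s t m * (1 + a • S n 0 1 + b • S n 0 2)
      = MM n s t m + a • S n 0 1 + b • S n 0 2 := by
    rw [MM, add_mul, one_mul]
    have hz : (∑ k ∈ Finset.range m,
        ((-(s (n - m + k))) • S n (k+1) (k+2) + (-(t (n - m + k))) • S n (k+1) (k+3)))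
        * (1 + a • S n 0 1 + b • S n 0 2)
        = ∑ k ∈ Finset.range m,
        ((-(s (n - m + k))) • S n (k+1) (k+2) + (-(t (n - m + k))) • S n (k+1) (k+3)) := by
      rw [Finset.sum_mul]
      apply Finset.sum_congr rfl
      intro k _
      have z1 : S n (k+1) (k+2) * S n 0 1 = 0 := S_mul_ne (by omega) _ _
      have z2 : S n (k+1) (k+3) * S n 0 1 = 0 := S_mul_ne (by omega) _ _
      have z3 : S n (k+1) (k+2) * S n 0 2 = 0 := S_mul_ne (by omega) _ _
      have z4 : S n (k+1) (k+3) * S n 0 2 = 0 := S_mul_ne (by omega) _ _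
      simp only [mul_add, add_mul, mul_one, smul_mul_assoc, mul_smul_comm, z1, z2, z3, z4,
        smul_zero, add_zero]
    rw [hz]
    abel
  rw [step1]
  -- step 2 : multiply by B on the right
  have lhs2 : (MM n s t m + a • S n 0 1 + b • S n 0 2) * Bmat n
      = Bmat n + (∑ k ∈ Finset.range m,
          ((-(s (n - m + k))) • S n (k+1) (k+3) + (-(t (n - m + k))) • S n (k+1) (k+4)))
        + a • S n 0 2 + b • S n 0 3 := by
    have hsum2 : ∑ k ∈ Finset.range m,
        (((-(s (n - m + k))) • S n (k+1) (k+2) + (-(t (n - m + k))) • S n (k+1) (k+3)) * Bmat n)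
        = ∑ k ∈ Finset.range m,
        ((-(s (n - m + k))) • S n (k+1) (k+3) + (-(t (n - m + k))) • S n (k+1) (k+4)) := by
      apply Finset.sum_congr rfl
      intro k hk
      have hk' : k < m := Finset.mem_range.mp hk
      rw [add_mul, smul_S_mul_B _ (Or.inr (by omega)) _]
      congr 1
      by_cases h4 : k + 4 < n
      · rw [smul_S_mul_B _ (Or.inr h4) _]
      · have he : n - m + k = n - 1 := by omega
        rw [smul_S_mul_B _ (Or.inl (by rw [he, htop, neg_zero])) _]
    simp only [MM]
    rw [add_mul, add_mul, add_mul, one_mul, Finset.sum_mul, hsum2,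
      smul_S_mul_B a (Or.inr (by omega)) 0, smul_S_mul_B b hbz 0]
  rw [lhs2]
  -- step 3 : RHS
  have rhs : Bmat n * MM n s t (m+1)
      = Bmat n + ∑ k ∈ Finset.range (m+1),
          ((-(s (n - (m+1) + k))) • S n k (k+2) + (-(t (n - (m+1) + k))) • S n k (k+3)) := by
    have hsum3 : ∑ k ∈ Finset.range (m+1),
        (Bmat n * ((-(s (n - (m+1) + k))) • S n (k+1) (k+2) + (-(t (n - (m+1) + k))) • S n (k+1) (k+3)))
        = ∑ k ∈ Finset.range (m+1),
        ((-(s (n - (m+1) + k))) • S n k (k+2) + (-(t (n - (m+1) + k))) • S n k (k+3)) := by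
      apply Finset.sum_congr rfl
      intro k hk
      have hk' : k < m + 1 := Finset.mem_range.mp hk
      rw [mul_add, mul_smul_comm, mul_smul_comm, B_mul_S (by omega) _, B_mul_S (by omega) _]
    simp only [MM]
    rw [mul_add, mul_one, Finset.mul_sum, hsum3]
  rw [rhs, Finset.sum_range_succ']
  have hsum : ∑ k ∈ Finset.range m,
      ((-(s (n - (m+1) + (k+1)))) • S n (k+1) (k+1+2) + (-(t (n - (m+1) + (k+1)))) • S n (k+1) (k+1+3))
      = ∑ k ∈ Finset.range m,
      ((-(s (n - m + k))) • S n (k+1) (k+3) + (-(t (n - m + k))) • S n (k+1) (k+4)) := by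
    apply Finset.sum_congr rfl
    intro k _
    rw [show n - (m+1) + (k+1) = n - m + k from by omega]
  rw [hsum, show n - (m+1) + 0 = n - 1 - m from by omega]
  abel


lemma MM_zero (n : ℕ) (s t : ℕ → ℤ) : MM n s t 0 = 1 := by
  simp [MM]

lemma MM_last (n : ℕ) (hn : 3 ≤ n) (s t : ℕ → ℤ) : MM n s t (n-2) = Nmat n s t := by
  ext i j
  have hi : (i : ℕ) < n := i.isLt
  have hj : (j : ℕ) < n := j.isLt
  have hij : (i = j) ↔ ((i:ℕ) = (j:ℕ)) := Fin.ext_iff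
  simp only [MM, Nmat, Matrix.add_apply, Matrix.one_apply, Matrix.of_apply, Matrix.sum_apply,
    Matrix.smul_apply, S, smul_eq_mul]
  rw [Finset.sum_eq_single ((i:ℕ) - 1)]
  · rw [show n - (n-2) = 2 from by omega]
    by_cases hi1 : 1 ≤ (i:ℕ)
    · rw [show 2 + ((i:ℕ)-1) = (i:ℕ)+1 from by omega]
      simp only [hij]
      split_ifs <;> first | ring1 | (exfalso; omega)
    · simp only [hij]
      split_ifs <;> first | ring1 | (exfalso; omega)
  · intro k hk hne
    have h1 : ¬((i:ℕ) = k+1 ∧ (j:ℕ) = k+2) := by omega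
    have h2 : ¬((i:ℕ) = k+1 ∧ (j:ℕ) = k+3) := by omega
    simp [h1, h2]
  · intro h
    have h' : ¬((i:ℕ) - 1 < n - 2) := fun hh => h (Finset.mem_range.mpr hh)
    have h1 : ¬((i:ℕ) = ((i:ℕ)-1)+1 ∧ (j:ℕ) = ((i:ℕ)-1)+2) := by omega
    have h2 : ¬((i:ℕ) = ((i:ℕ)-1)+1 ∧ (j:ℕ) = ((i:ℕ)-1)+3) := by omega
    simp [h1, h2]


section
variable {n : ℕ} (hn : 3 ≤ n) (s t : ℕ → ℤ) (A B : SL n)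
  (hA : (A : Matrix (Fin n) (Fin n) ℤ) = Amat n)
  (hB : (B : Matrix (Fin n) (Fin n) ℤ) = Bmat n)
  (htop : t (n - 1) = 0)

include hn hA hB htop

lemma coe_W : ∀ m, m ≤ n - 2 →
    ((B ^ (-(m:ℤ)) * ((List.range m).map (fun j =>
        (A ^ (-(s (n - 1 - j))) *
          (A * (B⁻¹ * A * B) * A⁻¹ * (B⁻¹ * A * B)⁻¹) ^ (-(t (n - 1 - j)))) * B)).prod : SL n) :
      Matrix (Fin n) (Fin n) ℤ) = MM n s t m := by
  intro m
  induction m with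
  | zero =>
      intro _
      simp [MM_zero]
  | succ m ih =>
      intro hm1
      have ihm := ih (by omega)
      have hw : B ^ (-((m+1:ℕ):ℤ)) * ((List.range (m+1)).map (fun j =>
          (A ^ (-(s (n - 1 - j))) *
            (A * (B⁻¹ * A * B) * A⁻¹ * (B⁻¹ * A * B)⁻¹) ^ (-(t (n - 1 - j)))) * B)).prod
          = B⁻¹ * ((B ^ (-(m:ℤ)) * ((List.range m).map (fun j =>
          (A ^ (-(s (n - 1 - j))) *
            (A * (B⁻¹ * A * B) * A⁻¹ * (B⁻¹ * A * B)⁻¹) ^ (-(t (n - 1 - j)))) * B)).prod) *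
          ((A ^ (-(s (n - 1 - m))) *
            (A * (B⁻¹ * A * B) * A⁻¹ * (B⁻¹ * A * B)⁻¹) ^ (-(t (n - 1 - m)))) * B)) := by
        rw [List.range_succ, List.map_append, List.prod_append, List.map_singleton,
          List.prod_singleton,
          show (-((m+1:ℕ):ℤ)) = -1 + -(m:ℤ) from by push_cast; ring, zpow_add, zpow_neg_one]
        simp only [mul_assoc]
      rw [Matrix.SpecialLinearGroup.coe_mul] at ihm
      rw [hw, Matrix.SpecialLinearGroup.coe_mul, Matrix.SpecialLinearGroup.coe_mul,
        Matrix.SpecialLinearGroup.coe_mul, Matrix.SpecialLinearGroup.coe_mul, ihm,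
        coe_Q hn A B hA hB _ _ (Or.inr trivial), hB]
      rw [← mul_assoc (MM n s t m), MM_step n s t m hn hm1 htop, ← mul_assoc,
        coe_Binv_mul hn A B hA hB, one_mul]

end

lemma neg_mem5 {z : ℤ} (hz : z ∈ ({0, 1, -1, 2, -2} : Set ℤ)) :
    -z ∈ ({0, 1, -1, 2, -2} : Set ℤ) := by
  simp only [Set.mem_insert_iff, Set.mem_singleton_iff] at hz ⊢
  rcases hz with rfl | rfl | rfl | rfl | rfl <;> norm_num

lemma neg_mem3 {z : ℤ} (hz : z ∈ ({0, 1, -1} : Set ℤ)) :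
    -z ∈ ({0, 1, -1} : Set ℤ) := by
  simp only [Set.mem_insert_iff, Set.mem_singleton_iff] at hz ⊢
  rcases hz with rfl | rfl | rfl <;> norm_num

lemma word_pow2 {G : Type*} [Group G] (X : G) (z : ℤ)
    (hz : z ∈ ({0, 1, -1, 2, -2} : Set ℤ)) :
    ∃ l : List G, l.length ≤ 2 ∧ (∀ x ∈ l, x = X ∨ x = X⁻¹) ∧ l.prod = X ^ z := by
  simp only [Set.mem_insert_iff, Set.mem_singleton_iff] at hz
  rcases hz with rfl | rfl | rfl | rfl | rfl
  · exact ⟨[], by simp⟩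
  · exact ⟨[X], by simp⟩
  · exact ⟨[X⁻¹], by simp⟩
  · refine ⟨[X, X], by norm_num, by simp, ?_⟩
    rw [List.prod_cons, List.prod_singleton, show (2:ℤ) = 1 + 1 from rfl, zpow_add, zpow_one]
  · refine ⟨[X⁻¹, X⁻¹], by norm_num, by simp, ?_⟩
    rw [List.prod_cons, List.prod_singleton, show (-2:ℤ) = -1 + -1 from rfl, zpow_add,
      zpow_neg_one]

lemma word_comm {G : Type*} [Group G] (A B : G) (z : ℤ)
    (hz : z ∈ ({0, 1, -1} : Set ℤ)) :
    ∃ l : List G, l.length ≤ 8 ∧ (∀ x ∈ l, x = A ∨ x = A⁻¹ ∨ x = B ∨ x = B⁻¹) ∧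
      l.prod = (A * (B⁻¹ * A * B) * A⁻¹ * (B⁻¹ * A * B)⁻¹) ^ z := by
  simp only [Set.mem_insert_iff, Set.mem_singleton_iff] at hz
  rcases hz with rfl | rfl | rfl
  · exact ⟨[], by simp⟩
  · refine ⟨[A, B⁻¹, A, B, A⁻¹, B⁻¹, A⁻¹, B], by norm_num, ?_, ?_⟩
    · intro x hx
      simp only [List.mem_cons, List.not_mem_nil, or_false] at hx
      rcases hx with rfl | rfl | rfl | rfl | rfl | rfl | rfl | rfl <;> tauto
    · simp only [List.prod_cons, List.prod_nil, zpow_one]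
      group
  · refine ⟨[B⁻¹, A, B, A, B⁻¹, A⁻¹, B, A⁻¹], by norm_num, ?_, ?_⟩
    · intro x hx
      simp only [List.mem_cons, List.not_mem_nil, or_false] at hx
      rcases hx with rfl | rfl | rfl | rfl | rfl | rfl | rfl | rfl <;> tauto
    · simp only [List.prod_cons, List.prod_nil]
      group


lemma word_W {n : ℕ} (hn : 3 ≤ n) (s t : ℕ → ℤ)
    (hs : ∀ i, 2 ≤ i → i ≤ n - 1 → s i ∈ ({0, 1, -1, 2, -2} : Set ℤ))
    (ht : ∀ i, 2 ≤ i → i ≤ n - 2 → t i ∈ ({0, 1, -1} : Set ℤ))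
    (htop : t (n - 1) = 0) (A B : SL n) :
    ∀ m, m ≤ n - 2 → ∃ l : List (SL n), l.length ≤ 12 * m ∧
      (∀ x ∈ l, x = A ∨ x = A⁻¹ ∨ x = B ∨ x = B⁻¹) ∧
      l.prod = B ^ (-(m:ℤ)) * ((List.range m).map (fun j =>
        (A ^ (-(s (n - 1 - j))) *
          (A * (B⁻¹ * A * B) * A⁻¹ * (B⁻¹ * A * B)⁻¹) ^ (-(t (n - 1 - j)))) * B)).prod := by
  intro m
  induction m with
  | zero => exact fun _ => ⟨[], by simp⟩
  | succ m ih =>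
      intro hm1
      obtain ⟨l, hlen, hmem, hprod⟩ := ih (by omega)
      have hsmem : s (n - 1 - m) ∈ ({0, 1, -1, 2, -2} : Set ℤ) :=
        hs _ (by omega) (by omega)
      have htmem : t (n - 1 - m) ∈ ({0, 1, -1} : Set ℤ) := by
        rcases Nat.eq_zero_or_pos m with h0 | h0
        · subst h0
          rw [Nat.sub_zero, htop]
          simp
        · exact ht _ (by omega) (by omega)
      obtain ⟨la, halen, hamem, haprod⟩ := word_pow2 A (-(s (n - 1 - m))) (neg_mem5 hsmem)
      obtain ⟨lc, hclen, hcmem, hcprod⟩ := word_comm A B (-(t (n - 1 - m))) (neg_mem3 htmem)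
      refine ⟨B⁻¹ :: (l ++ la ++ lc ++ [B]), ?_, ?_, ?_⟩
      · simp only [List.length_cons, List.length_append, List.length_singleton, List.length_nil]
        omega
      · intro x hx
        simp only [List.mem_cons, List.mem_append, List.mem_singleton, List.mem_cons, List.not_mem_nil, or_false] at hx
        rcases hx with rfl | ((hx | hx) | hx) | rfl
        · tauto
        · exact hmem x hx
        · rcases hamem x hx with rfl | rfl <;> tauto
        · exact hcmem x hx
        · tauto
      · rw [List.prod_cons, List.prod_append, List.prod_append, List.prod_append,
          List.prod_singleton, hprod, haprod, hcprod]
        rw [List.range_succ, List.map_append, List.prod_append, List.map_singleton,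
          List.prod_singleton,
          show (-((m+1:ℕ):ℤ)) = -1 + -(m:ℤ) from by push_cast; ring, zpow_add, zpow_neg_one]
        simp only [mul_assoc]

end WP

/-- The word w = B^{−(n−2)} Q_{n−1} B Q_{n−2} B ⋯ Q_2 B, with
Q_i = A^{−s_i} [A, B⁻¹AB]^{−t_i} and t_{n−1} = 0, represents N(s,t); consequently
N(s,t) is a product of at most 12n − 24 elements of {A, A⁻¹, B, B⁻¹}. -/
theorem word_for_N (n : ℕ) (hn : 3 ≤ n) (s t : ℕ → ℤ)
    (hs : ∀ i, 2 ≤ i → i ≤ n - 1 → s i ∈ ({0, 1, -1, 2, -2} : Set ℤ))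
    (ht : ∀ i, 2 ≤ i → i ≤ n - 2 → t i ∈ ({0, 1, -1} : Set ℤ))
    (htop : t (n - 1) = 0)
    (A B N : Matrix.SpecialLinearGroup (Fin n) ℤ)
    (hA : (A : Matrix (Fin n) (Fin n) ℤ) = Amat n)
    (hB : (B : Matrix (Fin n) (Fin n) ℤ) = Bmat n)
    (hN : (N : Matrix (Fin n) (Fin n) ℤ) = Nmat n s t) :
    B ^ (-((n : ℤ) - 2)) *
      ((List.range (n - 2)).map (fun j =>
        (A ^ (-(s (n - 1 - j))) *
          (A * (B⁻¹ * A * B) * A⁻¹ * (B⁻¹ * A * B)⁻¹) ^ (-(t (n - 1 - j)))) * B)).prod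
      = N ∧
    ∃ l : List (Matrix.SpecialLinearGroup (Fin n) ℤ),
      l.length ≤ 12 * n - 24 ∧
      (∀ x ∈ l, x = A ∨ x = A⁻¹ ∨ x = B ∨ x = B⁻¹) ∧
      l.prod = N := by
  have hexp : -((n : ℤ) - 2) = -(((n-2:ℕ)):ℤ) := by omega
  have hmain : B ^ (-((n : ℤ) - 2)) *
      ((List.range (n - 2)).map (fun j =>
        (A ^ (-(s (n - 1 - j))) *
          (A * (B⁻¹ * A * B) * A⁻¹ * (B⁻¹ * A * B)⁻¹) ^ (-(t (n - 1 - j)))) * B)).prod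
      = N := by
    apply Subtype.ext
    rw [hexp, hN, ← WP.MM_last n hn s t]
    exact WP.coe_W hn s t A B hA hB htop (n-2) le_rfl
  refine ⟨hmain, ?_⟩
  obtain ⟨l, hlen, hmem, hprod⟩ := WP.word_W hn s t hs ht htop A B (n-2) le_rfl
  refine ⟨l, by omega, hmem, ?_⟩
  rw [hprod, ← hexp]
  exact hmain
end
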